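/- arXiv:2502.00867 — 6 statements merged into one kernel-verified Lean document; each statement's English description precedes it below -/
import Mathlib

section
/- Let (B, R) be a finite connected set of pieces with concurrence relation R (i.e., the graph G_{B,R} on vertex set B with edges between distinct concurrent pieces is connected), and let β₁, β₂ ∈ B be two concurrent pieces. Then the number of full pyramids over B with maximal piece β₂ equals the sum, over all partitions {B₁, B₂} of B into two disjoint connected parts with β_i ∈ B_i, of the product of the number of full pyramids over B₁ with maximal piece β₁ and the number of full pyramids over B₂ with maximal piece β₂. -/
/-- A set `A` of pieces is connected under the concurrence relation `R`. -/
def ConnSet {B : Type*} (R : B → B → Prop) (A : Set B) : Prop :=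
  A.Nonempty ∧ ∀ x ∈ A, ∀ y ∈ A,
    Relation.ReflTransGen (fun u v => u ∈ A ∧ v ∈ A ∧ u ≠ v ∧ R u v) x y

/-- `le` is (the order relation of) a full heap over the pieces `A ⊆ B` with
concurrence relation `R`: a partial order on `A` in which concurrent pieces are
comparable and covering pairs are concurrent. -/
def IsFullHeapOn {B : Type*} (R : B → B → Prop) (A : Set B) (le : B → B → Prop) : Prop :=
  (∀ x y, le x y → x ∈ A ∧ y ∈ A) ∧
  (∀ x ∈ A, le x x) ∧
  (∀ ⦃x y⦄, le x y → le y x → x = y) ∧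
  (∀ ⦃x y z⦄, le x y → le y z → le x z) ∧
  (∀ x ∈ A, ∀ y ∈ A, R x y → le x y ∨ le y x) ∧
  (∀ x y, le x y → x ≠ y → (∀ z, le x z → le z y → z = x ∨ z = y) → R x y)

/-- `le` is a full pyramid over the pieces `A` with (unique) maximal piece `β`. -/
def IsFullPyramid {B : Type*} (R : B → B → Prop) (A : Set B) (le : B → B → Prop)
    (β : B) : Prop :=
  IsFullHeapOn R A le ∧ β ∈ A ∧ (∀ x ∈ A, le β x → x = β) ∧
  ∀ γ ∈ A, (∀ x ∈ A, le γ x → x = γ) → γ = β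

section Aux
open scoped Classical
variable {B : Type*} [Fintype B] {R : B → B → Prop} {A : Set B} {le : B → B → Prop}

lemma exists_min_rel (le : B → B → Prop)
    (antisym : ∀ ⦃x y⦄, le x y → le y x → x = y)
    (tr : ∀ ⦃x y z⦄, le x y → le y z → le x z) :
    ∀ S : Finset B, S.Nonempty → ∃ m ∈ S, ∀ z ∈ S, le z m → z = m := by
  classical
  intro S
  induction S using Finset.strongInductionOn with
  | _ S ih =>
    intro hS
    obtain ⟨a, ha⟩ := hS
    by_cases hT : ∃ z ∈ S, z ≠ a ∧ le z a
    · set T := S.filter (fun z => z ≠ a ∧ le z a) with hTdef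
      have haT : a ∉ T := by simp [hTdef]
      have hsub : T ⊂ S := by
        refine Finset.ssubset_iff_of_subset (Finset.filter_subset _ _) |>.2 ⟨a, ha, haT⟩
      obtain ⟨z0, hz0, hz0ne, hz0le⟩ := hT
      obtain ⟨m, hmT, hmin⟩ := ih T hsub ⟨z0, by simp [hTdef, hz0, hz0ne, hz0le]⟩
      have hmS : m ∈ S := (Finset.filter_subset _ _) hmT
      have hma : le m a := (Finset.mem_filter.1 hmT).2.2
      refine ⟨m, hmS, fun z hz hzm => ?_⟩
      by_cases hza : z = a
      · subst hza; exact (antisym hma hzm).symm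
      · exact hmin z (Finset.mem_filter.2 ⟨hz, hza, tr hzm hma⟩) hzm
    · push_neg at hT
      exact ⟨a, ha, fun z hz hza => by
        by_contra hne; exact (hT z hz hne) hza⟩

lemma exists_max_rel (le : B → B → Prop)
    (antisym : ∀ ⦃x y⦄, le x y → le y x → x = y)
    (tr : ∀ ⦃x y z⦄, le x y → le y z → le x z) :
    ∀ S : Finset B, S.Nonempty → ∃ m ∈ S, ∀ z ∈ S, le m z → z = m :=
  exists_min_rel (fun x y => le y x) (fun _ _ h h' => antisym h' h)
    (fun _ _ _ h h' => tr h' h)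

/-- In a full heap, a strict relation admits a covering first step. -/
lemma cover_step (h : IsFullHeapOn R A le) {x y : B} (hxy : le x y) (hne : x ≠ y) :
    ∃ z, le x z ∧ le z y ∧ z ≠ x ∧ R x z := by
  classical
  obtain ⟨hdom, hrefl, hanti, htr, hcomp, hcov⟩ := h
  set S : Finset B := Finset.univ.filter (fun z => le x z ∧ le z y ∧ z ≠ x) with hSdef
  have hyS : y ∈ S := by simp [hSdef, hxy, hne, (hrefl y (hdom x y hxy).2), Ne.symm hne]
  obtain ⟨m, hmS, hmin⟩ := exists_min_rel le hanti htr S ⟨y, hyS⟩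
  rw [hSdef, Finset.mem_filter] at hmS
  obtain ⟨-, hxm, hmy, hmx⟩ := hmS
  refine ⟨m, hxm, hmy, hmx, hcov x m hxm (Ne.symm hmx) fun w hxw hwm => ?_⟩
  by_cases hwx : w = x
  · exact Or.inl hwx
  · exact Or.inr (hmin w (by simp [hSdef, hxw, htr hwm hmy, hwx]) hwm)

/-- Any related pair in a full heap is connected by an `R`-path inside `A`. -/
lemma path_of_le (h : IsFullHeapOn R A le) :
    ∀ n : ℕ, ∀ x y : B, (Finset.univ.filter (fun z => le x z ∧ le z y)).card ≤ n →
      le x y → Relation.ReflTransGen (fun u v => u ∈ A ∧ v ∈ A ∧ u ≠ v ∧ R u v) x y := by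
  classical
  intro n
  induction n with
  | zero =>
    intro x y hcard hxy
    by_cases hne : x = y
    · subst hne; exact Relation.ReflTransGen.refl
    · exfalso
      have hx : x ∈ Finset.univ.filter (fun z => le x z ∧ le z y) := by
        simp [h.2.1 x (h.1 x y hxy).1, hxy]
      have := Finset.card_pos.2 ⟨x, hx⟩
      omega
  | succ n ih =>
    intro x y hcard hxy
    by_cases hne : x = y
    · subst hne; exact Relation.ReflTransGen.refl
    · obtain ⟨z, hxz, hzy, hzx, hR⟩ := cover_step h hxy hne
      have hsub : Finset.univ.filter (fun w => le z w ∧ le w y) ⊂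
          Finset.univ.filter (fun w => le x w ∧ le w y) := by
        constructor
        · intro w hw
          rw [Finset.mem_filter] at hw ⊢
          exact ⟨hw.1, h.2.2.2.1 hxz hw.2.1, hw.2.2⟩
        · intro hcon
          have hxmem : x ∈ Finset.univ.filter (fun w => le x w ∧ le w y) := by
            simp [h.2.1 x (h.1 x y hxy).1, hxy]
          have := hcon hxmem
          rw [Finset.mem_filter] at this
          exact hzx (h.2.2.1 this.2.1 hxz)
      have hc2 : (Finset.univ.filter (fun w => le z w ∧ le w y)).card ≤ n := by
        have := Finset.card_lt_card hsub
        omega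
      exact Relation.ReflTransGen.head
        ⟨(h.1 x z hxz).1, (h.1 x z hxz).2, Ne.symm hzx, hR⟩ (ih z y hc2 hzy)


/-- A strict relation crossing a down-set `A` passes through a covering pair. -/
lemma crossing (h : IsFullHeapOn R Set.univ le) (A : Set B)
    (hdown : ∀ u v, le u v → v ∈ A → u ∈ A) :
    ∀ n : ℕ, ∀ x y : B, (Finset.univ.filter (fun z => le x z ∧ le z y)).card ≤ n →
      le x y → x ∈ A → y ∉ A →
      ∃ a b, a ∈ A ∧ b ∉ A ∧ le x a ∧ le b y ∧ R a b := by
  classical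
  intro n
  induction n with
  | zero =>
    intro x y hcard hxy hxA hyA
    exfalso
    have hx : x ∈ Finset.univ.filter (fun z => le x z ∧ le z y) := by
      simp [h.2.1 x (Set.mem_univ x), hxy]
    have := Finset.card_pos.2 ⟨x, hx⟩
    omega
  | succ n ih =>
    intro x y hcard hxy hxA hyA
    have hne : x ≠ y := fun hh => hyA (hh ▸ hxA)
    obtain ⟨z, hxz, hzy, hzx, hR⟩ := cover_step h hxy hne
    by_cases hzA : z ∈ A
    · have hsub : Finset.univ.filter (fun w => le z w ∧ le w y) ⊂
          Finset.univ.filter (fun w => le x w ∧ le w y) := by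
        constructor
        · intro w hw
          rw [Finset.mem_filter] at hw ⊢
          exact ⟨hw.1, h.2.2.2.1 hxz hw.2.1, hw.2.2⟩
        · intro hcon
          have hxmem : x ∈ Finset.univ.filter (fun w => le x w ∧ le w y) := by
            simp [h.2.1 x (Set.mem_univ x), hxy]
          have := hcon hxmem
          rw [Finset.mem_filter] at this
          exact hzx (h.2.2.1 this.2.1 hxz)
      have hc2 : (Finset.univ.filter (fun w => le z w ∧ le w y)).card ≤ n := by
        have := Finset.card_lt_card hsub
        omega
      obtain ⟨a, b, haA, hbA, hza, hby, hab⟩ := ih z y hc2 hzy hzA hyA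
      exact ⟨a, b, haA, hbA, h.2.2.2.1 hxz hza, hby, hab⟩
    · exact ⟨x, z, hxA, hzA, h.2.1 x (Set.mem_univ x), hzy, hR⟩

/-- In a finite full pyramid, the apex is the maximum. -/
lemma pyr_le_top {β : B} (h : IsFullPyramid R A le β) : ∀ x ∈ A, le x β := by
  classical
  intro x hx
  obtain ⟨hh, hβA, hβmax, huniq⟩ := h
  set S : Finset B := Finset.univ.filter (fun z => le x z) with hSdef
  have hxS : x ∈ S := by simp [hSdef, hh.2.1 x hx]
  obtain ⟨m, hmS, hmax⟩ := exists_max_rel le hh.2.2.1 hh.2.2.2.1 S ⟨x, hxS⟩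
  rw [hSdef, Finset.mem_filter] at hmS
  have hmA : m ∈ A := (hh.1 x m hmS.2).2
  have hmβ : m = β := huniq m hmA (fun z hz hmz =>
    (hmax z (by simp [hSdef, hh.2.2.2.1 hmS.2 hmz]) hmz))
  exact hmβ ▸ hmS.2

/-- The piece set of a finite full pyramid is connected. -/
lemma pyramid_conn {β : B} (hsymm : ∀ x y, R x y → R y x)
    (h : IsFullPyramid R A le β) : ConnSet R A := by
  classical
  refine ⟨⟨β, h.2.1⟩, fun x hx y hy => ?_⟩
  have hsym : Symmetric (fun u v => u ∈ A ∧ v ∈ A ∧ u ≠ v ∧ R u v) :=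
    fun u v ⟨h1, h2, h3, h4⟩ => ⟨h2, h1, h3.symm, hsymm u v h4⟩
  have p1 := path_of_le h.1 _ x β le_rfl (pyr_le_top h x hx)
  have p2 := path_of_le h.1 _ y β le_rfl (pyr_le_top h y hy)
  exact p1.trans (by
    letI : Std.Symm (fun u v => u ∈ A ∧ v ∈ A ∧ u ≠ v ∧ R u v) := ⟨fun a b hab => hsym hab⟩
    exact (Relation.ReflTransGen.symmetric (r := fun u v => u ∈ A ∧ v ∈ A ∧ u ≠ v ∧ R u v)).symm _ _ p2)

end Aux

section Decomp
variable {B : Type*} (R : B → B → Prop) (β₁ β₂ : B)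

/-- Restriction of a pyramid to the down-set of `β₁`. -/
def res1 (le : B → B → Prop) : B → B → Prop := fun x y => le x y ∧ le y β₁

/-- Restriction of a pyramid to the complement of the down-set of `β₁`. -/
def res2 (le : B → B → Prop) : B → B → Prop := fun x y => le x y ∧ ¬ le x β₁

/-- Composition of two heaps. -/
def compR (l1 l2 : B → B → Prop) : B → B → Prop :=
  fun x y => l1 x y ∨ l2 x y ∨ ∃ a b, l1 x a ∧ R a b ∧ l2 b y

variable {R β₁ β₂}

lemma res1_pyr {le : B → B → Prop} (hle : IsFullPyramid R Set.univ le β₂) :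
    IsFullPyramid R {x | le x β₁} (res1 β₁ le) β₁ := by
  obtain ⟨⟨hdom, hrefl, hanti, htr, hcomp, hcov⟩, hβA, hβmax, huniq⟩ := hle
  have hre : ∀ x : B, le x x := fun x => hrefl x (Set.mem_univ x)
  refine ⟨⟨?_, ?_, ?_, ?_, ?_, ?_⟩, hre β₁, ?_, ?_⟩
  · exact fun x y ⟨h1, h2⟩ => ⟨htr h1 h2, h2⟩
  · exact fun x hx => ⟨hre x, hx⟩
  · exact fun x y h1 h2 => hanti h1.1 h2.1
  · exact fun x y z h1 h2 => ⟨htr h1.1 h2.1, h2.2⟩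
  · intro x hx y hy hR
    rcases hcomp x (Set.mem_univ x) y (Set.mem_univ y) hR with h | h
    · exact Or.inl ⟨h, hy⟩
    · exact Or.inr ⟨h, hx⟩
  · intro x y hxy hne hcc
    refine hcov x y hxy.1 hne fun z h1 h2 => ?_
    exact hcc z ⟨h1, htr h2 hxy.2⟩ ⟨h2, hxy.2⟩
  · exact fun x hx h => hanti hx h.1
  · exact fun γ hγ hmax => (hmax β₁ (hre β₁) ⟨hγ, hre β₁⟩).symm

lemma res2_pyr {le : B → B → Prop} (hne : β₁ ≠ β₂) [Fintype B]
    (hle : IsFullPyramid R Set.univ le β₂) :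
    IsFullPyramid R {x | ¬ le x β₁} (res2 β₁ le) β₂ := by
  have htop := pyr_le_top hle
  obtain ⟨⟨hdom, hrefl, hanti, htr, hcomp, hcov⟩, hβA, hβmax, huniq⟩ := hle
  have hre : ∀ x : B, le x x := fun x => hrefl x (Set.mem_univ x)
  have hβ₂ : ¬ le β₂ β₁ := fun h => hne (hβmax β₁ (Set.mem_univ β₁) h)
  refine ⟨⟨?_, ?_, ?_, ?_, ?_, ?_⟩, hβ₂, ?_, ?_⟩
  · exact fun x y ⟨h1, h2⟩ => ⟨h2, fun hy => h2 (htr h1 hy)⟩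
  · exact fun x hx => ⟨hre x, hx⟩
  · exact fun x y h1 h2 => hanti h1.1 h2.1
  · exact fun x y z h1 h2 => ⟨htr h1.1 h2.1, h1.2⟩
  · intro x hx y hy hR
    rcases hcomp x (Set.mem_univ x) y (Set.mem_univ y) hR with h | h
    · exact Or.inl ⟨h, hx⟩
    · exact Or.inr ⟨h, hy⟩
  · intro x y hxy hne' hcc
    refine hcov x y hxy.1 hne' fun z h1 h2 => ?_
    exact hcc z ⟨h1, hxy.2⟩ ⟨h2, fun hz => hxy.2 (htr h1 hz)⟩
  · exact fun x hx h => hβmax x (Set.mem_univ x) h.1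
  · exact fun γ hγ hmax => (hmax β₂ hβ₂ ⟨htop γ (Set.mem_univ γ), hγ⟩).symm

lemma comp_pyr {A : Set B} {l1 l2 : B → B → Prop} [Fintype B]
    (hsymm : ∀ x y, R x y → R y x)
    (h1 : IsFullPyramid R A l1 β₁) (h2 : IsFullPyramid R Aᶜ l2 β₂)
    (hconc : R β₁ β₂) : IsFullPyramid R Set.univ (compR R l1 l2) β₂ := by
  have htop1 := pyr_le_top h1
  have htop2 := pyr_le_top h2
  obtain ⟨⟨hdom1, hrefl1, hanti1, htr1, hcomp1, hcov1⟩, hβ1, hmax1, huniq1⟩ := h1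
  obtain ⟨⟨hdom2, hrefl2, hanti2, htr2, hcomp2, hcov2⟩, hβ2, hmax2, huniq2⟩ := h2
  have mem1 : ∀ {x y}, l1 x y → x ∈ A ∧ y ∈ A := fun h => hdom1 _ _ h
  have mem2 : ∀ {x y}, l2 x y → x ∉ A ∧ y ∉ A := fun h => hdom2 _ _ h
  -- transitivity of the composition
  have htr : ∀ ⦃x y z⦄, compR R l1 l2 x y → compR R l1 l2 y z →
      compR R l1 l2 x z := by
    rintro x y z (h | h | ⟨a, b, ha, hab, hb⟩) (h' | h' | ⟨a', b', ha', hab', hb'⟩)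
    · exact Or.inl (htr1 h h')
    · exact absurd (mem1 h).2 (fun hc => (mem2 h').1 hc)
    · exact Or.inr (Or.inr ⟨a', b', htr1 h ha', hab', hb'⟩)
    · exact absurd (mem1 h').1 (fun hc => (mem2 h).2 hc)
    · exact Or.inr (Or.inl (htr2 h h'))
    · exact absurd (mem1 ha').1 (fun hc => (mem2 h).2 hc)
    · exact absurd (mem1 h').1 (fun hc => (mem2 hb).2 hc)
    · exact Or.inr (Or.inr ⟨a, b, ha, hab, htr2 hb h'⟩)
    · exact absurd (mem1 ha').1 (fun hc => (mem2 hb).2 hc)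
  -- top
  have htop : ∀ x, compR R l1 l2 x β₂ := by
    intro x
    by_cases hx : x ∈ A
    · exact Or.inr (Or.inr ⟨β₁, β₂, htop1 x hx, hconc, hrefl2 β₂ hβ2⟩)
    · exact Or.inr (Or.inl (htop2 x hx))
  refine ⟨⟨fun x y _ => ⟨Set.mem_univ x, Set.mem_univ y⟩, ?_, ?_, htr, ?_, ?_⟩,
    Set.mem_univ β₂, ?_, ?_⟩
  · -- refl
    intro x _
    by_cases hx : x ∈ A
    · exact Or.inl (hrefl1 x hx)
    · exact Or.inr (Or.inl (hrefl2 x hx))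
  · -- antisymmetry
    rintro x y (h | h | ⟨a, b, ha, hab, hb⟩) (h' | h' | ⟨a', b', ha', hab', hb'⟩)
    · exact hanti1 h h'
    · exact absurd (mem1 h).1 (fun hc => (mem2 h').2 hc)
    · exact absurd (mem1 h).1 (fun hc => (mem2 hb').2 hc)
    · exact absurd (mem1 h').1 (fun hc => (mem2 h).2 hc)
    · exact hanti2 h h'
    · exact absurd (mem1 ha').1 (fun hc => (mem2 h).2 hc)
    · exact absurd (mem1 h').1 (fun hc => (mem2 hb).2 hc)
    · exact absurd (mem1 ha).1 (fun hc => (mem2 h').2 hc)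
    · exact absurd (mem1 ha).1 (fun hc => (mem2 hb').2 hc)
  · -- comparability
    intro x _ y _ hR
    by_cases hx : x ∈ A <;> by_cases hy : y ∈ A
    · rcases hcomp1 x hx y hy hR with h | h
      · exact Or.inl (Or.inl h)
      · exact Or.inr (Or.inl h)
    · exact Or.inl (Or.inr (Or.inr ⟨x, y, hrefl1 x hx, hR, hrefl2 y hy⟩))
    · exact Or.inr (Or.inr (Or.inr ⟨y, x, hrefl1 y hy, hsymm x y hR, hrefl2 x hx⟩))
    · rcases hcomp2 x hx y hy hR with h | h
      · exact Or.inl (Or.inr (Or.inl h))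
      · exact Or.inr (Or.inr (Or.inl h))
  · -- covering pairs are concurrent
    rintro x y (h | h | ⟨a, b, ha, hab, hb⟩) hne hcc
    · refine hcov1 x y h hne fun z h1 h2 => hcc z (Or.inl h1) (Or.inl h2)
    · refine hcov2 x y h hne fun z h1 h2 =>
        hcc z (Or.inr (Or.inl h1)) (Or.inr (Or.inl h2))
    · have hax : a = x := by
        rcases hcc a (Or.inl ha) (Or.inr (Or.inr ⟨a, b, hrefl1 a (mem1 ha).2, hab, hb⟩))
          with h | h
        · exact h
        · exact absurd (mem1 ha).2 (fun hc => (mem2 hb).2 (h ▸ hc))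
      have hby : b = y := by
        rcases hcc b (Or.inr (Or.inr ⟨a, b, ha, hab, hrefl2 b (mem2 hb).1⟩))
          (Or.inr (Or.inl hb)) with h | h
        · exact absurd (mem1 ha).1 (fun hc => (mem2 hb).1 (h ▸ hc))
        · exact h
      exact hax ▸ hby ▸ hab
  · -- β₂ is maximal
    rintro x _ (h | h | ⟨a, b, ha, hab, hb⟩)
    · exact absurd (mem1 h).1 (fun hc => hβ2 hc)
    · exact hmax2 x (mem2 h).2 h
    · exact absurd (mem1 ha).1 (fun hc => hβ2 hc)
  · -- uniqueness of the maximal element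
    intro γ _ hmax
    exact (hmax β₂ (Set.mem_univ β₂) (htop γ)).symm

end Decomp

section RoundTrip
variable {B : Type*} [Fintype B] {R : B → B → Prop} {β₁ β₂ : B}

/-- Decomposing and recomposing a pyramid gives it back. -/
lemma comp_res {le : B → B → Prop} (hle : IsFullPyramid R Set.univ le β₂) :
    compR R (res1 β₁ le) (res2 β₁ le) = le := by
  classical
  have h := hle.1
  obtain ⟨hdom, hrefl, hanti, htr, hcomp, hcov⟩ := h
  funext x y
  apply propext
  constructor
  · rintro (h | h | ⟨a, b, ⟨hxa, haβ⟩, hab, hby, hbβ⟩)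
    · exact h.1
    · exact h.1
    · have hba : ¬ le b a := fun hc => hbβ (htr hc haβ)
      rcases hcomp a (Set.mem_univ a) b (Set.mem_univ b) hab with h' | h'
      · exact htr (htr hxa h') hby
      · exact absurd h' hba
  · intro hxy
    by_cases hyβ : le y β₁
    · exact Or.inl ⟨hxy, hyβ⟩
    · by_cases hxβ : le x β₁
      · -- crossing case
        have hdown : ∀ u v, le u v → v ∈ {z | le z β₁} → u ∈ {z | le z β₁} :=
          fun u v huv hv => htr huv hv
        obtain ⟨a, b, haA, hbA, hxa, hby, hab⟩ := crossing hle.1 {z | le z β₁} hdown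
          (Finset.univ.filter (fun z => le x z ∧ le z y)).card x y le_rfl hxy hxβ hyβ
        exact Or.inr (Or.inr ⟨a, b, ⟨hxa, haA⟩, hab, hby, hbA⟩)
      · exact Or.inr (Or.inl ⟨hxy, hxβ⟩)

variable {A : Set B} {l1 l2 : B → B → Prop}

/-- The down-set of `β₁` in a composition is the first part. -/
lemma comp_downset (h1 : IsFullPyramid R A l1 β₁) (h2 : IsFullPyramid R Aᶜ l2 β₂) :
    ∀ x, compR R l1 l2 x β₁ ↔ x ∈ A := by
  intro x
  constructor
  · rintro (h | h | ⟨a, b, ha, hab, hb⟩)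
    · exact (h1.1.1 _ _ h).1
    · exact absurd h1.2.1 (h2.1.1 _ _ h).2
    · exact absurd h1.2.1 (h2.1.1 _ _ hb).2
  · exact fun hx => Or.inl (pyr_le_top h1 x hx)

lemma res1_comp (h1 : IsFullPyramid R A l1 β₁) (h2 : IsFullPyramid R Aᶜ l2 β₂) :
    res1 β₁ (compR R l1 l2) = l1 := by
  funext x y
  apply propext
  constructor
  · rintro ⟨hxy, hyβ⟩
    have hyA : y ∈ A := (comp_downset h1 h2 y).1 hyβ
    rcases hxy with h | h | ⟨a, b, ha, hab, hb⟩
    · exact h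
    · exact absurd hyA (h2.1.1 _ _ h).2
    · exact absurd hyA (h2.1.1 _ _ hb).2
  · intro h
    exact ⟨Or.inl h, (comp_downset h1 h2 y).2 (h1.1.1 _ _ h).2⟩

lemma res2_comp (h1 : IsFullPyramid R A l1 β₁) (h2 : IsFullPyramid R Aᶜ l2 β₂) :
    res2 β₁ (compR R l1 l2) = l2 := by
  funext x y
  apply propext
  constructor
  · rintro ⟨hxy, hxβ⟩
    have hxA : x ∉ A := fun hc => hxβ ((comp_downset h1 h2 x).2 hc)
    rcases hxy with h | h | ⟨a, b, ha, hab, hb⟩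
    · exact absurd (h1.1.1 _ _ h).1 hxA
    · exact h
    · exact absurd (h1.1.1 _ _ ha).1 hxA
  · intro h
    exact ⟨Or.inr (Or.inl h), fun hc =>
      (h2.1.1 _ _ h).1 ((comp_downset h1 h2 x).1 hc)⟩

end RoundTrip

open Classical in
private lemma nat_card_sigma' {ι : Type*} [Fintype ι] (f : ι → Type*) [∀ i, Finite (f i)] :
    Nat.card (Σ i, f i) = ∑ i, Nat.card (f i) := by
  classical
  have : ∀ i, Fintype (f i) := fun i => Fintype.ofFinite _
  simp [Nat.card_eq_fintype_card, Fintype.card_sigma]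

open Classical in
/-- For a finite connected set of pieces `B` and concurrent pieces `β₁ ≠ β₂`, the number
of full pyramids over `B` with maximal piece `β₂` equals the sum, over partitions
`{B₁, B₂}` of `B` into connected parts with `βᵢ ∈ Bᵢ`, of the products of the numbers of
full pyramids over `Bᵢ` with maximal piece `βᵢ`. -/
theorem card_pyramids_eq_sum_partitions {B : Type*} [Fintype B]
    (R : B → B → Prop) (hrefl : ∀ x, R x x) (hsymm : ∀ x y, R x y → R y x)
    (hconn : ConnSet R Set.univ) (β₁ β₂ : B) (hne : β₁ ≠ β₂) (hconc : R β₁ β₂) :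
    Nat.card {le : B → B → Prop // IsFullPyramid R Set.univ le β₂} =
      ∑ A ∈ Finset.univ.powerset.filter (fun A : Finset B =>
          β₁ ∈ A ∧ β₂ ∉ A ∧ ConnSet R ↑A ∧ ConnSet R ((↑A : Set B)ᶜ)),
        Nat.card {le : B → B → Prop // IsFullPyramid R ↑A le β₁} *
          Nat.card {le : B → B → Prop // IsFullPyramid R ((↑A : Set B)ᶜ) le β₂} := by
  classical
  set S : Finset (Finset B) := Finset.univ.powerset.filter (fun A : Finset B =>
      β₁ ∈ A ∧ β₂ ∉ A ∧ ConnSet R ↑A ∧ ConnSet R ((↑A : Set B)ᶜ)) with hSdef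
  set P := {le : B → B → Prop // IsFullPyramid R Set.univ le β₂} with hPdef
  have hcoe : ∀ le : B → B → Prop,
      (↑(Finset.univ.filter (fun x => le x β₁)) : Set B) = {x | le x β₁} := by
    intro le; ext x; simp
  have hcoec : ∀ le : B → B → Prop,
      ((↑(Finset.univ.filter (fun x => le x β₁)) : Set B))ᶜ = {x | ¬ le x β₁} := by
    intro le; rw [hcoe]; ext x; simp
  have hmemS : ∀ p : P, Finset.univ.filter (fun x => p.1 x β₁) ∈ S := by
    rintro ⟨le, hle⟩
    rw [hSdef, Finset.mem_filter]
    refine ⟨Finset.mem_powerset.2 (Finset.subset_univ _), ?_, ?_, ?_, ?_⟩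
    · simp [hle.1.2.1 β₁ (Set.mem_univ β₁)]
    · simp only [Finset.mem_filter, Finset.mem_univ, true_and]
      intro h
      exact hne (hle.2.2.1 β₁ (Set.mem_univ β₁) h)
    · rw [hcoe]; exact pyramid_conn hsymm (res1_pyr hle)
    · rw [hcoec]; exact pyramid_conn hsymm (res2_pyr hne hle)
  set f : P → {A : Finset B // A ∈ S} :=
    fun p => ⟨Finset.univ.filter (fun x => p.1 x β₁), hmemS p⟩ with hfdef
  have key : ∀ a : {A : Finset B // A ∈ S},
      Nat.card {p : P // f p = a} =
        Nat.card {le : B → B → Prop // IsFullPyramid R ↑a.1 le β₁} *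
          Nat.card {le : B → B → Prop // IsFullPyramid R ((↑a.1 : Set B)ᶜ) le β₂} := by
    rintro ⟨A, hA⟩
    refine (Nat.card_congr ?_).trans (Nat.card_prod _ _)
    refine Equiv.mk
      (fun pp =>
        (⟨res1 β₁ pp.1.1, by
          have hD : Finset.univ.filter (fun x => pp.1.1 x β₁) = A :=
            congrArg Subtype.val pp.2
          have hsetA : (↑A : Set B) = {x | pp.1.1 x β₁} := by
            have h := hcoe pp.1.1; rw [hD] at h; exact h
          rw [hsetA]; exact res1_pyr pp.1.2⟩,
         ⟨res2 β₁ pp.1.1, by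
          have hD : Finset.univ.filter (fun x => pp.1.1 x β₁) = A :=
            congrArg Subtype.val pp.2
          have hsetA : ((↑A : Set B))ᶜ = {x | ¬ pp.1.1 x β₁} := by
            have h := hcoec pp.1.1; rw [hD] at h; exact h
          rw [hsetA]; exact res2_pyr hne pp.1.2⟩))
      (fun q =>
        ⟨⟨compR R q.1.1 q.2.1, comp_pyr hsymm q.1.2 q.2.2 hconc⟩, by
          apply Subtype.ext
          show Finset.univ.filter (fun x => compR R q.1.1 q.2.1 x β₁) = A
          ext x
          simp only [Finset.mem_filter, Finset.mem_univ, true_and]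
          rw [comp_downset q.1.2 q.2.2 x]
          exact Finset.mem_coe⟩)
      (fun pp => by
        apply Subtype.ext; apply Subtype.ext
        exact comp_res pp.1.2)
      (fun q => by
        refine Prod.ext (Subtype.ext ?_) (Subtype.ext ?_)
        · exact res1_comp q.1.2 q.2.2
        · exact res2_comp q.1.2 q.2.2)
  calc Nat.card P
      = Nat.card (Σ a : {A : Finset B // A ∈ S}, {p : P // f p = a}) :=
        (Nat.card_congr (Equiv.sigmaFiberEquiv f)).symm
    _ = ∑ a : {A : Finset B // A ∈ S}, Nat.card {p : P // f p = a} :=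
        nat_card_sigma' _
    _ = ∑ a : {A : Finset B // A ∈ S},
          (Nat.card {le : B → B → Prop // IsFullPyramid R ↑a.1 le β₁} *
            Nat.card {le : B → B → Prop // IsFullPyramid R ((↑a.1 : Set B)ᶜ) le β₂}) :=
        Finset.sum_congr rfl (fun a _ => key a)
    _ = ∑ A ∈ S,
          Nat.card {le : B → B → Prop // IsFullPyramid R ↑A le β₁} *
            Nat.card {le : B → B → Prop // IsFullPyramid R ((↑A : Set B)ᶜ) le β₂} :=
        Finset.sum_coe_sort S (fun A => Nat.card {le : B → B → Prop // IsFullPyramid R ↑A le β₁} * Nat.card {le : B → B → Prop // IsFullPyramid R ((↑A : Set B)ᶜ) le β₂})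
end

section
/- Let (B, R) be a finite connected set of pieces with concurrence relation R. Then the number of full pyramids over B with maximal piece β is the same for every piece β ∈ B. Consequently, the total number of full pyramids over B equals |B| times the number of full pyramids with any fixed maximal piece. -/
namespace PyrAux

variable {B : Type*}

/-- Oriented edge: a concurrent pair oriented upward by `le`. -/
def Edg (R : B → B → Prop) (le : B → B → Prop) (x y : B) : Prop :=
  x ≠ y ∧ R x y ∧ le x y

/-- Orientation obtained from `le` by reversing all edges inside the up-set of `β₂`. -/
def FlipRel (R : B → B → Prop) (β₂ : B) (le : B → B → Prop) (x y : B) : Prop :=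
  (le β₂ x ∧ le β₂ y ∧ Edg R le y x) ∨ (¬(le β₂ x ∧ le β₂ y) ∧ Edg R le x y)

/-- The flipped order. -/
def Flip (R : B → B → Prop) (β₂ : B) (le : B → B → Prop) : B → B → Prop :=
  Relation.ReflTransGen (FlipRel R β₂ le)

lemma exists_min_aux [Fintype B] {r : B → B → Prop}
    (hanti : ∀ ⦃x y⦄, r x y → r y x → x = y) (htrans : ∀ ⦃x y z⦄, r x y → r y z → r x z) :
    ∀ (S : Set B), S.Nonempty → ∃ z ∈ S, ∀ w ∈ S, r w z → w = z := by
  classical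
  have key : ∀ n (S : Set B), S.ncard ≤ n → S.Nonempty → ∃ z ∈ S, ∀ w ∈ S, r w z → w = z := by
    intro n
    induction n with
    | zero =>
      intro S hcard hne
      rw [Nat.le_zero, Set.ncard_eq_zero S.toFinite] at hcard
      exact absurd (hcard ▸ hne) (by simp)
    | succ n ih =>
      intro S hcard hne
      obtain ⟨z₀, hz₀⟩ := hne
      by_cases h : ∀ w ∈ S, r w z₀ → w = z₀
      · exact ⟨z₀, hz₀, h⟩
      · push_neg at h
        obtain ⟨w₀, hw₀S, hr₀, hne₀⟩ := h
        set S' : Set B := {w | w ∈ S ∧ r w z₀ ∧ w ≠ z₀} with hS'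
        have hsub : S' ⊆ S := fun w hw => hw.1
        have hz₀n : z₀ ∉ S' := fun hw => hw.2.2 rfl
        have hss : S' ⊂ S := ⟨hsub, fun hS => hz₀n (hS hz₀)⟩
        have hlt : S'.ncard < S.ncard := Set.ncard_lt_ncard hss S.toFinite
        obtain ⟨z, hzS', hzmin⟩ := ih S' (by omega) ⟨w₀, hw₀S, hr₀, hne₀⟩
        refine ⟨z, hsub hzS', fun w hwS hrwz => ?_⟩
        have hwz₀ : r w z₀ := htrans hrwz hzS'.2.1
        by_cases hwe : w = z₀
        · subst hwe
          exact absurd (hanti hzS'.2.1 hrwz) hzS'.2.2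
        · exact hzmin w ⟨hwS, hwz₀, hwe⟩ hrwz
  intro S hne
  exact key S.ncard S le_rfl hne

section Main

variable [Fintype B] {R : B → B → Prop} {le : B → B → Prop} {β₁ β₂ : B}

lemma heap_top (hp : IsFullPyramid R Set.univ le β₁) : ∀ x, le x β₁ := by
  obtain ⟨⟨hsub, hre, hanti, htrans, hcomp, hcov⟩, -, hmax, huniq⟩ := hp
  intro x
  obtain ⟨z, hzS, hzmin⟩ := exists_min_aux (r := fun a b => le b a)
    (fun _ _ h h' => hanti h' h) (fun _ _ _ h h' => htrans h' h)
    {y | le x y} ⟨x, hre x trivial⟩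
  have hzmax : ∀ w ∈ (Set.univ : Set B), le z w → w = z := by
    intro w _ hzw
    exact hzmin w (htrans hzS hzw) hzw
  have := huniq z trivial hzmax
  exact this ▸ hzS

lemma rtg_of_le (hh : IsFullHeapOn R Set.univ le) :
    ∀ x y, le x y → Relation.ReflTransGen (Edg R le) x y := by
  classical
  obtain ⟨hsub, hre, hanti, htrans, hcomp, hcov⟩ := hh
  have key : ∀ n (x y : B), ({w | le x w ∧ w ≠ x}).ncard ≤ n → le x y →
      Relation.ReflTransGen (Edg R le) x y := by
    intro n
    induction n with
    | zero =>
      intro x y hcard hxy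
      by_cases hxe : x = y
      · exact hxe ▸ Relation.ReflTransGen.refl
      · rw [Nat.le_zero, Set.ncard_eq_zero (Set.toFinite _)] at hcard
        exact absurd hcard (Set.nonempty_iff_ne_empty.mp ⟨y, hxy, Ne.symm hxe⟩)
    | succ n ih =>
      intro x y hcard hxy
      by_cases hxe : x = y
      · exact hxe ▸ Relation.ReflTransGen.refl
      · obtain ⟨z, hzT, hzmin⟩ := exists_min_aux (r := le) hanti htrans
          {w | le x w ∧ w ≠ x ∧ le w y} ⟨y, hxy, Ne.symm hxe, hre y trivial⟩
        obtain ⟨hxz, hzx, hzy⟩ := hzT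
        have hcover : ∀ v, le x v → le v z → v = x ∨ v = z := by
          intro v h1 h2
          by_cases hvx : v = x
          · exact Or.inl hvx
          · exact Or.inr (hzmin v ⟨h1, hvx, htrans h2 hzy⟩ h2)
        have hR : R x z := hcov x z hxz (Ne.symm hzx) hcover
        have hsubset : {w | le z w ∧ w ≠ z} ⊆ {w | le x w ∧ w ≠ x} := by
          intro w ⟨h1, h2⟩
          refine ⟨htrans hxz h1, fun he => ?_⟩
          subst he
          exact h2 (hanti hxz h1)
        have hzin : z ∈ {w | le x w ∧ w ≠ x} := ⟨hxz, hzx⟩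
        have hznin : z ∉ {w | le z w ∧ w ≠ z} := fun hw => hw.2 rfl
        have hlt : ({w | le z w ∧ w ≠ z}).ncard < ({w | le x w ∧ w ≠ x}).ncard :=
          Set.ncard_lt_ncard ⟨hsubset, fun hS => hznin (hS hzin)⟩ (Set.toFinite _)
        exact Relation.ReflTransGen.head ⟨Ne.symm hzx, hR, hxz⟩ (ih z y (by omega) hzy)
  intro x y hxy
  exact key _ x y le_rfl hxy

lemma le_of_rtg (hh : IsFullHeapOn R Set.univ le) {x y : B}
    (h : Relation.ReflTransGen (Edg R le) x y) : le x y := by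
  induction h with
  | refl => exact hh.2.1 x trivial
  | tail _ hE ih => exact hh.2.2.2.1 ih hE.2.2

/-- Main lemma: flipping a pyramid with top `β₁` at an adjacent `β₂` gives a pyramid
with top `β₂`, and flipping back recovers the original. -/
lemma flip_pyramid (hsymm : ∀ x y, R x y → R y x)
    (hp : IsFullPyramid R Set.univ le β₁) (hne : β₁ ≠ β₂) (hadj : R β₁ β₂) :
    IsFullPyramid R Set.univ (Flip R β₂ le) β₂ ∧ Flip R β₁ (Flip R β₂ le) = le := by
  have htop := heap_top hp
  obtain ⟨hh, -, hmax, huniq⟩ := hp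
  have hrtg := rtg_of_le hh
  have hlertg : ∀ {x y : B}, Relation.ReflTransGen (Edg R le) x y → le x y :=
    fun h => le_of_rtg hh h
  obtain ⟨hsub, hre, hanti, htrans, hcomp, hcov⟩ := hh
  have hrefl' : ∀ x, le x x := fun x => hre x trivial
  set U : B → Prop := fun x => le β₂ x with hU
  have hUup : ∀ {x y}, U x → le x y → U y := fun hx h => htrans hx h
  have hβ₁U : U β₁ := htop β₂
  set O : B → B → Prop := FlipRel R β₂ le with hO
  set le' : B → B → Prop := Flip R β₂ le with hle'
  have hle'rtg : ∀ x y, le' x y ↔ Relation.ReflTransGen O x y := fun _ _ => Iff.rfl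
  -- T1 : U is forward closed
  have T1 : ∀ {x y}, le' x y → U x → U y := by
    intro x y h
    induction h using Relation.ReflTransGen.head_induction_on with
    | refl => exact id
    | head hstep _ ih =>
      intro hUx
      rcases hstep with ⟨_, hUc, _⟩ | ⟨hnb, hE⟩
      · exact ih hUc
      · exact absurd ⟨hUx, hUup hUx hE.2.2⟩ hnb
  -- T2 : inside U, le' reverses le
  have T2 : ∀ {x y}, le' x y → U x → le y x := by
    intro x y h
    induction h using Relation.ReflTransGen.head_induction_on with
    | refl => exact fun _ => hrefl' _
    | head hstep _ ih =>
      intro hUx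
      rcases hstep with ⟨_, hUc, hE⟩ | ⟨hnb, hE⟩
      · exact htrans (ih hUc) hE.2.2
      · exact absurd ⟨hUx, hUup hUx hE.2.2⟩ hnb
  -- Tout : if target is outside U then le' implies le
  have Tout : ∀ {x y}, le' x y → ¬ U y → le x y := by
    intro x y h
    induction h using Relation.ReflTransGen.head_induction_on with
    | refl => exact fun _ => hrefl' _
    | head hstep hrest ih =>
      intro hUy
      rcases hstep with ⟨hUa, hUc, hE⟩ | ⟨hnb, hE⟩
      · exact absurd (T1 hrest hUc) hUy
      · exact htrans hE.2.2 (ih hUy)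
  -- Tin : inside U, reversal of le gives le'
  have Tin : ∀ {x y}, U y → le y x → le' x y := by
    have rev : ∀ {a b}, Relation.ReflTransGen (Edg R le) a b → U a →
        Relation.ReflTransGen O b a := by
      intro a b h
      induction h using Relation.ReflTransGen.head_induction_on with
      | refl => exact fun _ => Relation.ReflTransGen.refl
      | head hstep _ ih =>
        intro hUa
        have hUc := hUup hUa hstep.2.2
        exact Relation.ReflTransGen.tail (ih hUc) (Or.inl ⟨hUc, hUa, hstep⟩)
    intro x y hUy hyx
    exact rev (hrtg y x hyx) hUy
  -- Tout' : outside U, le gives le'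
  have Tout' : ∀ {x y}, le x y → ¬ U y → le' x y := by
    have rev : ∀ {a b}, Relation.ReflTransGen (Edg R le) a b → ¬ U b →
        Relation.ReflTransGen O a b := by
      intro a b h
      induction h with
      | refl => exact fun _ => Relation.ReflTransGen.refl
      | tail hrest hE ih =>
        intro hUb
        have hUc : ¬ U _ := fun hc => hUb (hUup hc hE.2.2)
        exact Relation.ReflTransGen.tail (ih hUc) (Or.inr ⟨fun hb => hUc hb.1, hE⟩)
    intro x y hxy hUy
    exact rev (hrtg x y hxy) hUy
  have hanti' : ∀ ⦃x y⦄, le' x y → le' y x → x = y := by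
    intro x y hxy hyx
    by_cases hUx : U x
    · exact hanti (T2 hyx (T1 hxy hUx)) (T2 hxy hUx)
    · by_cases hUy : U y
      · exact absurd (T1 hyx hUy) hUx
      · exact hanti (Tout hxy hUy) (Tout hyx hUx)
  have hpyr : IsFullPyramid R Set.univ le' β₂ := by
    refine ⟨⟨fun x y _ => ⟨trivial, trivial⟩, fun x _ => Relation.ReflTransGen.refl,
      hanti', fun x y z h1 h2 => Relation.ReflTransGen.trans h1 h2, ?_, ?_⟩,
      trivial, ?_, ?_⟩
    · -- comparability
      intro x _ y _ hR
      by_cases hxy : x = y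
      · exact Or.inl (hxy ▸ Relation.ReflTransGen.refl)
      · rcases hcomp x trivial y trivial hR with h | h
        · by_cases hb : U x ∧ U y
          · exact Or.inr (Relation.ReflTransGen.single
              (Or.inl ⟨hb.2, hb.1, hxy, hR, h⟩))
          · exact Or.inl (Relation.ReflTransGen.single (Or.inr ⟨hb, hxy, hR, h⟩))
        · by_cases hb : U x ∧ U y
          · exact Or.inl (Relation.ReflTransGen.single
              (Or.inl ⟨hb.1, hb.2, Ne.symm hxy, hsymm x y hR, h⟩))
          · exact Or.inr (Relation.ReflTransGen.single
              (Or.inr ⟨fun hb' => hb ⟨hb'.2, hb'.1⟩, Ne.symm hxy, hsymm x y hR, h⟩))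
    · -- covers are concurrent
      intro x y hxy hne' hcover
      rcases Relation.ReflTransGen.cases_head hxy with he | ⟨c, hstep, hrest⟩
      · exact absurd he hne'
      · rcases hcover c (Relation.ReflTransGen.single hstep) hrest with hc | hc
        · subst hc
          rcases hstep with ⟨_, _, hE⟩ | ⟨_, hE⟩ <;> exact absurd rfl hE.1
        · subst hc
          rcases hstep with ⟨_, _, hE⟩ | ⟨_, hE⟩
          · exact hsymm _ _ hE.2.1
          · exact hE.2.1
    · -- β₂ maximal
      intro x _ h
      have hUx := T1 h (hrefl' β₂)
      exact hanti (T2 h (hrefl' β₂)) hUx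
    · -- unique maximal
      intro γ _ hγmax
      by_contra hγne
      by_cases hUγ : U γ
      · rcases Relation.ReflTransGen.cases_tail (hrtg β₂ γ hUγ) with he | ⟨w, hw, hE⟩
        · exact hγne he
        · have hUw : U w := hlertg hw
          have := hγmax w trivial
            (Relation.ReflTransGen.single (Or.inl ⟨hUγ, hUw, hE⟩))
          exact hE.1 this
      · have hγβ₁ : γ ≠ β₁ := fun h => hUγ (h ▸ hβ₁U)
        rcases Relation.ReflTransGen.cases_head (hrtg γ β₁ (htop γ)) with he | ⟨c, hE, _⟩
        · exact hγβ₁ he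
        · have := hγmax c trivial
            (Relation.ReflTransGen.single (Or.inr ⟨fun hb => hUγ hb.1, hE⟩))
          exact hE.1 this.symm
  -- involution
  have hU' : ∀ x, le' β₁ x ↔ U x := by
    intro x
    constructor
    · exact fun h => T1 h hβ₁U
    · exact fun h => Tin h (htop x)
  have hOiff : ∀ x y, FlipRel R β₁ le' x y ↔ Edg R le x y := by
    intro x y
    constructor
    · rintro (⟨hx, hy, hne', hR, hle'⟩ | ⟨hnb, hne', hR, hle'⟩)
      · -- both in U (w.r.t. original), reversed edge of le'
        have hUx : U x := (hU' x).mp hx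
        exact ⟨Ne.symm hne', hsymm _ _ hR, T2 hle' ((hU' y).mp hy)⟩
      · refine ⟨hne', hR, ?_⟩
        by_cases hUy : U y
        · have hUx : ¬ U x := fun hx => hnb ⟨(hU' x).mpr hx, (hU' y).mpr hUy⟩
          rcases hcomp x trivial y trivial hR with h | h
          · exact h
          · exact absurd (hUup hUy h) hUx
        · exact Tout hle' hUy
    · rintro ⟨hne', hR, hle⟩
      by_cases hUx : U x
      · have hUy : U y := hUup hUx hle
        exact Or.inl ⟨(hU' x).mpr hUx, (hU' y).mpr hUy, Ne.symm hne', hsymm _ _ hR,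
          Tin hUx hle⟩
      · refine Or.inr ⟨fun hb => hUx ((hU' x).mp hb.1), hne', hR, ?_⟩
        by_cases hUy : U y
        · exact Relation.ReflTransGen.single (Or.inr ⟨fun hb => hUx hb.1, hne', hR, hle⟩)
        · exact Tout' hle hUy
  refine ⟨hpyr, ?_⟩
  funext x y
  apply propext
  constructor
  · intro h
    induction h with
    | refl => exact hrefl' x
    | tail _ hE ih => exact htrans ih ((hOiff _ _).mp hE).2.2
  · intro h
    exact Relation.ReflTransGen.mono (fun a b hab => (hOiff a b).mpr hab) _ _ (hrtg x y h)

lemma card_eq_of_adj (hsymm : ∀ x y, R x y → R y x) (hne : β₁ ≠ β₂) (hadj : R β₁ β₂) :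
    Nat.card {le : B → B → Prop // IsFullPyramid R Set.univ le β₁} =
      Nat.card {le : B → B → Prop // IsFullPyramid R Set.univ le β₂} := by
  apply Nat.card_congr
  exact {
    toFun := fun p => ⟨Flip R β₂ p.1, (flip_pyramid hsymm p.2 hne hadj).1⟩
    invFun := fun p => ⟨Flip R β₁ p.1, (flip_pyramid hsymm p.2 (Ne.symm hne)
      (hsymm _ _ hadj)).1⟩
    left_inv := fun p => Subtype.ext (flip_pyramid hsymm p.2 hne hadj).2
    right_inv := fun p => Subtype.ext (flip_pyramid hsymm p.2 (Ne.symm hne)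
      (hsymm _ _ hadj)).2 }

end Main

end PyrAux

/-- For a finite connected set of pieces `B`, the number of full pyramids over `B` with a
given maximal piece is the same for every piece; consequently the total number of full
pyramids equals `|B|` times the number with any fixed maximal piece. -/
theorem card_pyramids_independent_of_max {B : Type*} [Fintype B]
    (R : B → B → Prop) (hrefl : ∀ x, R x x) (hsymm : ∀ x y, R x y → R y x)
    (hconn : ConnSet R Set.univ) :
    (∀ β₁ β₂ : B,
        Nat.card {le : B → B → Prop // IsFullPyramid R Set.univ le β₁} =
          Nat.card {le : B → B → Prop // IsFullPyramid R Set.univ le β₂}) ∧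
    (∀ β : B,
        Nat.card {le : B → B → Prop // ∃ γ, IsFullPyramid R Set.univ le γ} =
          Fintype.card B *
            Nat.card {le : B → B → Prop // IsFullPyramid R Set.univ le β}) := by
  classical
  have H1 : ∀ β₁ β₂ : B,
      Nat.card {le : B → B → Prop // IsFullPyramid R Set.univ le β₁} =
        Nat.card {le : B → B → Prop // IsFullPyramid R Set.univ le β₂} := by
    intro β₁ β₂
    have hpath := hconn.2 β₁ trivial β₂ trivial
    induction hpath with
    | refl => rfl
    | tail _ hstep ih =>
      exact ih.trans (PyrAux.card_eq_of_adj hsymm hstep.2.2.1 hstep.2.2.2)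
  refine ⟨H1, fun β => ?_⟩
  have huniqγ : ∀ (le : B → B → Prop) γ γ', IsFullPyramid R Set.univ le γ →
      IsFullPyramid R Set.univ le γ' → γ = γ' := by
    intro le γ γ' h h'
    exact h'.2.2.2 γ trivial h.2.2.1
  -- the map from pyramids to their apex
  set T := {le : B → B → Prop // ∃ γ, IsFullPyramid R Set.univ le γ} with hT
  have hbij : Function.Bijective
      (fun q : Σ γ : B, {le : B → B → Prop // IsFullPyramid R Set.univ le γ} =>
        (⟨q.2.1, ⟨q.1, q.2.2⟩⟩ : T)) := by
    constructor
    · rintro ⟨γ, le, h⟩ ⟨γ', le', h'⟩ heq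
      have hle : le = le' := congrArg Subtype.val heq
      subst hle
      have hg : γ = γ' := huniqγ le γ γ' h h'
      subst hg
      rfl
    · rintro ⟨le, γ, h⟩
      exact ⟨⟨γ, le, h⟩, rfl⟩
  have e : (Σ γ : B, {le : B → B → Prop // IsFullPyramid R Set.univ le γ}) ≃ T :=
    Equiv.ofBijective _ hbij
  rw [Nat.card_congr e.symm]
  have hall : ∀ γ : B, Nat.card {le : B → B → Prop // IsFullPyramid R Set.univ le γ} =
      Nat.card {le : B → B → Prop // IsFullPyramid R Set.univ le β} := fun γ => H1 γ β
  rw [Nat.card_eq_fintype_card, Fintype.card_sigma]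
  have : ∀ γ : B, Fintype.card {le : B → B → Prop // IsFullPyramid R Set.univ le γ} =
      Nat.card {le : B → B → Prop // IsFullPyramid R Set.univ le β} := by
    intro γ
    rw [← Nat.card_eq_fintype_card]
    exact hall γ
  simp only [this, Finset.sum_const, Finset.card_univ, smul_eq_mul]
end

section
/- Let G be a finite simple graph and x ∈ V(G). There is a bijection between acyclic orientations of G with unique sink x and full pyramids over the pieces B = V(G) (with concurrence relation given by adjacency or equality) whose maximal piece is x. The bijection sends a full pyramid P to the orientation O_P which directs each edge {y, z} ∈ E(G) from y to z whenever y ≤_P z. -/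
/-- `d` is an acyclic orientation of the simple graph `G` with unique sink `x`. -/
def IsAcyclicOrientationUniqueSink {V : Type*} (G : SimpleGraph V) (x : V)
    (d : V → V → Prop) : Prop :=
  (∀ y z, d y z → G.Adj y z) ∧
  (∀ y z, G.Adj y z → (d y z ↔ ¬ d z y)) ∧
  (∀ y, ¬ Relation.TransGen d y y) ∧
  (∀ y, ¬ d x y) ∧
  (∀ z, (∀ y, ¬ d z y) → z = x)

private lemma exists_min_aux {V : Type*} (le : V → V → Prop)
    (hanti : ∀ ⦃a b⦄, le a b → le b a → a = b)
    (htrans : ∀ ⦃a b c⦄, le a b → le b c → le a c)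
    (s : Finset V) (hs : s.Nonempty) :
    ∃ m ∈ s, ∀ u ∈ s, le u m → u = m := by
  classical
  induction s using Finset.induction_on with
  | empty => simp at hs
  | insert _ _ ha ih =>
    rename_i a s
    rcases s.eq_empty_or_nonempty with rfl | hne
    · refine ⟨a, Finset.mem_insert_self a _, ?_⟩
      intro u hu _
      simpa using hu
    · obtain ⟨m, hm, hmin⟩ := ih hne
      by_cases ham : le a m
      · refine ⟨a, Finset.mem_insert_self _ _, ?_⟩
        intro u hu hua
        rcases Finset.mem_insert.1 hu with rfl | hu
        · rfl
        · have hum : u = m := hmin u hu (htrans hua ham)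
          subst hum
          exact hanti hua ham
      · refine ⟨m, Finset.mem_insert_of_mem hm, ?_⟩
        intro u hu hum
        rcases Finset.mem_insert.1 hu with rfl | hu
        · exact absurd hum ham
        · exact hmin u hu hum

private lemma rtg_le {V : Type*} {r le : V → V → Prop}
    (hstep : ∀ a b, r a b → le a b) (hrefl : ∀ a, le a a)
    (htrans : ∀ ⦃a b c⦄, le a b → le b c → le a c) {a b : V}
    (h : Relation.ReflTransGen r a b) : le a b := by
  induction h with
  | refl => exact hrefl a
  | tail _ h2 ih => exact htrans ih (hstep _ _ h2)

private lemma heap_cover {V : Type*} [Fintype V] (le : V → V → Prop)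
    (hrefl : ∀ x : V, le x x)
    (hanti : ∀ ⦃a b⦄, le a b → le b a → a = b)
    (htrans : ∀ ⦃a b c⦄, le a b → le b c → le a c) :
    ∀ y z, le y z → y ≠ z →
      ∃ w, le y w ∧ y ≠ w ∧ (∀ v, le y v → le v w → v = y ∨ v = w) ∧ le w z := by
  classical
  intro y z hyz hne
  set S : Finset V := Finset.univ.filter (fun u => le y u ∧ le u z ∧ u ≠ y) with hS
  have hzS : z ∈ S := by
    simp [hS, hyz, hrefl z, Ne.symm hne]
  obtain ⟨m, hmS, hmin⟩ := exists_min_aux le hanti htrans S ⟨z, hzS⟩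
  rw [hS, Finset.mem_filter] at hmS
  obtain ⟨-, hym, hmz, hmy⟩ := hmS
  refine ⟨m, hym, Ne.symm hmy, ?_, hmz⟩
  intro v hyv hvm
  by_cases hvy : v = y
  · exact Or.inl hvy
  · refine Or.inr (hmin v ?_ hvm)
    rw [hS, Finset.mem_filter]
    exact ⟨Finset.mem_univ v, hyv, htrans hvm hmz, hvy⟩

private lemma heap_chain {V : Type*} [Fintype V] (G : SimpleGraph V) (le : V → V → Prop)
    (h : IsFullHeapOn (fun a b => a = b ∨ G.Adj a b) Set.univ le) :
    ∀ y z, le y z → Relation.ReflTransGen (fun u v => G.Adj u v ∧ le u v) y z := by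
  classical
  obtain ⟨-, hrefl, hanti, htrans, -, hcov⟩ := h
  suffices H : ∀ n y z, (Finset.univ.filter fun u => le y u ∧ le u z).card ≤ n →
      le y z → Relation.ReflTransGen (fun u v => G.Adj u v ∧ le u v) y z by
    intro y z hyz
    exact H _ y z le_rfl hyz
  intro n
  induction n with
  | zero =>
    intro y z hcard hyz
    exfalso
    have hy : y ∈ Finset.univ.filter fun u => le y u ∧ le u z := by
      simp [hrefl y (Set.mem_univ y), hyz]
    rw [Finset.card_eq_zero.1 (Nat.le_zero.1 hcard)] at hy
    simp at hy
  | succ n ih =>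
    intro y z hcard hyz
    by_cases hne : y = z
    · subst hne; exact Relation.ReflTransGen.refl
    · obtain ⟨w, hyw, hynw, hcover, hwz⟩ :=
        heap_cover le (fun a => hrefl a (Set.mem_univ a)) hanti htrans y z hyz hne
      have hadj : G.Adj y w := by
        rcases hcov y w hyw hynw hcover with h1 | h1
        · exact absurd h1 hynw
        · exact h1
      refine Relation.ReflTransGen.head ⟨hadj, hyw⟩ (ih w z ?_ hwz)
      have hsub : (Finset.univ.filter fun u => le w u ∧ le u z) ⊆
          Finset.univ.filter fun u => le y u ∧ le u z := by
        intro u hu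
        simp only [Finset.mem_filter, Finset.mem_univ, true_and] at hu ⊢
        exact ⟨htrans hyw hu.1, hu.2⟩
      have hss : (Finset.univ.filter fun u => le w u ∧ le u z) ⊂
          Finset.univ.filter fun u => le y u ∧ le u z := by
        refine (Finset.ssubset_iff_of_subset hsub).2 ⟨y, ?_, ?_⟩
        · simp [hrefl y (Set.mem_univ y), hyz]
        · intro hmem
          rw [Finset.mem_filter] at hmem
          exact hynw (hanti hyw hmem.2.1)
      have := Finset.card_lt_card hss
      omega

/-- The map sending a full pyramid `P` over the pieces `V(G)` (concurrence = adjacency or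
equality) with maximal piece `x` to the orientation `O_P` directing each edge `{y, z}`
from `y` to `z` whenever `y ≤_P z` is a bijection onto the acyclic orientations of `G`
with unique sink `x`. -/
theorem pyramids_biject_acyclic_orientations {V : Type*} [Fintype V]
    (G : SimpleGraph V) (x : V) :
    Set.BijOn (fun le : V → V → Prop => fun y z => G.Adj y z ∧ le y z)
      {le : V → V → Prop |
        IsFullPyramid (fun a b => a = b ∨ G.Adj a b) Set.univ le x}
      {d : V → V → Prop | IsAcyclicOrientationUniqueSink G x d} := by
  classical
  constructor
  · -- MapsTo
    intro le hle
    simp only [Set.mem_setOf_eq] at hle ⊢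
    obtain ⟨hheap, -, hmax, huniq⟩ := hle
    obtain ⟨-, hrefl, hanti, htrans, hcomp, hcov⟩ := hheap
    refine ⟨fun y z h => h.1, ?_, ?_, ?_, ?_⟩
    · intro y z hadj
      constructor
      · rintro ⟨-, h1⟩ ⟨-, h2⟩
        exact hadj.ne (hanti h1 h2)
      · intro hn
        rcases hcomp y (Set.mem_univ y) z (Set.mem_univ z) (Or.inr hadj) with h1 | h1
        · exact ⟨hadj, h1⟩
        · exact absurd ⟨hadj.symm, h1⟩ hn
    · intro y hy
      obtain ⟨c, ⟨hadj, hyc⟩, hcy⟩ := Relation.TransGen.head'_iff.1 hy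
      have : le c y := rtg_le (fun a b h => h.2) (fun a => hrefl a (Set.mem_univ a))
        htrans hcy
      exact hadj.ne (hanti hyc this)
    · rintro y ⟨hadj, hxy⟩
      exact hadj.ne' (hmax y (Set.mem_univ y) hxy)
    · intro z hz
      refine huniq z (Set.mem_univ z) ?_
      intro w _ hzw
      by_contra hne
      obtain ⟨w', hzw', hznw', hcover, -⟩ :=
        heap_cover le (fun a => hrefl a (Set.mem_univ a)) hanti htrans
          z w hzw (fun h => hne h.symm)
      rcases hcov z w' hzw' hznw' hcover with h1 | h1
      · exact hznw' h1
      · exact hz w' ⟨h1, hzw'⟩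
  constructor
  · -- InjOn
    intro le1 h1 le2 h2 heq
    simp only [Set.mem_setOf_eq] at h1 h2
    have heq' : (fun y z => G.Adj y z ∧ le1 y z) = fun y z => G.Adj y z ∧ le2 y z := heq
    funext y z
    have key : ∀ (le le' : V → V → Prop),
        IsFullHeapOn (fun a b => a = b ∨ G.Adj a b) Set.univ le →
        IsFullHeapOn (fun a b => a = b ∨ G.Adj a b) Set.univ le' →
        (fun y z => G.Adj y z ∧ le y z) = (fun y z => G.Adj y z ∧ le' y z) →
        le y z → le' y z := by
      intro le le' hh hh' he hle
      have hc := heap_chain G le hh y z hle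
      rw [he] at hc
      exact rtg_le (fun a b h => h.2) (fun a => hh'.2.1 a (Set.mem_univ a))
        hh'.2.2.2.1 hc
    exact propext ⟨key le1 le2 h1.1 h2.1 heq', key le2 le1 h2.1 h1.1 heq'.symm⟩
  · -- SurjOn
    intro d hd
    simp only [Set.mem_setOf_eq] at hd
    obtain ⟨hadj, hcompl, hacyc, hsink, huniq⟩ := hd
    have himg : (fun y z => G.Adj y z ∧ Relation.ReflTransGen d y z) = d := by
      funext y z
      refine propext ⟨?_, fun h => ⟨hadj y z h, Relation.ReflTransGen.single h⟩⟩
      rintro ⟨ha, hr⟩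
      by_contra hnd
      have hzy : d z y := (hcompl z y ha.symm).2 hnd
      have : Relation.TransGen d y y := Relation.TransGen.tail' hr hzy
      exact hacyc y this
    have htg : ∀ {a b : V}, Relation.ReflTransGen d a b → a ≠ b →
        Relation.TransGen d a b := by
      intro a b h hne
      rcases h.cases_head with rfl | ⟨c, hac, hcb⟩
      · exact absurd rfl hne
      · exact Relation.TransGen.head' hac hcb
    refine ⟨Relation.ReflTransGen d, ?_, himg⟩
    simp only [Set.mem_setOf_eq]
    refine ⟨⟨fun _ _ _ => ⟨Set.mem_univ _, Set.mem_univ _⟩,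
      fun a _ => Relation.ReflTransGen.refl, ?_, fun a b c h1 h2 => h1.trans h2,
      ?_, ?_⟩, Set.mem_univ x, ?_, ?_⟩
    · intro y z h1 h2
      by_contra hne
      exact hacyc y (Relation.TransGen.trans_right h1 (htg h2 (Ne.symm hne)))
    · intro y _ z _ hR
      rcases hR with rfl | ha
      · exact Or.inl Relation.ReflTransGen.refl
      · by_cases hdyz : d y z
        · exact Or.inl (Relation.ReflTransGen.single hdyz)
        · exact Or.inr (Relation.ReflTransGen.single ((hcompl z y ha.symm).2 hdyz))
    · intro y z hle hne hcover
      rcases hle.cases_head with rfl | ⟨c, hyc, hcz⟩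
      · exact absurd rfl hne
      · rcases hcover c (Relation.ReflTransGen.single hyc) hcz with rfl | rfl
        · exact absurd (hadj _ _ hyc) G.irrefl
        · exact Or.inr (hadj _ _ hyc)
    · intro y _ hxy
      rcases hxy.cases_head with rfl | ⟨c, hxc, -⟩
      · rfl
      · exact absurd hxc (hsink c)
    · intro γ _ hγ
      refine huniq γ ?_
      intro y hdy
      have := hγ y (Set.mem_univ y) (Relation.ReflTransGen.single hdy)
      subst this
      exact G.irrefl (hadj _ _ hdy)
end

section
/- Let G be a finite simple connected graph with a linear order ⊴ on E(G), and let e = {v₁, v₂} be the maximal edge with respect to ⊴. Then the map T ↦ (T₁, T₂), where T − e = T₁ ⊔ T₂ with v_i ∈ V(T_i), is a bijection from the set of NBC spanning trees of G (spanning trees containing no broken circuit) to the disjoint union, over all partitions {S₁, S₂} of V(G) into connected parts with v_i ∈ S_i, of (NBC spanning trees of G[S₁]) × (NBC spanning trees of G[S₂]). -/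
attribute [-instance] Sym2.instPartialOrder

/-- `T` contains no broken circuit of the induced subgraph `G[S]`, with respect to the
linear order on `Sym2 V`: for every cycle of `G` lying inside `S`, with edge set `C` and
`⊴`-maximum edge `c`, the broken circuit `C − c` is not a subset of `T`. -/
def BrokenCircuitFree {V : Type*} [LinearOrder (Sym2 V)] (G : SimpleGraph V)
    (S : Set V) (T : Finset (Sym2 V)) : Prop :=
  ∀ (u : V) (w : G.Walk u u), w.IsCycle → (∀ f ∈ w.edges, ∀ v ∈ f, v ∈ S) →
    ∀ c ∈ w.edges.toFinset, (∀ f ∈ w.edges.toFinset, f ≤ c) →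
      ¬ w.edges.toFinset.erase c ⊆ T

/-- `T` is the edge set of an NBC spanning tree of the induced subgraph `G[S]`:
a spanning tree of `G[S]` containing no broken circuit. -/
def IsNBCTreeOn {V : Type*} [LinearOrder (Sym2 V)] (G : SimpleGraph V)
    (S : Set V) (T : Finset (Sym2 V)) : Prop :=
  (↑T ⊆ G.edgeSet) ∧
  (∀ f ∈ T, ∀ v ∈ f, v ∈ S) ∧
  (SimpleGraph.fromEdgeSet (↑T : Set (Sym2 V))).IsAcyclic ∧
  (∀ u ∈ S, ∀ v ∈ S, (SimpleGraph.fromEdgeSet (↑T : Set (Sym2 V))).Reachable u v) ∧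
  BrokenCircuitFree G S T

/-- A subset `S` of vertices induces a connected subgraph of `G`. -/
def ConnOn {V : Type*} (G : SimpleGraph V) (S : Set V) : Prop :=
  S.Nonempty ∧ ∀ x ∈ S, ∀ y ∈ S,
    Relation.ReflTransGen (fun u v => u ∈ S ∧ v ∈ S ∧ G.Adj u v) x y

namespace NBCaux

open SimpleGraph Finset
open scoped Classical

variable {V : Type*}

lemma bridgeTF [LinearOrder (Sym2 V)] (l : List (Sym2 V)) :
    @List.toFinset _ (fun a b => LinearOrder.toDecidableEq a b) l = l.toFinset := by
  rw [Subsingleton.elim (fun a b => LinearOrder.toDecidableEq a b : DecidableEq (Sym2 V))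
    (fun a b => Sym2.instDecidableEq a b)]

lemma bridgeER [LinearOrder (Sym2 V)] (s : Finset (Sym2 V)) (a : Sym2 V) :
    @Finset.erase _ (fun a b => LinearOrder.toDecidableEq a b) s a = s.erase a := by
  rw [Subsingleton.elim (fun a b => LinearOrder.toDecidableEq a b : DecidableEq (Sym2 V))
    (fun a b => Sym2.instDecidableEq a b)]

lemma acyclic_anti {G H : SimpleGraph V} (h : H ≤ G) (hG : G.IsAcyclic) : H.IsAcyclic := by
  intro v c hc
  exact hG (c.transfer G fun f hf => edgeSet_mono h (c.edges_subset_edgeSet hf)) (hc.transfer _)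

lemma reach_of_mem_support {G : SimpleGraph V} {a b v : V} (p : G.Walk a b)
    (hv : v ∈ p.support) : G.Reachable a v := ⟨p.takeUntil v hv⟩

lemma side_of_walk {G : SimpleGraph V} {S : Set V} {x y : V} (p : G.Walk x y)
    (h : ∀ f ∈ p.edges, ∀ a b : V, f = s(a, b) → (a ∈ S ↔ b ∈ S)) :
    ∀ v ∈ p.support, (v ∈ S ↔ x ∈ S) := by
  induction p with
  | nil => intro v hv; rw [SimpleGraph.Walk.support_nil] at hv; simp at hv; subst hv; rfl
  | @cons a m b hadj q ih =>
    intro v hv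
    have h1 : a ∈ S ↔ m ∈ S := h s(a, m) (by simp) a m rfl
    rw [SimpleGraph.Walk.support_cons] at hv
    rcases List.mem_cons.mp hv with rfl | hv
    · rfl
    · exact (ih (fun f hf => h f (by simp [hf])) v hv).trans h1.symm

lemma conn_helper {G' G : SimpleGraph V} {S : Set V} (hle : G' ≤ G)
    (hS : ∀ a b : V, G'.Adj a b → a ∈ S → b ∈ S) :
    ∀ {x y : V} (p : G'.Walk x y), x ∈ S →
      Relation.ReflTransGen (fun u v => u ∈ S ∧ v ∈ S ∧ G.Adj u v) x y := by
  intro x y p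
  induction p with
  | nil => intro _; exact Relation.ReflTransGen.refl
  | @cons a m b hadj q ih =>
    intro ha
    have hm : m ∈ S := hS a m hadj ha
    exact Relation.ReflTransGen.head ⟨ha, hm, hle hadj⟩ (ih hm)

lemma erase_le_graph {G : SimpleGraph V} {T : Finset (Sym2 V)}
    (hsub : ↑T ⊆ G.edgeSet)
    (e : Sym2 V) : fromEdgeSet (↑(T.erase e) : Set (Sym2 V)) ≤ G := by
  intro a b hab
  rw [fromEdgeSet_adj] at hab
  exact G.mem_edgeSet.mp (hsub (mem_coe.mpr (mem_of_mem_erase (mem_coe.mp hab.1))))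

lemma bcf_no_reach [LinearOrder (Sym2 V)] {G : SimpleGraph V} {v₁ v₂ : V}
    {T : Finset (Sym2 V)} (hsub : ↑T ⊆ G.edgeSet)
    (hbc : BrokenCircuitFree G Set.univ T)
    (he : s(v₁, v₂) ∈ G.edgeSet) (hmax : ∀ f ∈ G.edgeSet, f ≤ s(v₁, v₂)) :
    ¬ (SimpleGraph.fromEdgeSet (↑(T.erase s(v₁, v₂)) : Set (Sym2 V))).Reachable v₁ v₂ := by
  intro hr
  set e := s(v₁, v₂) with he_def
  set G' : SimpleGraph V := fromEdgeSet (insert e ↑T) with hG'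
  have hadj : G'.Adj v₁ v₂ := by
    rw [hG', fromEdgeSet_adj]
    exact ⟨Set.mem_insert _ _, (G.mem_edgeSet.mp he).ne⟩
  have hle : fromEdgeSet (↑(T.erase e) : Set (Sym2 V)) ≤ G' \ fromEdgeSet {e} := by
    intro a b hab
    rw [fromEdgeSet_adj] at hab
    obtain ⟨hmem, hne⟩ := hab
    rw [mem_coe, Finset.mem_erase] at hmem
    rw [sdiff_adj, hG', fromEdgeSet_adj, fromEdgeSet_adj]
    refine ⟨⟨Set.mem_insert_of_mem _ (mem_coe.mpr hmem.2), hne⟩, ?_⟩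
    rintro ⟨hfe, -⟩
    exact hmem.1 hfe
  have hr' : (G' \ fromEdgeSet {e}).Reachable v₁ v₂ := hr.mono hle
  obtain ⟨u, p, hp, hep⟩ := (adj_and_reachable_delete_edges_iff_exists_cycle).mp ⟨hadj, hr'⟩
  have hsubE : ∀ f ∈ p.edges, f ∈ G.edgeSet := by
    intro f hf
    have h1 := p.edges_subset_edgeSet hf
    rw [hG', edgeSet_fromEdgeSet] at h1
    rcases h1.1 with h | h
    · rw [h]; exact he
    · exact hsub h
  have hedges : (p.transfer G hsubE).edges = p.edges := SimpleGraph.Walk.edges_transfer p hsubE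
  refine hbc u (p.transfer G hsubE) (hp.transfer _) (by simp) e ?_ ?_ ?_
  · rw [bridgeTF, hedges]
    exact List.mem_toFinset.mpr hep
  · intro f hf
    rw [bridgeTF, hedges] at hf
    exact hmax f (hsubE f (List.mem_toFinset.mp hf))
  · intro f hf
    rw [bridgeER, bridgeTF, hedges] at hf
    obtain ⟨hfne, hfm⟩ := Finset.mem_erase.mp hf
    have h1 := p.edges_subset_edgeSet (List.mem_toFinset.mp hfm)
    rw [hG', edgeSet_fromEdgeSet] at h1
    rcases h1.1 with h | h
    · exact absurd h hfne
    · exact h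

lemma side_all [LinearOrder (Sym2 V)] {G : SimpleGraph V} {T : Finset (Sym2 V)}
    {v₀ w₀ : V}
    (hsub : ↑T ⊆ G.edgeSet)
    (hac : (fromEdgeSet (↑T : Set (Sym2 V))).IsAcyclic)
    (hbc : BrokenCircuitFree G Set.univ T) :
    ConnOn G {u : V | (fromEdgeSet (↑(T.erase s(v₀, w₀)) : Set (Sym2 V))).Reachable v₀ u} ∧
    IsNBCTreeOn G {u : V | (fromEdgeSet (↑(T.erase s(v₀, w₀)) : Set (Sym2 V))).Reachable v₀ u}
      (T.filter fun f => ∀ v ∈ f,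
        (fromEdgeSet (↑(T.erase s(v₀, w₀)) : Set (Sym2 V))).Reachable v₀ v) := by
  set e := s(v₀, w₀) with he_def
  set H : SimpleGraph V := fromEdgeSet (↑(T.erase e) : Set (Sym2 V)) with hH
  set S : Set V := {u : V | H.Reachable v₀ u} with hS
  have hHG : H ≤ G := erase_le_graph hsub e
  have hmemS : ∀ {x : V}, x ∈ S ↔ H.Reachable v₀ x := fun {x} => Iff.rfl
  have hstep : ∀ a b : V, H.Adj a b → a ∈ S → b ∈ S := fun a b hab ha =>
    hmemS.mpr ((hmemS.mp ha).trans hab.reachable)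
  have hsupS : ∀ {x y : V} (p : H.Walk x y), x ∈ S → ∀ v ∈ p.support, v ∈ S := by
    intro x y p hx v hv
    exact hmemS.mpr ((hmemS.mp hx).trans (reach_of_mem_support p hv))
  constructor
  · refine ⟨⟨v₀, hmemS.mpr (Reachable.refl v₀)⟩, fun x hx y hy => ?_⟩
    obtain ⟨p⟩ := (hmemS.mp hx).symm.trans (hmemS.mp hy)
    exact conn_helper hHG hstep p hx
  refine ⟨?_, ?_, ?_, ?_, ?_⟩
  · intro f hf
    exact hsub (mem_coe.mpr (Finset.filter_subset _ _ (mem_coe.mp hf)))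
  · intro f hf v hv
    exact hmemS.mpr ((Finset.mem_filter.mp hf).2 v hv)
  · refine acyclic_anti (fromEdgeSet_mono ?_) hac
    exact_mod_cast Finset.filter_subset _ _
  · intro u hu v hv
    obtain ⟨p⟩ := (hmemS.mp hu).symm.trans (hmemS.mp hv)
    refine ⟨p.transfer _ ?_⟩
    intro f hf
    have hfH := p.edges_subset_edgeSet hf
    rw [hH, edgeSet_fromEdgeSet] at hfH
    rw [edgeSet_fromEdgeSet]
    refine ⟨mem_coe.mpr (Finset.mem_filter.mpr ⟨mem_of_mem_erase (mem_coe.mp hfH.1), ?_⟩),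
      hfH.2⟩
    intro v' hv'
    obtain ⟨b, rfl⟩ := Sym2.mem_iff_exists.mp hv'
    exact hmemS.mp (hsupS p hu v' (p.fst_mem_support_of_mem_edges hf))
  · intro u w hcyc hvert c hc hcmax hsubT
    exact hbc u w hcyc (by simp) c hc hcmax (hsubT.trans (Finset.filter_subset _ _))

end NBCaux

namespace NBCaux
lemma filter_inst {α : Type*} (p : α → Prop) (i j : DecidablePred p) (s : Finset α) :
    @Finset.filter α p i s = @Finset.filter α p j s := by rw [Subsingleton.elim i j]
lemma sym2_rep {α : Type*} (f : Sym2 α) : ∃ a b : α, f = s(a, b) :=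
  @Sym2.ind α (fun z => ∃ a b : α, z = s(a, b)) (fun a b => ⟨a, b, rfl⟩) f
end NBCaux

open NBCaux SimpleGraph

open Classical in
/-- Let `e = {v₁, v₂}` be the `⊴`-maximal edge of a finite connected graph `G`. The map
`T ↦ (S₁, T₁, T₂)`, where `S₁` is the vertex set of the component of `v₁` in `T − e` and
`Tᵢ` is the set of edges of `T` inside `Sᵢ` (`S₂ = S₁ᶜ`), is a bijection from the NBC
spanning trees of `G` onto the disjoint union, over partitions `{S₁, S₂}` of `V(G)` into
connected parts with `vᵢ ∈ Sᵢ`, of (NBC trees of `G[S₁]`) × (NBC trees of `G[S₂]`). -/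
theorem nbc_tree_decomposition {V : Type*} [Fintype V] [LinearOrder (Sym2 V)]
    (G : SimpleGraph V) (hG : G.Connected) (v₁ v₂ : V)
    (he : s(v₁, v₂) ∈ G.edgeSet) (hmax : ∀ f ∈ G.edgeSet, f ≤ s(v₁, v₂)) :
    Set.BijOn
      (fun T : Finset (Sym2 V) =>
        (({u : V | (SimpleGraph.fromEdgeSet
              (↑(T.erase s(v₁, v₂)) : Set (Sym2 V))).Reachable v₁ u} : Set V),
         T.filter (fun f => ∀ v ∈ f, (SimpleGraph.fromEdgeSet
              (↑(T.erase s(v₁, v₂)) : Set (Sym2 V))).Reachable v₁ v),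
         T.filter (fun f => ∀ v ∈ f, ¬ (SimpleGraph.fromEdgeSet
              (↑(T.erase s(v₁, v₂)) : Set (Sym2 V))).Reachable v₁ v)))
      {T : Finset (Sym2 V) | IsNBCTreeOn G Set.univ T}
      {p : Set V × Finset (Sym2 V) × Finset (Sym2 V) |
        v₁ ∈ p.1 ∧ v₂ ∉ p.1 ∧ ConnOn G p.1 ∧ ConnOn G p.1ᶜ ∧
        IsNBCTreeOn G p.1 p.2.1 ∧ IsNBCTreeOn G p.1ᶜ p.2.2} := by
  have hne12 : v₁ ≠ v₂ := (G.mem_edgeSet.mp he).ne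
  -- recovery lemma
  have hkey : ∀ T : Finset (Sym2 V), IsNBCTreeOn G Set.univ T →
      s(v₁, v₂) ∈ T ∧
      insert s(v₁, v₂)
        ((T.filter (fun f => ∀ v ∈ f, (SimpleGraph.fromEdgeSet
              (↑(T.erase s(v₁, v₂)) : Set (Sym2 V))).Reachable v₁ v)) ∪
         (T.filter (fun f => ∀ v ∈ f, ¬ (SimpleGraph.fromEdgeSet
              (↑(T.erase s(v₁, v₂)) : Set (Sym2 V))).Reachable v₁ v))) = T := by
    intro T hT
    obtain ⟨hsub, -, hac, hconn, hbc⟩ := hT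
    have heT : s(v₁, v₂) ∈ T := by
      by_contra h
      have herase : T.erase s(v₁, v₂) = T := Finset.erase_eq_of_notMem h
      have hnr := bcf_no_reach hsub hbc he hmax
      rw [herase] at hnr
      exact hnr (hconn v₁ trivial v₂ trivial)
    refine ⟨heT, ?_⟩
    apply Finset.Subset.antisymm
    · intro f hf
      rcases Finset.mem_insert.mp hf with rfl | hf
      · exact heT
      · rcases Finset.mem_union.mp hf with h | h
        · exact Finset.filter_subset _ _ h
        · exact Finset.filter_subset _ _ h
    · intro f hf
      obtain ⟨a, b, rfl⟩ := sym2_rep f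
      by_cases hfe : s(a, b) = s(v₁, v₂)
      · exact Finset.mem_insert.mpr (Or.inl hfe)
      refine Finset.mem_insert.mpr (Or.inr (Finset.mem_union.mpr ?_))
      have hadjH : (SimpleGraph.fromEdgeSet
          (↑(T.erase s(v₁, v₂)) : Set (Sym2 V))).Adj a b := by
        rw [fromEdgeSet_adj]
        exact ⟨Finset.mem_coe.mpr (Finset.mem_erase.mpr ⟨hfe, hf⟩),
          (G.mem_edgeSet.mp (hsub hf)).ne⟩
      by_cases hra : (SimpleGraph.fromEdgeSet
          (↑(T.erase s(v₁, v₂)) : Set (Sym2 V))).Reachable v₁ a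
      · refine Or.inl (Finset.mem_filter.mpr ⟨hf, fun v hv => ?_⟩)
        rcases Sym2.mem_iff.mp hv with rfl | rfl
        · exact hra
        · exact hra.trans hadjH.reachable
      · refine Or.inr (Finset.mem_filter.mpr ⟨hf, fun v hv hrv => ?_⟩)
        rcases Sym2.mem_iff.mp hv with rfl | rfl
        · exact hra hrv
        · exact hra (hrv.trans hadjH.symm.reachable)
  refine ⟨?_, ?_, ?_⟩
  · -- MapsTo
    intro T hT
    simp only [Set.mem_setOf_eq]
    have hT' := hT
    obtain ⟨hsub, -, hac, hconn, hbc⟩ := hT'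
    have h1 := side_all (v₀ := v₁) (w₀ := v₂) hsub hac hbc
    have h2 := side_all (v₀ := v₂) (w₀ := v₁) hsub hac hbc
    rw [show s(v₂, v₁) = s(v₁, v₂) from Sym2.eq_swap] at h2
    have hnr : ¬ (SimpleGraph.fromEdgeSet
        (↑(T.erase s(v₁, v₂)) : Set (Sym2 V))).Reachable v₁ v₂ :=
      bcf_no_reach hsub hbc he hmax
    have hS2 : ({u : V | (SimpleGraph.fromEdgeSet
        (↑(T.erase s(v₁, v₂)) : Set (Sym2 V))).Reachable v₁ u} : Set V)ᶜ
        = {u : V | (SimpleGraph.fromEdgeSet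
        (↑(T.erase s(v₁, v₂)) : Set (Sym2 V))).Reachable v₂ u} := by
      ext u
      simp only [Set.mem_compl_iff, Set.mem_setOf_eq]
      constructor
      · intro hu
        have hall : ∀ {a b : V} (p : (SimpleGraph.fromEdgeSet (↑T : Set (Sym2 V))).Walk a b),
            ((SimpleGraph.fromEdgeSet (↑(T.erase s(v₁, v₂)) : Set (Sym2 V))).Reachable v₁ a ∨
             (SimpleGraph.fromEdgeSet (↑(T.erase s(v₁, v₂)) : Set (Sym2 V))).Reachable v₂ a) →
            ((SimpleGraph.fromEdgeSet (↑(T.erase s(v₁, v₂)) : Set (Sym2 V))).Reachable v₁ b ∨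
             (SimpleGraph.fromEdgeSet (↑(T.erase s(v₁, v₂)) : Set (Sym2 V))).Reachable v₂ b) := by
          intro a b p
          induction p with
          | nil => exact id
          | @cons a m b hadj q ih =>
            intro ha
            refine ih ?_
            rw [fromEdgeSet_adj] at hadj
            by_cases hcase : s(a, m) = s(v₁, v₂)
            · rcases Sym2.eq_iff.mp hcase with ⟨rfl, rfl⟩ | ⟨rfl, rfl⟩
              · exact Or.inr (Reachable.refl _)
              · exact Or.inl (Reachable.refl _)
            · have hAdjH : (SimpleGraph.fromEdgeSet
                  (↑(T.erase s(v₁, v₂)) : Set (Sym2 V))).Adj a m := by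
                rw [fromEdgeSet_adj]
                exact ⟨Finset.mem_coe.mpr
                  (Finset.mem_erase.mpr ⟨hcase, Finset.mem_coe.mp hadj.1⟩), hadj.2⟩
              rcases ha with h | h
              · exact Or.inl (h.trans hAdjH.reachable)
              · exact Or.inr (h.trans hAdjH.reachable)
        obtain ⟨p⟩ := hconn v₁ trivial u trivial
        rcases hall p (Or.inl (Reachable.refl _)) with h | h
        · exact absurd h hu
        · exact h
      · intro h2u h1u
        exact hnr (h1u.trans h2u.symm)
    have hpt : ∀ u : V, (¬ (SimpleGraph.fromEdgeSet
        (↑(T.erase s(v₁, v₂)) : Set (Sym2 V))).Reachable v₁ u) ↔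
        (SimpleGraph.fromEdgeSet (↑(T.erase s(v₁, v₂)) : Set (Sym2 V))).Reachable v₂ u := by
      intro u
      have := Set.ext_iff.mp hS2 u
      simpa [Set.mem_compl_iff, Set.mem_setOf_eq] using this
    have hfilter2 : (T.filter (fun f => ∀ v ∈ f, ¬ (SimpleGraph.fromEdgeSet
          (↑(T.erase s(v₁, v₂)) : Set (Sym2 V))).Reachable v₁ v))
        = (T.filter (fun f => ∀ v ∈ f, (SimpleGraph.fromEdgeSet
          (↑(T.erase s(v₁, v₂)) : Set (Sym2 V))).Reachable v₂ v)) := by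
      apply Finset.filter_congr
      intro f _
      exact forall₂_congr fun v _ => hpt v
    refine ⟨Reachable.refl v₁, hnr, h1.1, ?_, ?_, ?_⟩
    · show ConnOn G _
      rw [hS2]
      exact h2.1
    · convert h1.2 using 2
    · show IsNBCTreeOn G _ _
      rw [hS2, hfilter2]
      convert h2.2 using 2
  · -- InjOn
    intro T hT T' hT' heq
    have h1 := hkey T hT
    have h2 := hkey T' hT'
    have hF1 := congrArg (fun q : Set V × Finset (Sym2 V) × Finset (Sym2 V) => q.2.1) heq
    have hF2 := congrArg (fun q : Set V × Finset (Sym2 V) × Finset (Sym2 V) => q.2.2) heq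
    simp only at hF1 hF2
    have hmid : insert s(v₁, v₂)
        ((T.filter (fun f => ∀ v ∈ f, (SimpleGraph.fromEdgeSet
              (↑(T.erase s(v₁, v₂)) : Set (Sym2 V))).Reachable v₁ v)) ∪
         (T.filter (fun f => ∀ v ∈ f, ¬ (SimpleGraph.fromEdgeSet
              (↑(T.erase s(v₁, v₂)) : Set (Sym2 V))).Reachable v₁ v)))
        = insert s(v₁, v₂)
        ((T'.filter (fun f => ∀ v ∈ f, (SimpleGraph.fromEdgeSet
              (↑(T'.erase s(v₁, v₂)) : Set (Sym2 V))).Reachable v₁ v)) ∪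
         (T'.filter (fun f => ∀ v ∈ f, ¬ (SimpleGraph.fromEdgeSet
              (↑(T'.erase s(v₁, v₂)) : Set (Sym2 V))).Reachable v₁ v))) := by
      rw [hF1, hF2]
    exact h1.2.symm.trans (hmid.trans h2.2)
  · -- SurjOn
    rintro ⟨S₁, T₁, T₂⟩ hp
    simp only [Set.mem_setOf_eq] at hp
    obtain ⟨hv1, hv2, hc1, hc2, h1, h2⟩ := hp
    obtain ⟨hsub₁, hin₁, hac₁, hcon₁, hbc₁⟩ := h1
    obtain ⟨hsub₂, hin₂, hac₂, hcon₂, hbc₂⟩ := h2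
    have heT1 : s(v₁, v₂) ∉ T₁ := fun h => hv2 (hin₁ _ h v₂ (Sym2.mem_mk_right _ _))
    have heT2 : s(v₁, v₂) ∉ T₂ := fun h =>
      (Set.mem_compl_iff _ _).mp (hin₂ _ h v₁ (Sym2.mem_mk_left _ _)) hv1
    have hT12e : s(v₁, v₂) ∉ T₁ ∪ T₂ := fun h => by
      rcases Finset.mem_union.mp h with h | h
      exacts [heT1 h, heT2 h]
    have hTe : (insert s(v₁, v₂) (T₁ ∪ T₂)).erase s(v₁, v₂) = T₁ ∪ T₂ :=
      Finset.erase_insert hT12e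
    have hsubT : ↑(insert s(v₁, v₂) (T₁ ∪ T₂)) ⊆ G.edgeSet := by
      intro f hf
      rcases Finset.mem_insert.mp (Finset.mem_coe.mp hf) with rfl | h
      · exact he
      · rcases Finset.mem_union.mp h with h | h
        · exact hsub₁ (Finset.mem_coe.mpr h)
        · exact hsub₂ (Finset.mem_coe.mpr h)
    have hedgeside : ∀ f ∈ T₁ ∪ T₂, ∀ a b : V, f = s(a, b) → (a ∈ S₁ ↔ b ∈ S₁) := by
      intro f hf a b hab
      subst hab
      rcases Finset.mem_union.mp hf with h | h
      · exact iff_of_true (hin₁ _ h a (Sym2.mem_mk_left _ _)) (hin₁ _ h b (Sym2.mem_mk_right _ _))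
      · exact iff_of_false ((Set.mem_compl_iff _ _).mp (hin₂ _ h a (Sym2.mem_mk_left _ _)))
          ((Set.mem_compl_iff _ _).mp (hin₂ _ h b (Sym2.mem_mk_right _ _)))
    have hKside : ∀ {x y : V},
        (fromEdgeSet (↑(T₁ ∪ T₂) : Set (Sym2 V))).Reachable x y → (x ∈ S₁ ↔ y ∈ S₁) := by
      rintro x y ⟨p⟩
      refine (side_of_walk p ?_ y p.end_mem_support).symm
      intro f hf a b hab
      have h1 := p.edges_subset_edgeSet hf
      rw [edgeSet_fromEdgeSet] at h1
      exact hedgeside f (Finset.mem_coe.mp h1.1) a b hab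
    have hT1K : fromEdgeSet (↑T₁ : Set (Sym2 V)) ≤ fromEdgeSet (↑(T₁ ∪ T₂) : Set (Sym2 V)) :=
      fromEdgeSet_mono (by exact_mod_cast Finset.subset_union_left)
    have hT2K : fromEdgeSet (↑T₂ : Set (Sym2 V)) ≤ fromEdgeSet (↑(T₁ ∪ T₂) : Set (Sym2 V)) :=
      fromEdgeSet_mono (by exact_mod_cast Finset.subset_union_right)
    have hcomp : {u : V | (fromEdgeSet (↑(T₁ ∪ T₂) : Set (Sym2 V))).Reachable v₁ u} = S₁ := by
      ext u
      simp only [Set.mem_setOf_eq]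
      exact ⟨fun hr => (hKside hr).mp hv1, fun hu => (hcon₁ v₁ hv1 u hu).mono hT1K⟩
    have hKM : fromEdgeSet (↑(T₁ ∪ T₂) : Set (Sym2 V))
        ≤ fromEdgeSet (↑(insert s(v₁, v₂) (T₁ ∪ T₂)) : Set (Sym2 V)) :=
      fromEdgeSet_mono (by exact_mod_cast Finset.subset_insert _ _)
    have hMe : (fromEdgeSet (↑(insert s(v₁, v₂) (T₁ ∪ T₂)) : Set (Sym2 V))).Adj v₁ v₂ := by
      rw [fromEdgeSet_adj]
      exact ⟨Finset.mem_coe.mpr (Finset.mem_insert_self _ _), hne12⟩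
    have hMac : (fromEdgeSet (↑(insert s(v₁, v₂) (T₁ ∪ T₂)) : Set (Sym2 V))).IsAcyclic := by
      intro u c hc
      by_cases hec : s(v₁, v₂) ∈ c.edges
      · have hr2 := ((adj_and_reachable_delete_edges_iff_exists_cycle).mpr ⟨u, c, hc, hec⟩).2
        have hle2 : (fromEdgeSet (↑(insert s(v₁, v₂) (T₁ ∪ T₂)) : Set (Sym2 V)))
            \ fromEdgeSet {s(v₁, v₂)} ≤ fromEdgeSet (↑(T₁ ∪ T₂) : Set (Sym2 V)) := by
          intro a b hab
          rw [sdiff_adj, fromEdgeSet_adj, fromEdgeSet_adj] at hab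
          obtain ⟨⟨hmem, hneq⟩, hnot⟩ := hab
          rw [fromEdgeSet_adj]
          refine ⟨?_, hneq⟩
          rcases Finset.mem_insert.mp (Finset.mem_coe.mp hmem) with h | h
          · exact absurd ⟨Set.mem_singleton_iff.mpr h, hneq⟩ hnot
          · exact Finset.mem_coe.mpr h
        exact hv2 ((hKside (hr2.mono hle2)).mp hv1)
      · have hfK : ∀ f ∈ c.edges, f ∈ (fromEdgeSet (↑(T₁ ∪ T₂) : Set (Sym2 V))).edgeSet := by
          intro f hf
          have h1 := c.edges_subset_edgeSet hf
          rw [edgeSet_fromEdgeSet] at h1 ⊢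
          refine ⟨?_, h1.2⟩
          rcases Finset.mem_insert.mp (Finset.mem_coe.mp h1.1) with h | h
          · exact absurd (h ▸ hf) hec
          · exact Finset.mem_coe.mpr h
        have hsupp := side_of_walk (c.transfer _ hfK) (fun f hf a b hab =>
          hedgeside f (by
            have h' := (c.transfer _ hfK).edges_subset_edgeSet hf
            rw [edgeSet_fromEdgeSet] at h'
            exact Finset.mem_coe.mp h'.1) a b hab)
        by_cases hu : u ∈ S₁
        · have hfT1 : ∀ f ∈ (c.transfer _ hfK).edges,
              f ∈ (fromEdgeSet (↑T₁ : Set (Sym2 V))).edgeSet := by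
            intro f hf
            rw [Walk.edges_transfer] at hf
            have hfTT := hfK f hf
            rw [edgeSet_fromEdgeSet] at hfTT ⊢
            refine ⟨?_, hfTT.2⟩
            obtain ⟨a, b, rfl⟩ := sym2_rep f
            rcases Finset.mem_union.mp (Finset.mem_coe.mp hfTT.1) with h | h
            · exact Finset.mem_coe.mpr h
            · have ha : a ∈ (c.transfer _ hfK).support :=
                (c.transfer _ hfK).fst_mem_support_of_mem_edges
                  (by rw [Walk.edges_transfer]; exact hf)
              exact absurd ((hsupp a ha).mpr hu)
                ((Set.mem_compl_iff _ _).mp (hin₂ _ h a (Sym2.mem_mk_left _ _)))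
          exact hac₁ ((c.transfer _ hfK).transfer _ hfT1) ((hc.transfer _).transfer _)
        · have hfT2 : ∀ f ∈ (c.transfer _ hfK).edges,
              f ∈ (fromEdgeSet (↑T₂ : Set (Sym2 V))).edgeSet := by
            intro f hf
            rw [Walk.edges_transfer] at hf
            have hfTT := hfK f hf
            rw [edgeSet_fromEdgeSet] at hfTT ⊢
            refine ⟨?_, hfTT.2⟩
            obtain ⟨a, b, rfl⟩ := sym2_rep f
            rcases Finset.mem_union.mp (Finset.mem_coe.mp hfTT.1) with h | h
            · have ha : a ∈ (c.transfer _ hfK).support :=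
                (c.transfer _ hfK).fst_mem_support_of_mem_edges
                  (by rw [Walk.edges_transfer]; exact hf)
              exact absurd (hin₁ _ h a (Sym2.mem_mk_left _ _))
                (fun haS => hu ((hsupp a ha).mp haS))
            · exact Finset.mem_coe.mpr h
          exact hac₂ ((c.transfer _ hfK).transfer _ hfT2) ((hc.transfer _).transfer _)
    have hMreach : ∀ u : V,
        (fromEdgeSet (↑(insert s(v₁, v₂) (T₁ ∪ T₂)) : Set (Sym2 V))).Reachable v₁ u := by
      intro u
      by_cases hu : u ∈ S₁
      · exact (hcon₁ v₁ hv1 u hu).mono (hT1K.trans hKM)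
      · exact hMe.reachable.trans ((hcon₂ v₂ hv2 u hu).mono (hT2K.trans hKM))
    have hbcT : BrokenCircuitFree G Set.univ (insert s(v₁, v₂) (T₁ ∪ T₂)) := by
      intro u w hcyc hvert c hc hcmax hsubC
      rw [bridgeER, bridgeTF] at hsubC
      rw [bridgeTF] at hc hcmax
      by_cases hcT : c ∈ insert s(v₁, v₂) (T₁ ∪ T₂)
      · have hfT : ∀ f ∈ w.edges,
            f ∈ (fromEdgeSet (↑(insert s(v₁, v₂) (T₁ ∪ T₂)) : Set (Sym2 V))).edgeSet := by
          intro f hf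
          rw [edgeSet_fromEdgeSet]
          refine ⟨?_, G.not_isDiag_of_mem_edgeSet (w.edges_subset_edgeSet hf)⟩
          by_cases hfc : f = c
          · exact Finset.mem_coe.mpr (hfc ▸ hcT)
          · exact Finset.mem_coe.mpr (hsubC (Finset.mem_erase.mpr ⟨hfc, List.mem_toFinset.mpr hf⟩))
        exact hMac (w.transfer _ hfT) (hcyc.transfer _)
      · have hce : c ≠ s(v₁, v₂) := fun h => hcT (h ▸ Finset.mem_insert_self _ _)
        have heno : s(v₁, v₂) ∉ w.edges := by
          intro hew
          exact hce (le_antisymm (hmax c (w.edges_subset_edgeSet (List.mem_toFinset.mp hc)))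
            (hcmax _ (List.mem_toFinset.mpr hew)))
        have hedgeT12 : ∀ f ∈ w.edges, f ≠ c → f ∈ T₁ ∪ T₂ := by
          intro f hf hfc
          have h' := hsubC (Finset.mem_erase.mpr ⟨hfc, List.mem_toFinset.mpr hf⟩)
          rcases Finset.mem_insert.mp h' with h | h
          · exact absurd (h ▸ hf) heno
          · exact h
        obtain ⟨x, y, rfl⟩ := sym2_rep c
        have hwM' : ∀ f ∈ w.edges,
            f ∈ (fromEdgeSet (insert s(x, y) (↑(T₁ ∪ T₂) : Set (Sym2 V)))).edgeSet := by
          intro f hf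
          rw [edgeSet_fromEdgeSet]
          refine ⟨?_, G.not_isDiag_of_mem_edgeSet (w.edges_subset_edgeSet hf)⟩
          by_cases hfc : f = s(x, y)
          · exact hfc ▸ Set.mem_insert _ _
          · exact Set.mem_insert_of_mem _ (Finset.mem_coe.mpr (hedgeT12 f hf hfc))
        have hcyc' := hcyc.transfer hwM'
        have hxyr := ((adj_and_reachable_delete_edges_iff_exists_cycle).mpr
          ⟨u, w.transfer _ hwM', hcyc',
            by rw [Walk.edges_transfer]; exact List.mem_toFinset.mp hc⟩).2
        have hle3 : fromEdgeSet (insert s(x, y) (↑(T₁ ∪ T₂) : Set (Sym2 V)))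
            \ fromEdgeSet {s(x, y)} ≤ fromEdgeSet (↑(T₁ ∪ T₂) : Set (Sym2 V)) := by
          intro a b hab
          rw [sdiff_adj, fromEdgeSet_adj, fromEdgeSet_adj] at hab
          obtain ⟨⟨hmem, hneq⟩, hnot⟩ := hab
          rw [fromEdgeSet_adj]
          refine ⟨?_, hneq⟩
          rcases Set.mem_insert_iff.mp hmem with h | h
          · exact absurd ⟨Set.mem_singleton_iff.mpr h, hneq⟩ hnot
          · exact h
        have hsidexy : x ∈ S₁ ↔ y ∈ S₁ := hKside (hxyr.mono hle3)
        have hstepw : ∀ f ∈ w.edges, ∀ a b : V, f = s(a, b) → (a ∈ S₁ ↔ b ∈ S₁) := by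
          intro f hf a b hab
          by_cases hfc : f = s(x, y)
          · rw [hfc] at hab
            rcases Sym2.eq_iff.mp hab with ⟨rfl, rfl⟩ | ⟨rfl, rfl⟩
            · exact hsidexy
            · exact hsidexy.symm
          · exact hedgeside f (hedgeT12 f hf hfc) a b hab
        have hsuppw := side_of_walk w hstepw
        have hxsupp : x ∈ w.support := w.fst_mem_support_of_mem_edges (List.mem_toFinset.mp hc)
        have hvert' : ∀ v ∈ w.support, (v ∈ S₁ ↔ x ∈ S₁) := fun v hv =>
          (hsuppw v hv).trans (hsuppw x hxsupp).symm
        by_cases hx1 : x ∈ S₁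
        · refine hbc₁ u w hcyc ?_ s(x, y) ?_ ?_ ?_
          · intro f hf v hv
            obtain ⟨b2, hb2⟩ := Sym2.mem_iff_exists.mp hv
            subst hb2
            exact (hvert' v (w.fst_mem_support_of_mem_edges hf)).mpr hx1
          · rw [bridgeTF]; exact hc
          · rw [bridgeTF]; exact hcmax
          · rw [bridgeER, bridgeTF]
            intro f hf
            obtain ⟨hfne, hfm⟩ := Finset.mem_erase.mp hf
            have hf12 := hedgeT12 f (List.mem_toFinset.mp hfm) hfne
            rcases Finset.mem_union.mp hf12 with h | h
            · exact h
            · obtain ⟨a, b, rfl⟩ := sym2_rep f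
              have ha := (hvert' a (w.fst_mem_support_of_mem_edges (List.mem_toFinset.mp hfm))).mpr hx1
              exact absurd ha ((Set.mem_compl_iff _ _).mp (hin₂ _ h a (Sym2.mem_mk_left _ _)))
        · refine hbc₂ u w hcyc ?_ s(x, y) ?_ ?_ ?_
          · intro f hf v hv
            obtain ⟨b2, hb2⟩ := Sym2.mem_iff_exists.mp hv
            subst hb2
            exact (Set.mem_compl_iff _ _).mpr
              (fun hvS => hx1 ((hvert' v (w.fst_mem_support_of_mem_edges hf)).mp hvS))
          · rw [bridgeTF]; exact hc
          · rw [bridgeTF]; exact hcmax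
          · rw [bridgeER, bridgeTF]
            intro f hf
            obtain ⟨hfne, hfm⟩ := Finset.mem_erase.mp hf
            have hf12 := hedgeT12 f (List.mem_toFinset.mp hfm) hfne
            rcases Finset.mem_union.mp hf12 with h | h
            · obtain ⟨a, b, rfl⟩ := sym2_rep f
              exact absurd (hin₁ _ h a (Sym2.mem_mk_left _ _))
                (fun haS => hx1
                  ((hvert' a (w.fst_mem_support_of_mem_edges (List.mem_toFinset.mp hfm))).mp haS))
            · exact h
    refine ⟨insert s(v₁, v₂) (T₁ ∪ T₂), ⟨hsubT, fun f _ v _ => trivial, hMac,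
      fun u _ v _ => (hMreach u).symm.trans (hMreach v), hbcT⟩, ?_⟩
    dsimp only
    simp only [Prod.mk.injEq]
    refine ⟨?_, ?_, ?_⟩
    · rw [hTe]; exact hcomp
    · rw [hTe]
      ext f
      simp only [Finset.mem_filter]
      constructor
      · rintro ⟨hfT, hall⟩
        rcases Finset.mem_insert.mp hfT with rfl | hf12
        · exact absurd ((Set.ext_iff.mp hcomp v₂).mp (hall v₂ (Sym2.mem_mk_right _ _))) hv2
        · rcases Finset.mem_union.mp hf12 with h | h
          · exact h
          · obtain ⟨a, b, rfl⟩ := sym2_rep f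
            exact absurd ((Set.ext_iff.mp hcomp a).mp (hall a (Sym2.mem_mk_left _ _)))
              ((Set.mem_compl_iff _ _).mp (hin₂ _ h a (Sym2.mem_mk_left _ _)))
      · intro h1f
        refine ⟨Finset.mem_insert_of_mem (Finset.mem_union_left _ h1f), fun v hv => ?_⟩
        exact (Set.ext_iff.mp hcomp v).mpr (hin₁ _ h1f v hv)
    · rw [hTe]
      ext f
      simp only [Finset.mem_filter]
      constructor
      · rintro ⟨hfT, hall⟩
        rcases Finset.mem_insert.mp hfT with rfl | hf12
        · exact absurd (SimpleGraph.Reachable.refl v₁) (hall v₁ (Sym2.mem_mk_left _ _))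
        · rcases Finset.mem_union.mp hf12 with h | h
          · obtain ⟨a, b, rfl⟩ := sym2_rep f
            exact absurd ((Set.ext_iff.mp hcomp a).mpr (hin₁ _ h a (Sym2.mem_mk_left _ _)))
              (hall a (Sym2.mem_mk_left _ _))
          · exact h
      · intro h2f
        refine ⟨Finset.mem_insert_of_mem (Finset.mem_union_right _ h2f), fun v hv hr => ?_⟩
        exact (Set.mem_compl_iff _ _).mp (hin₂ _ h2f v hv) ((Set.ext_iff.mp hcomp v).mp hr)
end

section
/- Let B be a finite set of pieces with concurrence relation R such that the graph G_{B,R} is connected, and let k = |B|. Then the Möbius function of the bond lattice L(B) satisfies μ(0̂, 1̂) = (−1)^{1−k} · (number of full pyramids over B with maximal piece β), for every piece β ∈ B. -/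
/-- `μ` is the Möbius function of the finite poset `α`. -/
def IsMobius {α : Type*} [PartialOrder α] (μ : α → α → ℤ) : Prop :=
  (∀ a : α, μ a a = 1) ∧
  (∀ a b : α, a < b → ∑ᶠ c ∈ {c : α | a ≤ c ∧ c ≤ b}, μ a c = 0) ∧
  (∀ a b : α, ¬ a ≤ b → μ a b = 0)

/-- The bond lattice of the pieces `B` with concurrence relation `R`: partitions of `B`
(as setoids, ordered by refinement) all of whose blocks are connected in `G_{B,R}`. -/
def BondLattice {B : Type*} (R : B → B → Prop) : Type _ :=
  {s : Setoid B // ∀ x : B, ConnSet R {y | s.r x y}}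

instance {B : Type*} (R : B → B → Prop) : PartialOrder (BondLattice R) :=
  Subtype.partialOrder _

set_option linter.unusedSectionVars false
set_option maxHeartbeats 1000000
open Finset

namespace BondProof

noncomputable section
open Classical

variable {B : Type*} [Fintype B]

section HeapLemmas
variable {R : B → B → Prop} {A : Set B} {le : B → B → Prop} {m : B}

lemma exists_minimal_le (hanti : ∀ ⦃x y⦄, le x y → le y x → x = y)
    (htrans : ∀ ⦃x y z⦄, le x y → le y z → le x z)
    (S : Finset B) (hS : S.Nonempty) :
    ∃ v ∈ S, ∀ z ∈ S, le z v → z = v := by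
  classical
  induction S using Finset.strongInduction with
  | _ S ih =>
    obtain ⟨x, hx⟩ := hS
    set S' := S.filter (fun z => le z x ∧ z ≠ x) with hS'
    by_cases h : S'.Nonempty
    · have hss : S' ⊂ S := by
        refine Finset.ssubset_iff_of_subset (Finset.filter_subset _ _) |>.2 ?_
        exact ⟨x, hx, by simp [hS']⟩
      obtain ⟨v, hvS', hvmin⟩ := ih S' hss h
      obtain ⟨hvS, hvx, hvnex⟩ := Finset.mem_filter.1 hvS'
      refine ⟨v, hvS, fun z hz hzv => ?_⟩
      by_cases hzx : z = x
      · subst hzx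
        exact absurd (hanti hvx hzv) hvnex
      · exact hvmin z (Finset.mem_filter.2 ⟨hz, htrans hzv hvx, hzx⟩) hzv
    · refine ⟨x, hx, fun z hz hzx => ?_⟩
      by_contra hne
      exact h ⟨z, Finset.mem_filter.2 ⟨hz, hzx, hne⟩⟩

lemma cover_above (h : IsFullHeapOn R A le) {x b : B} (hxb : le x b) (hne : x ≠ b) :
    ∃ z, le x z ∧ x ≠ z ∧ le z b ∧ R x z ∧ (∀ w, le x w → le w z → w = x ∨ w = z) := by
  classical
  obtain ⟨hdom, hrefl, hanti, htrans, hcomp, hcov⟩ := h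
  set S : Finset B := univ.filter (fun y => le x y ∧ y ≠ x ∧ le y b) with hSdef
  have hSne : S.Nonempty := ⟨b, by simp [hSdef, hxb, Ne.symm hne, hrefl b (hdom x b hxb).2]⟩
  obtain ⟨z, hzS, hzmin⟩ := exists_minimal_le hanti htrans S hSne
  obtain ⟨hxz, hzx, hzb⟩ := by simpa [hSdef] using hzS
  have hint : ∀ w, le x w → le w z → w = x ∨ w = z := by
    intro w hxw hwz
    by_cases hwx : w = x
    · exact Or.inl hwx
    · right
      exact hzmin w (by simp [hSdef, hxw, hwx, htrans hwz hzb]) hwz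
  exact ⟨z, hxz, Ne.symm hzx, hzb, hcov x z hxz (Ne.symm hzx) hint, hint⟩

lemma pyramid_le_top (h : IsFullPyramid R A le m) {x : B} (hx : x ∈ A) : le x m := by
  classical
  obtain ⟨⟨hdom, hrefl, hanti, htrans, hcomp, hcov⟩, hmA, hmax, huniq⟩ := h
  set S : Finset B := univ.filter (fun y => le x y) with hSdef
  have hSne : S.Nonempty := ⟨x, by simp [hSdef, hrefl x hx]⟩
  obtain ⟨v, hvS, hvmax⟩ := exists_minimal_le (le := fun a b => le b a)
    (fun a b hab hba => hanti hba hab) (fun a b c hab hbc => htrans hbc hab) S hSne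
  have hxv : le x v := by simpa [hSdef] using hvS
  have hvm : v = m := by
    refine huniq v (hdom x v hxv).2 (fun z hz hvz => ?_)
    exact hvmax z (by simp [hSdef, htrans hxv hvz]) hvz
  exact hvm ▸ hxv

lemma pyramid_reach (hR : ∀ x y, R x y → R y x) (h : IsFullPyramid R A le m) {x : B}
    (hx : x ∈ A) :
    Relation.ReflTransGen (fun u v => u ∈ A ∧ v ∈ A ∧ u ≠ v ∧ R u v) x m := by
  classical
  obtain ⟨⟨hdom, hrefl, hanti, htrans, hcomp, hcov⟩, hmA, hmax, huniq⟩ := h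
  -- strong induction on the number of elements above x
  have key : ∀ n (x : B), x ∈ A → (univ.filter (fun y => le x y)).card ≤ n →
      Relation.ReflTransGen (fun u v => u ∈ A ∧ v ∈ A ∧ u ≠ v ∧ R u v) x m := by
    intro n
    induction n with
    | zero =>
      intro x hx hcard
      have : x ∈ univ.filter (fun y => le x y) := Finset.mem_filter.2 ⟨Finset.mem_univ x, hrefl x hx⟩
      have := Finset.card_pos.2 ⟨x, this⟩
      omega
    | succ n ih =>
      intro x hx hcard
      by_cases hxm : x = m
      · exact hxm ▸ Relation.ReflTransGen.refl
      · have hxm' : le x m := pyramid_le_top ⟨⟨hdom, hrefl, hanti, htrans, hcomp, hcov⟩, hmA, hmax, huniq⟩ hx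
        obtain ⟨z, hxz, hxnez, hzm, hRxz, _⟩ :=
          cover_above ⟨hdom, hrefl, hanti, htrans, hcomp, hcov⟩ hxm' hxm
        have hzA : z ∈ A := (hdom x z hxz).2
        have hsub : (univ.filter (fun y => le z y)) ⊆ (univ.filter (fun y => le x y)).erase x := by
          intro y hy
          simp only [Finset.mem_filter, Finset.mem_univ, true_and] at hy
          refine Finset.mem_erase.2 ⟨?_, by simp [htrans hxz hy]⟩
          rintro rfl
          exact hxnez (hanti hxz hy)
        have hlt : (univ.filter (fun y => le z y)).card ≤ n := by
          have := Finset.card_le_card hsub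
          have hxmem : x ∈ (univ.filter (fun y => le x y)) := by simp [hrefl x hx]
          have := Finset.card_erase_of_mem hxmem
          omega
        exact Relation.ReflTransGen.head ⟨hx, hzA, hxnez, hRxz⟩ (ih z hzA hlt)
  exact key _ x hx le_rfl

lemma pyramid_connSet (hR : ∀ x y, R x y → R y x) (h : IsFullPyramid R A le m) :
    ConnSet R A := by
  have hsymmStep : Symmetric (fun u v => u ∈ A ∧ v ∈ A ∧ u ≠ v ∧ R u v) := by
    rintro u v ⟨hu, hv, huv, hR'⟩
    exact ⟨hv, hu, huv.symm, hR u v hR'⟩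
  refine ⟨⟨m, h.2.1⟩, fun x hx y hy => ?_⟩
  exact (pyramid_reach hR h hx).trans
    (by
      haveI : Std.Symm (fun u v => u ∈ A ∧ v ∈ A ∧ u ≠ v ∧ R u v) := ⟨fun a b h => hsymmStep h⟩
      exact Std.Symm.symm (r := Relation.ReflTransGen _) _ _ (pyramid_reach hR h hy))

lemma pyramid_exists_minimal_ne (h : IsFullPyramid R A le m) {x : B} (hx : x ∈ A)
    (hxm : x ≠ m) : ∃ v ∈ A, v ≠ m ∧ le v x ∧ ∀ z, le z v → z = v := by
  classical
  obtain ⟨⟨hdom, hrefl, hanti, htrans, hcomp, hcov⟩, hmA, hmax, huniq⟩ := h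
  set S : Finset B := univ.filter (fun y => le y x) with hSdef
  have hSne : S.Nonempty := ⟨x, by simp [hSdef, hrefl x hx]⟩
  obtain ⟨v, hvS, hvmin⟩ := exists_minimal_le hanti htrans S hSne
  have hvx : le v x := by simpa [hSdef] using hvS
  have hvA : v ∈ A := (hdom v x hvx).1
  have hvm : v ≠ m := by
    rintro rfl
    exact hxm (hmax x hx hvx)
  refine ⟨v, hvA, hvm, hvx, fun z hzv => ?_⟩
  exact hvmin z (by simp [hSdef, htrans hzv hvx]) hzv


/-- the one-point pyramid -/
lemma pyramid_singleton (x : B) :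
    IsFullPyramid R {x} (fun a b => a = x ∧ b = x) x := by
  refine ⟨⟨?_, ?_, ?_, ?_, ?_, ?_⟩, rfl, ?_, ?_⟩
  · rintro a b ⟨rfl, rfl⟩; exact ⟨rfl, rfl⟩
  · rintro a rfl; exact ⟨rfl, rfl⟩
  · rintro a b ⟨rfl, rfl⟩ _; rfl
  · rintro a b c ⟨rfl, rfl⟩ ⟨_, rfl⟩; exact ⟨rfl, rfl⟩
  · rintro a rfl b rfl _; exact Or.inl ⟨rfl, rfl⟩
  · rintro a b ⟨rfl, rfl⟩ hne; exact absurd rfl hne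
  · rintro a rfl _; rfl
  · rintro γ hγ _; exact hγ

lemma pyramid_singleton_unique {x : B} {le : B → B → Prop}
    (h : IsFullPyramid R {x} le x) : le = fun a b => a = x ∧ b = x := by
  funext a b
  refine propext ⟨fun hab => h.1.1 a b hab, ?_⟩
  rintro ⟨rfl, rfl⟩
  exact h.1.2.1 _ rfl


end HeapLemmas

def restrictRel {B : Type*} (le : B → B → Prop) (v : B) : B → B → Prop :=
  fun a b => le a b ∧ a ≠ v ∧ b ≠ v

def insertBot {B : Type*} (R : B → B → Prop) (x : B) (le : B → B → Prop) : B → B → Prop :=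
  fun a b => le a b ∨ (a = x ∧ (b = x ∨ ∃ z, R x z ∧ le z b))

def Indep {B : Type*} (R : B → B → Prop) (T : Finset B) : Prop :=
  ∀ x ∈ T, ∀ y ∈ T, x ≠ y → ¬R x y

section SurgeryLemmas
variable {R : B → B → Prop} {A : Set B} {le : B → B → Prop} {m : B}

lemma restrict_pyramid (h : IsFullPyramid R A le m) {v : B} (hv : v ∈ A) (hvm : v ≠ m)
    (hmin : ∀ z, le z v → z = v) :
    IsFullPyramid R (A \ {v}) (restrictRel le v) m := by
  obtain ⟨⟨hdom, hrefl, hanti, htrans, hcomp, hcov⟩, hmA, hmax, huniq⟩ := h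
  refine ⟨⟨?_, ?_, ?_, ?_, ?_, ?_⟩, ⟨hmA, hvm.symm⟩, ?_, ?_⟩
  · rintro a b ⟨hab, ha, hb⟩
    exact ⟨⟨(hdom a b hab).1, ha⟩, ⟨(hdom a b hab).2, hb⟩⟩
  · rintro a ⟨ha, hav⟩; exact ⟨hrefl a ha, hav, hav⟩
  · rintro a b ⟨hab, _, _⟩ ⟨hba, _, _⟩; exact hanti hab hba
  · rintro a b c ⟨hab, ha, _⟩ ⟨hbc, _, hc⟩; exact ⟨htrans hab hbc, ha, hc⟩
  · rintro a ⟨ha, hav⟩ b ⟨hb, hbv⟩ hR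
    rcases hcomp a ha b hb hR with h' | h'
    · exact Or.inl ⟨h', hav, hbv⟩
    · exact Or.inr ⟨h', hbv, hav⟩
  · rintro a b ⟨hab, hav, hbv⟩ hne hint
    refine hcov a b hab hne (fun z haz hzb => ?_)
    by_cases hzv : z = v
    · subst hzv
      exact absurd (hmin a haz) hav
    · exact hint z ⟨haz, hav, hzv⟩ ⟨hzb, hzv, hbv⟩
  · rintro a ⟨ha, hav⟩ ⟨hma, _, _⟩
    exact hmax a ha hma
  · rintro γ ⟨hγ, hγv⟩ hγmax
    refine huniq γ hγ (fun z hz hγz => ?_)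
    by_cases hzv : z = v
    · subst hzv
      exact absurd (hmin γ hγz) hγv
    · exact hγmax z ⟨hz, hzv⟩ ⟨hγz, hγv, hzv⟩


lemma insertBot_pyramid (hsymm : ∀ x y, R x y → R y x)
    (h : IsFullPyramid R A le m) {x : B} (hx : x ∉ A)
    (hnb : ∃ z ∈ A, R x z) :
    IsFullPyramid R (insert x A) (insertBot R x le) m := by
  obtain ⟨⟨hdom, hrefl, hanti, htrans, hcomp, hcov⟩, hmA, hmax, huniq⟩ := h
  have le_nx : ∀ {a b : B}, le a b → a ≠ x ∧ b ≠ x := by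
    intro a b hab
    exact ⟨fun h' => hx (h' ▸ (hdom a b hab).1), fun h' => hx (h' ▸ (hdom a b hab).2)⟩
  have ib_ne : ∀ {a b : B}, a ≠ x → (insertBot R x le a b ↔ le a b) := by
    intro a b ha
    constructor
    · rintro (hab | ⟨rfl, _⟩)
      · exact hab
      · exact absurd rfl ha
    · exact Or.inl
  have ib_tox : ∀ {a : B}, insertBot R x le a x → a = x := by
    rintro a (hab | ⟨rfl, _⟩)
    · exact absurd rfl (le_nx hab).2
    · rfl
  have hxm : x ≠ m := fun h => hx (h ▸ hmA)
  refine ⟨⟨?_, ?_, ?_, ?_, ?_, ?_⟩, Set.mem_insert_of_mem _ hmA, ?_, ?_⟩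
  · rintro a b (hab | ⟨rfl, rfl | ⟨z, hz, hzb⟩⟩)
    · exact ⟨Set.mem_insert_of_mem _ (hdom a b hab).1, Set.mem_insert_of_mem _ (hdom a b hab).2⟩
    · exact ⟨Set.mem_insert _ _, Set.mem_insert _ _⟩
    · exact ⟨Set.mem_insert _ _, Set.mem_insert_of_mem _ (hdom z b hzb).2⟩
  · rintro a (rfl | ha)
    · exact Or.inr ⟨rfl, Or.inl rfl⟩
    · exact Or.inl (hrefl a ha)
  · intro a b hab hba
    by_cases hax : a = x
    · exact hax.trans (ib_tox (hax ▸ hba)).symm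
    · by_cases hbx : b = x
      · exact (ib_tox (hbx ▸ hab)).trans hbx.symm
      · exact hanti ((ib_ne hax).1 hab) ((ib_ne hbx).1 hba)
  · intro a b c hab hbc
    by_cases hax : a = x
    · subst hax
      by_cases hbx : b = a
      · exact hbx ▸ hbc
      · rcases hab with hab | ⟨_, h' | ⟨z, hz, hzb⟩⟩
        · exact absurd rfl (le_nx hab).1
        · exact absurd h' hbx
        · have hbc' : le b c := (ib_ne hbx).1 hbc
          exact Or.inr ⟨rfl, Or.inr ⟨z, hz, htrans hzb hbc'⟩⟩
    · have hab' : le a b := (ib_ne hax).1 hab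
      have hbc' : le b c := (ib_ne (le_nx hab').2).1 hbc
      exact Or.inl (htrans hab' hbc')
  · rintro a (rfl | ha) b (rfl | hb) hR
    · exact Or.inl (Or.inr ⟨rfl, Or.inl rfl⟩)
    · exact Or.inl (Or.inr ⟨rfl, Or.inr ⟨b, hR, hrefl b hb⟩⟩)
    · exact Or.inr (Or.inr ⟨rfl, Or.inr ⟨a, hsymm a b hR, hrefl a ha⟩⟩)
    · rcases hcomp a ha b hb hR with h' | h'
      · exact Or.inl (Or.inl h')
      · exact Or.inr (Or.inl h')
  · intro a b hab hne hint
    by_cases hax : a = x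
    · subst hax
      rcases hab with hab | ⟨_, h' | ⟨z, hz, hzb⟩⟩
      · exact absurd rfl (le_nx hab).1
      · exact absurd h'.symm hne
      · by_cases hzb' : z = b
        · exact hzb' ▸ hz
        · have h1 : insertBot R a le a z := Or.inr ⟨rfl, Or.inr ⟨z, hz, hrefl z (hdom z b hzb).1⟩⟩
          have h2 : insertBot R a le z b := Or.inl hzb
          rcases hint z h1 h2 with h' | h'
          · exact absurd h' (le_nx hzb).1
          · exact absurd h' hzb'
    · have hab' : le a b := (ib_ne hax).1 hab
      refine hcov a b hab' hne (fun z haz hzb => ?_)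
      exact hint z (Or.inl haz) (Or.inl hzb)
  · rintro a ha hma
    by_cases hax : a = x
    · subst hax
      exact absurd (ib_tox hma) (Ne.symm hxm)
    · exact hmax a (ha.resolve_left hax) ((ib_ne (Ne.symm hxm)).1 hma)
  · rintro γ hγ hγmax
    by_cases hγx : γ = x
    · subst hγx
      obtain ⟨z, hzA, hRz⟩ := hnb
      have hz : insertBot R γ le γ z := Or.inr ⟨rfl, Or.inr ⟨z, hRz, hrefl z hzA⟩⟩
      have : z = γ := hγmax z (Set.mem_insert_of_mem _ hzA) hz
      exact absurd this (fun h => hx (h ▸ hzA))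
    · refine huniq γ (hγ.resolve_left hγx) (fun z hz hγz => ?_)
      exact hγmax z (Set.mem_insert_of_mem _ hz) (Or.inl hγz)


lemma restrict_insertBot (h : IsFullHeapOn R A le) {x : B} (hx : x ∉ A) :
    restrictRel (insertBot R x le) x = le := by
  funext a b
  apply propext
  constructor
  · rintro ⟨hab | ⟨rfl, h'⟩, hax, hbx⟩
    · exact hab
    · exact absurd rfl hax
  · intro hab
    exact ⟨Or.inl hab, fun h' => hx (h' ▸ (h.1 a b hab).1),
      fun h' => hx (h' ▸ (h.1 a b hab).2)⟩


lemma insertBot_restrict (h : IsFullPyramid R A le m) {v : B} (hv : v ∈ A) (hvm : v ≠ m)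
    (hmin : ∀ z, le z v → z = v) :
    insertBot R v (restrictRel le v) = le := by
  obtain ⟨⟨hdom, hrefl, hanti, htrans, hcomp, hcov⟩, hmA, hmax, huniq⟩ := h
  funext a b
  apply propext
  constructor
  · rintro (⟨hab, _, _⟩ | ⟨hav, hbv | ⟨z, hz, hzb, hza, hbv⟩⟩)
    · exact hab
    · rw [hav, hbv]; exact hrefl v hv
    · rw [hav]
      rcases hcomp v hv z (hdom z b hzb).1 hz with h' | h'
      · exact htrans h' hzb
      · exact absurd (hmin z h') hza
  · intro hab
    by_cases hav : a = v
    · by_cases hbv : b = v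
      · exact Or.inr ⟨hav, Or.inl hbv⟩
      · obtain ⟨z, haz, hanez, hzb, hRaz, _⟩ :=
          cover_above ⟨hdom, hrefl, hanti, htrans, hcomp, hcov⟩ hab
            (fun h' => hbv (h' ▸ hav))
        have hzv : z ≠ v := fun h' => hanez (hav.trans h'.symm)
        exact Or.inr ⟨hav, Or.inr ⟨z, hav ▸ hRaz, hzb, hzv, hbv⟩⟩
    · have hbv : b ≠ v := by
        rintro rfl
        exact hav (hmin a hab)
      exact Or.inl ⟨hab, hav, hbv⟩


end SurgeryLemmas

/-! ### priority functions and minima -/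

noncomputable def minOf (f : B → ℕ) (C : Finset B) (h : C.Nonempty) : B :=
  (Finset.exists_min_image C f h).choose

lemma minOf_mem (f : B → ℕ) (C : Finset B) (h : C.Nonempty) : minOf f C h ∈ C :=
  (Finset.exists_min_image C f h).choose_spec.1

lemma minOf_min (f : B → ℕ) (C : Finset B) (h : C.Nonempty) :
    ∀ y ∈ C, f (minOf f C h) ≤ f y :=
  (Finset.exists_min_image C f h).choose_spec.2

lemma minOf_unique {f : B → ℕ} (hf : Function.Injective f) {C : Finset B} (h : C.Nonempty)
    {x : B} (hx : x ∈ C) (hmin : ∀ y ∈ C, f x ≤ f y) : minOf f C h = x :=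
  hf (le_antisymm (minOf_min f C h x hx) (hmin _ (minOf_mem f C h)))

lemma minOf_congr (f : B → ℕ) {C C' : Finset B} (h : C.Nonempty) (e : C = C') :
    minOf f C h = minOf f C' (e ▸ h) := by subst e; rfl

/-! ### pyramid counts -/

noncomputable instance : Fintype (B → B → Prop) := Fintype.ofFinite _

noncomputable def P (R : B → B → Prop) (C : Finset B) (c : B) : ℕ :=
  Nat.card {le : B → B → Prop // IsFullPyramid R (↑C) le c}

section PLemmas
variable {R : B → B → Prop}

lemma P_eq_card_filter (R : B → B → Prop) (C : Finset B) (c : B) :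
    P R C c = (univ.filter (fun le : B → B → Prop => IsFullPyramid R (↑C) le c)).card := by
  rw [P, Nat.card_eq_fintype_card]
  convert Fintype.card_subtype _

lemma P_singleton (R : B → B → Prop) (x : B) : P R {x} x = 1 := by
  rw [P]
  have e : ((({x} : Finset B) : Set B)) = ({x} : Set B) := by simp
  rw [e]
  haveI : Unique {le : B → B → Prop // IsFullPyramid R ({x} : Set B) le x} :=
    { default := ⟨fun a b => a = x ∧ b = x, pyramid_singleton x⟩
      uniq := fun y => Subtype.ext (pyramid_singleton_unique y.2) }
  exact Nat.card_unique

lemma P_eq_zero_of_not_conn (hsymm : ∀ x y, R x y → R y x) {C : Finset B} {c : B}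
    (h : ¬ ConnSet R (↑C)) : P R C c = 0 := by
  rw [P]
  have : IsEmpty {le : B → B → Prop // IsFullPyramid R (↑C) le c} := by
    refine ⟨fun le => h (pyramid_connSet hsymm le.2)⟩
  exact Nat.card_of_isEmpty

end PLemmas

section CandSection
variable {R : B → B → Prop}

def Cond (R : B → B → Prop) (A : Finset B) (m : B) (T : Finset B) (le : B → B → Prop) : Prop :=
  T ⊆ A.erase m ∧ Indep R T ∧ IsFullPyramid R (↑(A \ T)) le m

def cand (R : B → B → Prop) (A : Finset B) (m : B) (T : Finset B) (le : B → B → Prop) :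
    Finset B :=
  (T.filter (fun t => ∃ z ∈ A \ T, R t z)) ∪
  ((A \ T).filter (fun v => v ≠ m ∧ (∀ z, le z v → z = v) ∧ ∀ t ∈ T, ¬R v t))

section CandLemmas

variable {A : Finset B} {m : B} {T : Finset B} {le : B → B → Prop}

lemma sdiff_erase_eq (h : Cond R A m T le) {p : B} (hp : p ∈ T) :
    A \ T.erase p = insert p (A \ T) := by
  have hpA : p ∈ A := Finset.mem_of_mem_erase (h.1 hp)
  ext x
  simp only [Finset.mem_sdiff, Finset.mem_erase, Finset.mem_insert]
  by_cases hxp : x = p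
  · subst hxp
    simp [hpA]
  · simp [hxp]

lemma cand_mem_T_branch {p : B} (hc : p ∈ cand R A m T le) (hp : p ∈ T) :
    ∃ z ∈ A \ T, R p z := by
  rcases Finset.mem_union.1 hc with h' | h'
  · exact (Finset.mem_filter.1 h').2
  · exact absurd ((Finset.mem_sdiff.1 (Finset.mem_filter.1 h').1).2) (fun h'' => h'' hp)

lemma cand_mem_min_branch {p : B} (hc : p ∈ cand R A m T le) (hp : p ∉ T) :
    p ∈ A \ T ∧ p ≠ m ∧ (∀ z, le z p → z = p) ∧ ∀ t ∈ T, ¬R p t := by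
  rcases Finset.mem_union.1 hc with h' | h'
  · exact absurd (Finset.mem_filter.1 h').1 hp
  · exact ⟨(Finset.mem_filter.1 h').1, (Finset.mem_filter.1 h').2⟩

lemma cand_nonempty (hsymm : ∀ x y, R x y → R y x) (h : Cond R A m T le)
    (hedge : ∃ x ∈ A, ∃ y ∈ A, x ≠ y ∧ R x y) :
    (cand R A m T le).Nonempty := by
  obtain ⟨x, hx, y, hy, hxy, hRxy⟩ := hedge
  by_cases hTb : ∃ t ∈ T, ∃ z ∈ A \ T, R t z
  · obtain ⟨t, ht, hz⟩ := hTb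
    exact ⟨t, Finset.mem_union_left _ (Finset.mem_filter.2 ⟨ht, hz⟩)⟩
  · push_neg at hTb
    have hxT : x ∉ T := by
      intro hxT
      by_cases hyT : y ∈ T
      · exact h.2.1 x hxT y hyT hxy hRxy
      · exact hTb x hxT y (Finset.mem_sdiff.2 ⟨hy, hyT⟩) hRxy
    have hyT : y ∉ T := by
      intro hyT
      exact hTb y hyT x (Finset.mem_sdiff.2 ⟨hx, hxT⟩) (hsymm x y hRxy)
    have hxAT : x ∈ A \ T := Finset.mem_sdiff.2 ⟨hx, hxT⟩
    have hyAT : y ∈ A \ T := Finset.mem_sdiff.2 ⟨hy, hyT⟩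
    -- pick a point distinct from m in the support
    obtain ⟨x', hx'AT, hx'm⟩ : ∃ x' ∈ A \ T, x' ≠ m := by
      by_cases hxm : x = m
      · exact ⟨y, hyAT, fun h' => hxy (hxm.trans h'.symm)⟩
      · exact ⟨x, hxAT, hxm⟩
    obtain ⟨v, hvA, hvm, _, hvmin⟩ :=
      pyramid_exists_minimal_ne h.2.2 (by exact_mod_cast hx'AT) hx'm
    have hvAT : v ∈ A \ T := by exact_mod_cast hvA
    refine ⟨v, Finset.mem_union_right _ (Finset.mem_filter.2 ⟨hvAT, hvm, hvmin, ?_⟩)⟩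
    intro t ht hRvt
    exact hTb t ht v hvAT (hsymm v t hRvt)

lemma cand_flip_insert (hsymm : ∀ x y, R x y → R y x) (h : Cond R A m T le) {p : B}
    (hp : p ∈ T) (hnbr : ∃ z ∈ A \ T, R p z) :
    cand R A m (T.erase p) (insertBot R p le) = cand R A m T le := by
  obtain ⟨hTsub, hind, hpyr⟩ := h
  have hsd : A \ T.erase p = insert p (A \ T) := sdiff_erase_eq ⟨hTsub, hind, hpyr⟩ hp
  have hdom : ∀ {a b : B}, le a b → a ∈ A \ T ∧ b ∈ A \ T := by
    intro a b hab
    constructor <;> [exact_mod_cast (hpyr.1.1 a b hab).1; exact_mod_cast (hpyr.1.1 a b hab).2]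
  have hpAT : p ∉ A \ T := fun h' => (Finset.mem_sdiff.1 h').2 hp
  have hpm : p ≠ m := (Finset.mem_erase.1 (hTsub hp)).1
  ext v
  simp only [cand, Finset.mem_union, Finset.mem_filter]
  constructor
  · rintro (⟨hvT', ⟨z, hz, hRvz⟩⟩ | ⟨hvAT', hvm, hvmin, hvnot⟩)
    · -- new T-branch
      obtain ⟨hvp, hvT⟩ := Finset.mem_erase.1 hvT'
      rw [hsd] at hz
      rcases Finset.mem_insert.1 hz with rfl | hz'
      · exact absurd hRvz (hind v hvT z hp hvp)
      · exact Or.inl ⟨hvT, z, hz', hRvz⟩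
    · -- new min-branch
      rw [hsd] at hvAT'
      rcases Finset.mem_insert.1 hvAT' with rfl | hvAT
      · exact Or.inl ⟨hp, hnbr⟩
      · refine Or.inr ⟨hvAT, hvm, fun z hzv => hvmin z (Or.inl hzv), fun t ht hRvt => ?_⟩
        by_cases htp : t = p
        · subst htp
          have : insertBot R t le t v :=
            Or.inr ⟨rfl, Or.inr ⟨v, hsymm v t hRvt,
              hpyr.1.2.1 v (by exact_mod_cast hvAT)⟩⟩
          exact hpAT (hvmin t this ▸ hvAT)
        · exact hvnot t (Finset.mem_erase.2 ⟨htp, ht⟩) hRvt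
  · rintro (⟨hvT, ⟨z, hz, hRvz⟩⟩ | ⟨hvAT, hvm, hvmin, hvnot⟩)
    · by_cases hvp : v = p
      · subst hvp
        refine Or.inr ⟨by rw [hsd]; exact Finset.mem_insert_self _ _, hpm, ?_, ?_⟩
        · rintro w (hw | ⟨rfl, _⟩)
          · exact absurd (hdom hw).2 hpAT
          · rfl
        · intro t ht hRvt
          obtain ⟨htp, htT⟩ := Finset.mem_erase.1 ht
          exact hind v hvT t htT (Ne.symm htp) hRvt
      · exact Or.inl ⟨Finset.mem_erase.2 ⟨hvp, hvT⟩,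
          z, by rw [hsd]; exact Finset.mem_insert_of_mem hz, hRvz⟩
    · -- old min-branch
      have hvp : v ≠ p := fun h' => (Finset.mem_sdiff.1 hvAT).2 (h' ▸ hp)
      refine Or.inr ⟨by rw [hsd]; exact Finset.mem_insert_of_mem hvAT, hvm, ?_,
        fun t ht hRvt => hvnot t (Finset.mem_of_mem_erase ht) hRvt⟩
      rintro w (hw | ⟨hwp, hw'⟩)
      · exact hvmin w hw
      · rcases hw' with hvp' | ⟨u, hRpu, huv⟩
        · exact absurd hvp' hvp
        · have hu : u = v := hvmin u huv
          exact absurd (hsymm p v (hu ▸ hRpu)) (hvnot p hp)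
  
end CandLemmas

section CandLemmas2
variable {A : Finset B} {m : B} {T : Finset B} {le : B → B → Prop}

lemma cand_flip_remove_subset (hsymm : ∀ x y, R x y → R y x) (h : Cond R A m T le) {p : B}
    (hc : p ∈ cand R A m T le) (hpT : p ∉ T) :
    cand R A m (insert p T) (restrictRel le p) ⊆ cand R A m T le := by
  obtain ⟨hpAT, hpm, hpmin, hpnot⟩ := cand_mem_min_branch hc hpT
  obtain ⟨hTsub, hind, hpyr⟩ := h
  have hsd : A \ insert p T = (A \ T).erase p := by
    ext x
    simp only [Finset.mem_sdiff, Finset.mem_insert, Finset.mem_erase]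
    tauto
  intro v hv
  rcases Finset.mem_union.1 hv with hv' | hv'
  · obtain ⟨hvT', hz⟩ := Finset.mem_filter.1 hv'
    obtain ⟨z, hzAT', hRvz⟩ := hz
    rw [hsd] at hzAT'
    rcases Finset.mem_insert.1 hvT' with rfl | hvT
    · exact hc
    · exact Finset.mem_union_left _
        (Finset.mem_filter.2 ⟨hvT, z, Finset.mem_of_mem_erase hzAT', hRvz⟩)
  · obtain ⟨hvAT', hvm, hvmin, hvnot⟩ := Finset.mem_filter.1 hv'
    rw [hsd] at hvAT'
    obtain ⟨hvp, hvAT⟩ := Finset.mem_erase.1 hvAT'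
    have hnRvp : ¬R v p := hvnot p (Finset.mem_insert_self _ _)
    refine Finset.mem_union_right _ (Finset.mem_filter.2 ⟨hvAT, hvm, ?_,
      fun t ht => hvnot t (Finset.mem_insert_of_mem ht)⟩)
    intro z hzv
    by_cases hzp : z = p
    · subst hzp
      -- z = p: le p v; p would be covered ⇒ R p v ⇒ contradiction
      exfalso
      have hpv : z ≠ v := hvp.symm  -- z = p here
      have hint : ∀ w, le z w → le w v → w = z ∨ w = v := by
        intro w hzw hwv
        by_cases hwp : w = z
        · exact Or.inl hwp
        · by_cases hwv' : w = v
          · exact Or.inr hwv'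
          · exact Or.inr (hvmin w ⟨hwv, hwp, Ne.symm hpv⟩)
      have := hpyr.1.2.2.2.2.2 z v hzv hpv hint
      exact hnRvp (hsymm z v this)
    · exact hvmin z ⟨hzv, hzp, hvp⟩

lemma cand_flip_remove_mem (h : Cond R A m T le) {p : B}
    (hc : p ∈ cand R A m T le) (hpT : p ∉ T) :
    p ∈ cand R A m (insert p T) (restrictRel le p) := by
  obtain ⟨hpAT, hpm, hpmin, hpnot⟩ := cand_mem_min_branch hc hpT
  obtain ⟨hTsub, hind, hpyr⟩ := h
  have hsd : A \ insert p T = (A \ T).erase p := by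
    ext x
    simp only [Finset.mem_sdiff, Finset.mem_insert, Finset.mem_erase]
    tauto
  -- p is not the apex, so something lies strictly above p; a cover gives a neighbour
  have hnotmax : ¬(∀ x ∈ (↑(A \ T) : Set B), le p x → x = p) := by
    intro hmax
    exact hpm (hpyr.2.2.2 p (by exact_mod_cast hpAT) hmax)
  push_neg at hnotmax
  obtain ⟨x, hxA, hpx, hxp⟩ := hnotmax
  obtain ⟨z, hpz, hpz', hzx, hRpz, _⟩ := cover_above hpyr.1 hpx (fun h' => hxp h'.symm)
  have hzAT : z ∈ A \ T := by exact_mod_cast (hpyr.1.1 p z hpz).2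
  have hzp : z ≠ p := Ne.symm hpz'
  refine Finset.mem_union_left _ (Finset.mem_filter.2 ⟨Finset.mem_insert_self _ _, z, ?_, hRpz⟩)
  rw [hsd]
  exact Finset.mem_erase.2 ⟨hzp, hzAT⟩

lemma stepA_cond (hsymm : ∀ x y, R x y → R y x)
    (insertBot_pyr : ∀ {A' : Set B} {le' : B → B → Prop} {m' x : B},
      IsFullPyramid R A' le' m' → x ∉ A' → (∃ z ∈ A', R x z) →
      IsFullPyramid R (insert x A') (insertBot R x le') m')
    (h : Cond R A m T le) {p : B} (hp : p ∈ T) (hnbr : ∃ z ∈ A \ T, R p z) :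
    Cond R A m (T.erase p) (insertBot R p le) := by
  obtain ⟨hTsub, hind, hpyr⟩ := h
  have hsd : A \ T.erase p = insert p (A \ T) := sdiff_erase_eq ⟨hTsub, hind, hpyr⟩ hp
  refine ⟨fun x hx => hTsub (Finset.mem_of_mem_erase hx),
    fun x hx y hy => hind x (Finset.mem_of_mem_erase hx) y (Finset.mem_of_mem_erase hy), ?_⟩
  rw [hsd]
  rw [Finset.coe_insert]
  obtain ⟨z, hzAT, hRpz⟩ := hnbr
  exact insertBot_pyr hpyr (fun h' => (Finset.mem_sdiff.1 (by exact_mod_cast h')).2 hp)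
    ⟨z, by exact_mod_cast hzAT, hRpz⟩

lemma stepB_cond (hsymm : ∀ x y, R x y → R y x)
    (restrict_pyr : ∀ {A' : Set B} {le' : B → B → Prop} {m' v : B},
      IsFullPyramid R A' le' m' → v ∈ A' → v ≠ m' → (∀ z, le' z v → z = v) →
      IsFullPyramid R (A' \ {v}) (restrictRel le' v) m')
    (h : Cond R A m T le) {p : B} (hc : p ∈ cand R A m T le) (hpT : p ∉ T) :
    Cond R A m (insert p T) (restrictRel le p) := by
  obtain ⟨hpAT, hpm, hpmin, hpnot⟩ := cand_mem_min_branch hc hpT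
  obtain ⟨hTsub, hind, hpyr⟩ := h
  have hsd : A \ insert p T = (A \ T).erase p := by
    ext x
    simp only [Finset.mem_sdiff, Finset.mem_insert, Finset.mem_erase]
    tauto
  refine ⟨?_, ?_, ?_⟩
  · exact Finset.insert_subset (Finset.mem_erase.2 ⟨hpm, (Finset.mem_sdiff.1 hpAT).1⟩) hTsub
  · intro x hx y hy hxy
    rcases Finset.mem_insert.1 hx with rfl | hx'
    · rcases Finset.mem_insert.1 hy with rfl | hy'
      · exact absurd rfl hxy
      · exact hpnot y hy'
    · rcases Finset.mem_insert.1 hy with hyp | hy'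
      · intro hR'
        rw [hyp] at hR'
        exact hpnot x hx' (hsymm x p hR')
      · exact hind x hx' y hy' hxy
  · rw [hsd, Finset.coe_erase]
    exact restrict_pyr hpyr (by exact_mod_cast hpAT) hpm hpmin

end CandLemmas2

/-! ### the key cancellation identity -/

lemma signflip (n k : ℕ) (h : n = k + 1) : (-1 : ℤ) ^ n + (-1 : ℤ) ^ k = 0 := by
  subst h
  rw [pow_succ]
  ring

lemma newkey (hsymm : ∀ x y, R x y → R y x) (f : B → ℕ) (hf : Function.Injective f)
    (A : Finset B) (m : B) (hm : m ∈ A)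
    (hedge : ∃ x ∈ A, ∃ y ∈ A, x ≠ y ∧ R x y) :
    ∑ T ∈ (A.erase m).powerset.filter (fun T => Indep R T),
      (-1 : ℤ) ^ T.card * P R (A \ T) m = 0 := by
  classical
  set S := (A.erase m).powerset.filter (fun T => Indep R T) with hS
  set O := {p : Finset B × (B → B → Prop) // Cond R A m p.1 p.2} with hO
  letI : Fintype O := Fintype.ofFinite _
  -- the fibers of `fun o : O => o.1.1` over `S` compute the summands
  have hmaps : ∀ o : O, o.1.1 ∈ S := by
    rintro ⟨⟨T, le⟩, hT, hind, hpyr⟩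
    exact Finset.mem_filter.2 ⟨Finset.mem_powerset.2 hT, hind⟩
  have hfiber : ∀ T ∈ S,
      ∑ o ∈ (univ : Finset O).filter (fun o => o.1.1 = T), (-1 : ℤ) ^ (o.1.1.card)
        = (-1 : ℤ) ^ T.card * P R (A \ T) m := by
    intro T hT
    rw [Finset.sum_congr rfl (fun o ho => by rw [(Finset.mem_filter.1 ho).2])]
    rw [Finset.sum_const, nsmul_eq_mul, mul_comm]
    congr 1
    rw [P_eq_card_filter]
    norm_cast
    apply Finset.card_bij (fun (o : O) _ => o.1.2)
    · rintro o ho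
      simp only [Finset.mem_filter, Finset.mem_univ, true_and] at ho ⊢
      rw [← ho]
      exact o.2.2.2
    · rintro o₁ h₁ o₂ h₂ h
      simp only [Finset.mem_filter, Finset.mem_univ, true_and] at h₁ h₂
      exact Subtype.ext (Prod.ext (h₁.trans h₂.symm) h)
    · rintro le hle
      simp only [Finset.mem_filter, Finset.mem_univ, true_and] at hle
      obtain ⟨hT', hind⟩ := Finset.mem_filter.1 hT
      exact ⟨⟨⟨T, le⟩, Finset.mem_powerset.1 hT', hind, hle⟩, by simp⟩
  have hcne : ∀ o : O, (cand R A m o.1.1 o.1.2).Nonempty :=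
    fun o => cand_nonempty hsymm o.2 hedge
  have hOsum : ∑ o : O, (-1 : ℤ) ^ (o.1.1.card) = 0 := by
    refine Finset.sum_ninvolution
      (fun o =>
        if hp : minOf f (cand R A m o.1.1 o.1.2) (hcne o) ∈ o.1.1 then
          ⟨(o.1.1.erase (minOf f (cand R A m o.1.1 o.1.2) (hcne o)),
            insertBot R (minOf f (cand R A m o.1.1 o.1.2) (hcne o)) o.1.2),
            stepA_cond hsymm (fun h1 h2 h3 => insertBot_pyramid hsymm h1 h2 h3) o.2 hp
              (cand_mem_T_branch (minOf_mem f _ (hcne o)) hp)⟩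
        else
          ⟨(insert (minOf f (cand R A m o.1.1 o.1.2) (hcne o)) o.1.1,
            restrictRel o.1.2 (minOf f (cand R A m o.1.1 o.1.2) (hcne o))),
            stepB_cond hsymm (fun h1 h2 h3 h4 => restrict_pyramid h1 h2 h3 h4) o.2
              (minOf_mem f _ (hcne o)) hp⟩)
      ?_ ?_ (fun _ => Finset.mem_univ _) ?_
    · -- signs cancel
      intro o
      by_cases hp : minOf f (cand R A m o.1.1 o.1.2) (hcne o) ∈ o.1.1
      · beta_reduce
        rw [dif_pos hp]
        have h1 : 0 < o.1.1.card := Finset.card_pos.2 ⟨_, hp⟩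
        have h2 := Finset.card_erase_of_mem hp
        exact signflip _ ((o.1.1.erase (minOf f (cand R A m o.1.1 o.1.2) (hcne o))).card)
          (by omega)
      · beta_reduce
        rw [dif_neg hp]
        rw [add_comm]
        exact signflip _ _ (Finset.card_insert_of_notMem hp)
    · -- no fixed points
      intro o _
      by_cases hp : minOf f (cand R A m o.1.1 o.1.2) (hcne o) ∈ o.1.1
      · beta_reduce
        rw [dif_pos hp]
        intro h
        have := congrArg (fun o : O => o.1.1) h
        simp only at this
        rw [Finset.erase_eq_self] at this
        exact this hp
      · beta_reduce
        rw [dif_neg hp]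
        intro h
        have := congrArg (fun o : O => o.1.1) h
        simp only at this
        rw [Finset.insert_eq_self] at this
        exact hp this
    · -- involutive
      intro o
      by_cases hp : minOf f (cand R A m o.1.1 o.1.2) (hcne o) ∈ o.1.1
      · beta_reduce
        rw [dif_pos hp]
        set p := minOf f (cand R A m o.1.1 o.1.2) (hcne o) with hpdef
        have hnbr := cand_mem_T_branch (minOf_mem f _ (hcne o)) hp
        set o' : O := ⟨(o.1.1.erase p, insertBot R p o.1.2),
            stepA_cond hsymm (fun h1 h2 h3 => insertBot_pyramid hsymm h1 h2 h3) o.2 hp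
              hnbr⟩ with ho'
        have hcand : cand R A m o'.1.1 o'.1.2 = cand R A m o.1.1 o.1.2 :=
          cand_flip_insert hsymm o.2 hp hnbr
        have hpiv' : minOf f (cand R A m o'.1.1 o'.1.2) (hcne o') = p := by
          rw [minOf_congr f (hcne o') hcand]
        have hp' : minOf f (cand R A m o'.1.1 o'.1.2) (hcne o') ∉ o'.1.1 := by
          rw [hpiv']
          simp [ho']
        rw [dif_neg hp']
        refine Subtype.ext (Prod.ext ?_ ?_)
        · show insert (minOf f (cand R A m o'.1.1 o'.1.2) (hcne o')) (o.1.1.erase p) = o.1.1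
          rw [hpiv']
          exact Finset.insert_erase hp
        · show restrictRel (insertBot R p o.1.2) (minOf f (cand R A m o'.1.1 o'.1.2) (hcne o'))
            = o.1.2
          rw [hpiv']
          exact restrict_insertBot o.2.2.2.1
            (fun hc => (Finset.mem_sdiff.1 (by exact_mod_cast hc : p ∈ A \ o.1.1)).2 hp)
      · beta_reduce
        rw [dif_neg hp]
        set p := minOf f (cand R A m o.1.1 o.1.2) (hcne o) with hpdef
        have hcmem := minOf_mem f (cand R A m o.1.1 o.1.2) (hcne o)
        rw [← hpdef] at hcmem
        set o' : O := ⟨(insert p o.1.1, restrictRel o.1.2 p),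
            stepB_cond hsymm (fun h1 h2 h3 h4 => restrict_pyramid h1 h2 h3 h4) o.2
              hcmem hp⟩ with ho'
        have hsub : cand R A m o'.1.1 o'.1.2 ⊆ cand R A m o.1.1 o.1.2 :=
          cand_flip_remove_subset hsymm o.2 hcmem hp
        have hmem' : p ∈ cand R A m o'.1.1 o'.1.2 :=
          cand_flip_remove_mem o.2 hcmem hp
        have hpiv' : minOf f (cand R A m o'.1.1 o'.1.2) (hcne o') = p :=
          minOf_unique hf (hcne o') hmem'
            (fun y hy => minOf_min f (cand R A m o.1.1 o.1.2) (hcne o) y (hsub hy))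
        have hp' : minOf f (cand R A m o'.1.1 o'.1.2) (hcne o') ∈ o'.1.1 := by
          rw [hpiv']
          simp [ho']
        rw [dif_pos hp']
        obtain ⟨hpAT, hpm, hpmin, hpnot⟩ := cand_mem_min_branch hcmem hp
        refine Subtype.ext (Prod.ext ?_ ?_)
        · show (insert p o.1.1).erase (minOf f (cand R A m o'.1.1 o'.1.2) (hcne o')) = o.1.1
          rw [hpiv']
          exact Finset.erase_insert hp
        · show insertBot R (minOf f (cand R A m o'.1.1 o'.1.2) (hcne o'))
            (restrictRel o.1.2 p) = o.1.2
          rw [hpiv']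
          exact insertBot_restrict o.2.2.2 (by exact_mod_cast hpAT) hpm hpmin
  calc ∑ T ∈ S, (-1 : ℤ) ^ T.card * P R (A \ T) m
      = ∑ T ∈ S, ∑ o ∈ (univ : Finset O).filter (fun o => o.1.1 = T),
          (-1 : ℤ) ^ (o.1.1.card) := Finset.sum_congr rfl (fun T hT => (hfiber T hT).symm)
    _ = ∑ o : O, (-1 : ℤ) ^ (o.1.1.card) :=
        Finset.sum_fiberwise_of_maps_to (fun o _ => hmaps o) _
    _ = 0 := hOsum

end CandSection

/-! ### partitions as setoids -/

instance : Finite (Setoid B) :=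
  Finite.of_injective (fun s : Setoid B => s.r)
    (fun s t h => Setoid.ext (fun {a b} => iff_of_eq (congrFun (congrFun h a) b)))

noncomputable instance : Fintype (Setoid B) := Fintype.ofFinite _

variable (PP : (B → B → Prop) → Finset B → B → ℕ)

section WithR
variable {R : B → B → Prop} (f : B → ℕ)

/-! ### blocks of a setoid -/

def blk (s : Setoid B) (x : B) : Finset B := univ.filter (fun y => s.r x y)

lemma mem_blk_self (s : Setoid B) (x : B) : x ∈ blk s x := by
  simp [blk]

lemma rel_of_mem_blk {s : Setoid B} {x y : B} (h : y ∈ blk s x) : s.r x y := by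
  simpa [blk] using h

lemma blk_eq_of_rel {s : Setoid B} {x y : B} (h : s.r x y) : blk s x = blk s y := by
  ext z
  simp only [blk, Finset.mem_filter, Finset.mem_univ, true_and]
  exact ⟨fun h' => s.trans (s.symm h) h', fun h' => s.trans h h'⟩

lemma mem_blk_iff {s : Setoid B} {x y : B} : y ∈ blk s x ↔ s.r x y := by
  simp [blk]

def blocks (s : Setoid B) : Finset (Finset B) := univ.image (blk s)

lemma blk_mem_blocks (s : Setoid B) (x : B) : blk s x ∈ blocks s :=
  Finset.mem_image_of_mem _ (Finset.mem_univ x)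

lemma blocks_nonempty {s : Setoid B} {C : Finset B} (h : C ∈ blocks s) : C.Nonempty := by
  obtain ⟨x, -, rfl⟩ := Finset.mem_image.1 h
  exact ⟨x, mem_blk_self s x⟩

/-! ### the M invariant -/

variable (R) in
noncomputable def gfac (C : Finset B) : ℤ :=
  if h : C.Nonempty then (-1 : ℤ) ^ (C.card - 1) * PP R C (minOf f C h) else 1

variable (R) in
noncomputable def M (s : Setoid B) : ℤ := ∏ C ∈ blocks s, gfac PP R f C

lemma gfac_singleton (hP1 : ∀ x : B, PP R {x} x = 1) (x : B) : gfac PP R f {x} = 1 := by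
  rw [gfac, dif_pos ⟨x, Finset.mem_singleton_self x⟩]
  have : minOf f {x} ⟨x, Finset.mem_singleton_self x⟩ = x := by
    have := minOf_mem f {x} ⟨x, Finset.mem_singleton_self x⟩
    simpa using this
  rw [this, hP1]
  simp

lemma blk_bot (x : B) : blk (⊥ : Setoid B) x = {x} := by
  ext y
  simp [blk, Setoid.bot_def, eq_comm]

lemma M_bot (hP1 : ∀ x : B, PP R {x} x = 1) : M PP R f (⊥ : Setoid B) = 1 := by
  rw [M]
  refine Finset.prod_eq_one (fun C hC => ?_)
  obtain ⟨x, -, rfl⟩ := Finset.mem_image.1 hC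
  rw [blk_bot]
  exact gfac_singleton PP f hP1 x

lemma blk_top (x : B) : blk (⊤ : Setoid B) x = univ := by
  ext y
  simp [blk, Setoid.top_def]

lemma M_top [Nonempty B] :
    M PP R f (⊤ : Setoid B) = (-1 : ℤ) ^ (Fintype.card B - 1) *
      PP R univ (minOf f univ univ_nonempty) := by
  rw [M]
  have hb : blocks (⊤ : Setoid B) = {univ} := by
    apply Finset.eq_singleton_iff_nonempty_unique_mem.2
    refine ⟨⟨univ, ?_⟩, ?_⟩
    · have := blk_mem_blocks (⊤ : Setoid B) (Classical.arbitrary B)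
      rwa [blk_top] at this
    · intro C hC
      obtain ⟨x, -, rfl⟩ := Finset.mem_image.1 hC
      exact blk_top x
  rw [hb, Finset.prod_singleton, gfac, dif_pos univ_nonempty, Finset.card_univ]

lemma M_zero_of_bad_class (hP0 : ∀ (C : Finset B) (c : B), ¬ ConnSet R (↑C) → PP R C c = 0)
    {s : Setoid B} {x : B} (h : ¬ ConnSet R (↑(blk s x))) : M PP R f s = 0 := by
  rw [M]
  apply Finset.prod_eq_zero (blk_mem_blocks s x)
  rw [gfac, dif_pos ⟨x, mem_blk_self s x⟩, hP0 _ _ h]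
  simp

end WithR

variable (PP : (B → B → Prop) → Finset B → B → ℕ)

section SplitJoin
variable {R : B → B → Prop} (f : B → ℕ)

/-- split the block `D` of a setoid into singletons -/
def splitS (D : Finset B) (s : Setoid B) : Setoid B :=
  ⟨fun x y => x = y ∨ (s.r x y ∧ x ∉ D ∧ y ∉ D), by
    refine ⟨fun x => Or.inl rfl, ?_, ?_⟩
    · rintro x y (rfl | ⟨h, hx, hy⟩)
      · exact Or.inl rfl
      · exact Or.inr ⟨s.symm h, hy, hx⟩
    · rintro x y z (rfl | ⟨h, hx, hy⟩) (rfl | ⟨h', hy', hz⟩)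
      · exact Or.inl rfl
      · exact Or.inr ⟨h', hy', hz⟩
      · exact Or.inr ⟨h, hx, hy⟩
      · exact Or.inr ⟨s.trans h h', hx, hz⟩⟩

lemma splitS_r {D : Finset B} {s : Setoid B} {x y : B} :
    (splitS D s).r x y ↔ x = y ∨ (s.r x y ∧ x ∉ D ∧ y ∉ D) := Iff.rfl

/-- rejoin a block -/
def joinS (D : Finset B) (s : Setoid B)
    (hD : ∀ x y, s.r x y → x ∈ D → x = y) : Setoid B :=
  ⟨fun x y => s.r x y ∨ (x ∈ D ∧ y ∈ D), by
    refine ⟨fun x => Or.inl (s.refl x), ?_, ?_⟩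
    · rintro x y (h | ⟨hx, hy⟩)
      · exact Or.inl (s.symm h)
      · exact Or.inr ⟨hy, hx⟩
    · rintro x y z (h | ⟨hx, hy⟩) (h' | ⟨hy', hz⟩)
      · exact Or.inl (s.trans h h')
      · have := hD y x (s.symm h) hy'
        exact Or.inr ⟨this ▸ hy', hz⟩
      · have := hD y z h' hy
        exact Or.inr ⟨hx, this ▸ hy⟩
      · exact Or.inr ⟨hx, hz⟩⟩

lemma splitS_trivial (D : Finset B) (π : Setoid B) {x y : B}
    (h : (splitS D π).r x y) (hx : x ∈ D) : x = y := by
  rcases h with rfl | ⟨-, hx', -⟩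
  · rfl
  · exact absurd hx hx'

/-- blocks of a split setoid -/
lemma blk_splitS_mem {s : Setoid B} {m : B} {x : B} (hx : x ∈ blk s m) :
    blk (splitS (blk s m) s) x = {x} := by
  ext y
  constructor
  · intro hy
    rcases (rel_of_mem_blk hy : (splitS (blk s m) s).r x y) with rfl | ⟨-, hx', -⟩
    · exact Finset.mem_singleton_self x
    · exact absurd hx hx'
  · intro hy
    rw [Finset.mem_singleton] at hy
    subst hy
    exact mem_blk_self _ _

lemma blk_splitS_not_mem {s : Setoid B} {m : B} {x : B} (hx : x ∉ blk s m) :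
    blk (splitS (blk s m) s) x = blk s x := by
  ext y
  constructor
  · intro hy
    rcases (rel_of_mem_blk hy : (splitS (blk s m) s).r x y) with rfl | ⟨h, -, -⟩
    · exact mem_blk_self _ _
    · exact mem_blk_iff.2 h
  · intro hy
    have h : s.r x y := rel_of_mem_blk hy
    have hy' : y ∉ blk s m := by
      intro hy''
      exact hx (mem_blk_iff.2 (s.trans (rel_of_mem_blk hy'') (s.symm h)))
    exact mem_blk_iff.2 (Or.inr ⟨h, hx, hy'⟩)

/-- multiplicativity of M under splitting off the block of `m` -/
lemma M_split (hP1 : ∀ x : B, PP R {x} x = 1) (s : Setoid B) (m : B) :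
    M PP R f s = gfac PP R f (blk s m) * M PP R f (splitS (blk s m) s) := by
  classical
  have huniv : (univ : Finset B) = blk s m ∪ (univ \ blk s m) :=
    (Finset.union_sdiff_of_subset (Finset.subset_univ _)).symm
  have himg : blocks s = {blk s m} ∪ (univ \ blk s m).image (blk s) := by
    rw [blocks]
    nth_rewrite 1 [huniv]
    rw [Finset.image_union]
    congr 1
    apply Finset.eq_singleton_iff_nonempty_unique_mem.2
    refine ⟨⟨blk s m, Finset.mem_image_of_mem _ (mem_blk_self s m)⟩, ?_⟩
    intro C hC
    obtain ⟨x, hx, rfl⟩ := Finset.mem_image.1 hC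
    exact (blk_eq_of_rel (rel_of_mem_blk hx)).symm
  have hdisj : Disjoint ({blk s m} : Finset (Finset B)) ((univ \ blk s m).image (blk s)) := by
    rw [Finset.disjoint_left]
    intro C hC hC'
    rw [Finset.mem_singleton] at hC
    obtain ⟨y, hy, hy'⟩ := Finset.mem_image.1 hC'
    subst hC
    rw [Finset.mem_sdiff] at hy
    exact hy.2 (hy'.symm ▸ mem_blk_self s y : y ∈ blk s m)
  have himg2 : blocks (splitS (blk s m) s) =
      (blk s m).image (fun x => ({x} : Finset B)) ∪ (univ \ blk s m).image (blk s) := by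
    rw [blocks]
    nth_rewrite 1 [huniv]
    rw [Finset.image_union]
    congr 1
    · exact Finset.image_congr (fun x hx => blk_splitS_mem hx)
    · exact Finset.image_congr (fun x hx => blk_splitS_not_mem (Finset.mem_sdiff.1 hx).2)
  have hdisj2 : Disjoint ((blk s m).image (fun x => ({x} : Finset B)))
      ((univ \ blk s m).image (blk s)) := by
    rw [Finset.disjoint_left]
    intro C hC hC'
    obtain ⟨x, hx, rfl⟩ := Finset.mem_image.1 hC
    obtain ⟨y, hy, hy'⟩ := Finset.mem_image.1 hC'
    rw [Finset.mem_sdiff] at hy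
    have : y ∈ ({x} : Finset B) := hy' ▸ mem_blk_self s y
    rw [Finset.mem_singleton] at this
    subst this
    exact hy.2 hx
  rw [M, M, himg, himg2, Finset.prod_union hdisj, Finset.prod_union hdisj2,
    Finset.prod_singleton]
  have h1 : ∏ C ∈ (blk s m).image (fun x => ({x} : Finset B)), gfac PP R f C = 1 := by
    refine Finset.prod_eq_one (fun C hC => ?_)
    obtain ⟨x, -, rfl⟩ := Finset.mem_image.1 hC
    exact gfac_singleton PP f hP1 x
  rw [h1, one_mul]

end SplitJoin

variable (PP : (B → B → Prop) → Finset B → B → ℕ)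

section Main
variable {R : B → B → Prop} (f : B → ℕ)

lemma le_iff {s t : Setoid B} : s ≤ t ↔ ∀ x y, s.r x y → t.r x y := by
  constructor
  · intro h x y hxy; exact h hxy
  · intro h a b hab; exact h a b hab

lemma bot_r (x y : B) : (⊥ : Setoid B).r x y ↔ x = y := by simp [Setoid.bot_def]

def np (s : Setoid B) : ℕ := (univ.filter (fun p : B × B => s.r p.1 p.2 ∧ p.1 ≠ p.2)).card

lemma signhelp (a d t : ℕ) (h1 : d + t = a) (h2 : 1 ≤ d) :
    ((-1 : ℤ)) ^ (d - 1) = (-1) ^ (a - 1) * (-1) ^ t := by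
  have h : a - 1 = (d - 1) + t := by omega
  rw [h, pow_add, mul_assoc, ← mul_pow]
  norm_num

/-- total version of joinS -/
def joinD (D : Finset B) (s : Setoid B) : Setoid B :=
  if h : ∀ x y : B, s.r x y → x ∈ D → x = y then joinS D s h else s

lemma sum_eq_one_of_indep (hsymm : ∀ x y, R x y → R y x)
    (hP1 : ∀ x : B, PP R {x} x = 1)
    (hP0 : ∀ (C : Finset B) (c : B), ¬ ConnSet R (↑C) → PP R C c = 0)
    (π : Setoid B) (hI : ∀ x y : B, π.r x y → x ≠ y → ¬R x y) :
    ∑ s ∈ univ.filter (· ≤ π), M PP R f s = 1 := by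
  have hbot : (⊥ : Setoid B) ∈ univ.filter (· ≤ π) := by
    simp only [Finset.mem_filter, Finset.mem_univ, true_and]
    exact bot_le
  rw [Finset.sum_eq_single (⊥ : Setoid B) ?_ (fun h => absurd hbot h)]
  · exact M_bot PP f hP1
  · intro s hs hne
    rw [Finset.mem_filter] at hs
    have hle : s ≤ π := hs.2
    have hpair : ∃ x y : B, s.r x y ∧ x ≠ y := by
      by_contra h
      push_neg at h
      refine hne (Setoid.ext fun {a b} => ?_)
      rw [bot_r]
      exact ⟨fun h' => by_contra (fun hne' => hne' (h a b h')), fun h' => h' ▸ s.refl a⟩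
    obtain ⟨x, y, hxy, hnexy⟩ := hpair
    refine M_zero_of_bad_class PP f hP0 (x := x) ?_
    rintro ⟨-, hcon⟩
    have hx : x ∈ (↑(blk s x) : Set B) := Finset.mem_coe.2 (mem_blk_self s x)
    have hy : y ∈ (↑(blk s x) : Set B) := Finset.mem_coe.2 (mem_blk_iff.2 hxy)
    rcases Relation.ReflTransGen.cases_head (hcon x hx y hy) with rfl | ⟨v, ⟨-, hv, hunev, hR⟩, -⟩
    · exact hnexy rfl
    · have hsv : s.r x v := rel_of_mem_blk (Finset.mem_coe.1 hv)
      exact hI x v (le_iff.1 hle x v hsv) hunev hR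

lemma mainSum (hsymm : ∀ x y, R x y → R y x) (hf : Function.Injective f)
    (hP1 : ∀ x : B, PP R {x} x = 1)
    (hP0 : ∀ (C : Finset B) (c : B), ¬ ConnSet R (↑C) → PP R C c = 0)
    (hkey : ∀ (A : Finset B) (m : B), m ∈ A → (∃ x ∈ A, ∃ y ∈ A, x ≠ y ∧ R x y) →
      ∑ T ∈ (A.erase m).powerset.filter (fun T => Indep R T),
        (-1 : ℤ) ^ T.card * PP R (A \ T) m = 0) :
    ∀ (n : ℕ) (π : Setoid B), np π ≤ n →
      ∑ s ∈ univ.filter (· ≤ π), M PP R f s =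
        if (∀ x y : B, π.r x y → x ≠ y → ¬R x y) then 1 else 0 := by
  intro n
  induction n with
  | zero =>
    intro π hπ
    by_cases hI : ∀ x y : B, π.r x y → x ≠ y → ¬R x y
    case neg =>
      push_neg at hI
      obtain ⟨x₀, y₀, hπ₀, hne₀, -⟩ := hI
      exfalso
      have : (x₀, y₀) ∈ univ.filter (fun p : B × B => π.r p.1 p.2 ∧ p.1 ≠ p.2) := by
        simp [hπ₀, hne₀]
      have := Finset.card_pos.2 ⟨_, this⟩
      rw [np] at hπ
      omega
    case pos =>
      rw [if_pos hI]
      exact sum_eq_one_of_indep PP f hsymm hP1 hP0 π hI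
  | succ n ih =>
    intro π hπ
    by_cases hI : ∀ x y : B, π.r x y → x ≠ y → ¬R x y
    case pos =>
      rw [if_pos hI]
      exact sum_eq_one_of_indep PP f hsymm hP1 hP0 π hI
    case neg =>
      rw [if_neg hI]
      push_neg at hI
      obtain ⟨x₀, y₀, hπ₀, hne₀, hR₀⟩ := hI
      set A := blk π x₀ with hA
      have hx₀A : x₀ ∈ A := mem_blk_self π x₀
      have hy₀A : y₀ ∈ A := mem_blk_iff.2 hπ₀
      have hAne : A.Nonempty := ⟨x₀, hx₀A⟩
      set m := minOf f A hAne with hm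
      have hmA : m ∈ A := minOf_mem f A hAne
      have hrelmx : ∀ {x : B}, x ∈ A → π.r m x := by
        intro x hx
        exact π.trans (π.symm (rel_of_mem_blk hmA)) (rel_of_mem_blk hx)
      have hmemA : ∀ {x : B}, π.r m x → x ∈ A := by
        intro x hx
        exact mem_blk_iff.2 (π.trans (rel_of_mem_blk hmA) hx)
      set J := A.powerset.filter (fun D => m ∈ D) with hJ
      have hmapsto : ∀ s ∈ univ.filter (· ≤ π), blk s m ∈ J := by
        intro s hs
        rw [Finset.mem_filter] at hs
        rw [hJ, Finset.mem_filter, Finset.mem_powerset]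
        refine ⟨fun z hz => hmemA (le_iff.1 hs.2 m z (rel_of_mem_blk hz)), mem_blk_self s m⟩
      rw [← Finset.sum_fiberwise_of_maps_to hmapsto (M PP R f)]
      -- step 2 : compute each fiber
      have hfib : ∀ D ∈ J, ∑ s ∈ (univ.filter (· ≤ π)).filter (fun s => blk s m = D),
          M PP R f s
          = ((-1 : ℤ) ^ (D.card - 1) * PP R D m) *
            ∑ s' ∈ univ.filter (· ≤ splitS D π), M PP R f s' := by
        intro D hD
        obtain ⟨hDA, hmD⟩ : D ⊆ A ∧ m ∈ D :=
          ⟨Finset.mem_powerset.1 (Finset.mem_filter.1 hD).1, (Finset.mem_filter.1 hD).2⟩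
        rw [Finset.mul_sum]
        refine Finset.sum_nbij' (i := fun s => splitS D s) (j := fun s' => joinD D s')
          ?_ ?_ ?_ ?_ ?_
        · -- i maps into target
          intro s hs
          simp only [Finset.mem_filter, Finset.mem_univ, true_and] at hs ⊢
          obtain ⟨hle, hblk⟩ := hs
          rw [le_iff]
          rintro x y (rfl | ⟨hxy, hx, hy⟩)
          · exact (splitS D π).refl x
          · exact Or.inr ⟨le_iff.1 hle x y hxy, hx, hy⟩
        · -- j maps back
          intro s' hs'
          simp only [Finset.mem_filter, Finset.mem_univ, true_and] at hs' ⊢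
          have htriv : ∀ x y : B, s'.r x y → x ∈ D → x = y := by
            intro x y hxy hx
            exact splitS_trivial D π (le_iff.1 hs' x y hxy) hx
          rw [joinD, dif_pos htriv]
          constructor
          · rw [le_iff]
            rintro x y (hxy | ⟨hx, hy⟩)
            · rcases le_iff.1 hs' x y hxy with rfl | ⟨h', -, -⟩
              · exact π.refl x
              · exact h'
            · exact π.trans (π.symm (hrelmx (hDA hx))) (hrelmx (hDA hy))
          · ext z
            constructor
            · intro hz
              rcases (rel_of_mem_blk hz : (joinS D s' htriv).r m z) with h' | ⟨-, hz'⟩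
              · exact (htriv m z h' hmD) ▸ hmD
              · exact hz'
            · intro hz
              exact mem_blk_iff.2 (Or.inr ⟨hmD, hz⟩)
        · -- left inverse
          intro s hs
          simp only [Finset.mem_filter, Finset.mem_univ, true_and] at hs
          obtain ⟨hle, hblk⟩ := hs
          have htriv : ∀ x y : B, (splitS D s).r x y → x ∈ D → x = y :=
            fun x y hxy hx => splitS_trivial D s hxy hx
          beta_reduce
          rw [joinD, dif_pos htriv]
          refine Setoid.ext fun {a b} => ?_
          constructor
          · rintro ((rfl | ⟨h', -, -⟩) | ⟨ha, hb⟩)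
            · exact s.refl a
            · exact h'
            · rw [← hblk] at ha hb
              exact s.trans (s.symm (rel_of_mem_blk ha)) (rel_of_mem_blk hb)
          · intro hab
            by_cases haD : a ∈ D
            · have hbD : b ∈ D := by
                rw [← hblk] at haD ⊢
                exact mem_blk_iff.2 (s.trans (rel_of_mem_blk haD) hab)
              exact Or.inr ⟨haD, hbD⟩
            · have hbD : b ∉ D := by
                intro hbD
                rw [← hblk] at hbD haD
                exact haD (mem_blk_iff.2 (s.trans (rel_of_mem_blk hbD) (s.symm hab)))
              exact Or.inl (Or.inr ⟨hab, haD, hbD⟩)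
        · -- right inverse
          intro s' hs'
          simp only [Finset.mem_filter, Finset.mem_univ, true_and] at hs'
          have htriv : ∀ x y : B, s'.r x y → x ∈ D → x = y := by
            intro x y hxy hx
            exact splitS_trivial D π (le_iff.1 hs' x y hxy) hx
          beta_reduce
          rw [joinD, dif_pos htriv]
          refine Setoid.ext fun {a b} => ?_
          constructor
          · rintro (rfl | ⟨h' | ⟨ha, hb⟩, hna, hnb⟩)
            · exact s'.refl a
            · exact h'
            · exact absurd ha hna
          · intro hab
            by_cases haD : a ∈ D
            · exact Or.inl (htriv a b hab haD)
            · have hbD : b ∉ D := by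
                intro hbD
                exact haD ((htriv b a (s'.symm hab) hbD) ▸ hbD)
              exact Or.inr ⟨Or.inl hab, haD, hbD⟩
        · -- summand identity
          intro s hs
          simp only [Finset.mem_filter, Finset.mem_univ, true_and] at hs
          obtain ⟨hle, hblk⟩ := hs
          have := M_split PP f hP1 s m
          rw [hblk] at this
          rw [this]
          have hmin : minOf f D ⟨m, hmD⟩ = m :=
            minOf_unique hf ⟨m, hmD⟩ hmD (fun y hy => minOf_min f A hAne y (hDA hy))
          rw [gfac, dif_pos ⟨m, hmD⟩, hmin]
      rw [Finset.sum_congr rfl hfib]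
      -- step 3 : apply the induction hypothesis to the inner sums
      have hnp : ∀ D ∈ J, np (splitS D π) ≤ n := by
        intro D hD
        obtain ⟨hDA, hmD⟩ : D ⊆ A ∧ m ∈ D :=
          ⟨Finset.mem_powerset.1 (Finset.mem_filter.1 hD).1, (Finset.mem_filter.1 hD).2⟩
        have hw : ∃ w ∈ A, w ≠ m := by
          by_cases hxm : x₀ = m
          · exact ⟨y₀, hy₀A, fun h => hne₀ (hxm.trans h.symm)⟩
          · exact ⟨x₀, hx₀A, hxm⟩
        obtain ⟨w, hwA, hwm⟩ := hw
        have hss : (univ.filter (fun p : B × B => (splitS D π).r p.1 p.2 ∧ p.1 ≠ p.2))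
            ⊂ (univ.filter (fun p : B × B => π.r p.1 p.2 ∧ p.1 ≠ p.2)) := by
          rw [Finset.ssubset_iff_of_subset]
          · refine ⟨(m, w), ?_, ?_⟩
            · simp only [Finset.mem_filter, Finset.mem_univ, true_and]
              exact ⟨hrelmx hwA, Ne.symm hwm⟩
            · simp only [Finset.mem_filter, Finset.mem_univ, true_and, not_and]
              rintro (h' | ⟨-, hmD', -⟩) hne'
              · exact hne' h'
              · exact hmD' hmD
          · intro p hp
            simp only [Finset.mem_filter, Finset.mem_univ, true_and] at hp ⊢
            rcases hp.1 with heq | ⟨h', -, -⟩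
            · exact absurd heq hp.2
            · exact ⟨h', hp.2⟩
        have := Finset.card_lt_card hss
        rw [np] at hπ ⊢
        omega
      rw [Finset.sum_congr rfl (fun D hD => by rw [ih (splitS D π) (hnp D hD)])]
      by_cases hOth : ∀ x y : B, π.r x y → x ≠ y → R x y → x ∈ A
      case neg =>
        push_neg at hOth
        obtain ⟨x₁, y₁, hπ₁, hne₁, hR₁, hx₁A⟩ := hOth
        refine Finset.sum_eq_zero (fun D hD => ?_)
        obtain ⟨hDA, hmD⟩ : D ⊆ A ∧ m ∈ D :=
          ⟨Finset.mem_powerset.1 (Finset.mem_filter.1 hD).1, (Finset.mem_filter.1 hD).2⟩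
        have hy₁A : y₁ ∉ A := by
          intro h
          exact hx₁A (hmemA (π.trans (hrelmx h) (π.symm hπ₁)))
        have hcond : ¬(∀ x y : B, (splitS D π).r x y → x ≠ y → ¬R x y) := by
          intro hs
          exact hs x₁ y₁ (Or.inr ⟨hπ₁, fun h => hx₁A (hDA h), fun h => hy₁A (hDA h)⟩)
            hne₁ hR₁
        rw [if_neg hcond, mul_zero]
      case pos =>
        have hiff : ∀ D ∈ J,
            ((∀ x y : B, (splitS D π).r x y → x ≠ y → ¬R x y) ↔ Indep R (A \ D)) := by
          intro D hD
          obtain ⟨hDA, hmD⟩ : D ⊆ A ∧ m ∈ D :=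
            ⟨Finset.mem_powerset.1 (Finset.mem_filter.1 hD).1, (Finset.mem_filter.1 hD).2⟩
          constructor
          · intro hs x hx y hy hxy
            rw [Finset.mem_sdiff] at hx hy
            exact hs x y (Or.inr ⟨π.trans (π.symm (hrelmx hx.1)) (hrelmx hy.1),
              hx.2, hy.2⟩) hxy
          · rintro hind x y (rfl | ⟨hπ', hxD, hyD⟩) hxy hR'
            · exact hxy rfl
            · have hxA : x ∈ A := hOth x y hπ' hxy hR'
              have hyA : y ∈ A := hOth y x (π.symm hπ') (Ne.symm hxy) (hsymm x y hR')
              exact hind x (Finset.mem_sdiff.2 ⟨hxA, hxD⟩) y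
                (Finset.mem_sdiff.2 ⟨hyA, hyD⟩) hxy hR'
        rw [Finset.sum_congr rfl (fun D hD => by
          rw [if_congr (hiff D hD) rfl rfl, mul_ite, mul_one, mul_zero])]
        rw [← Finset.sum_filter]
        have hsum2 : ∑ D ∈ J.filter (fun D => Indep R (A \ D)),
            (-1 : ℤ) ^ (D.card - 1) * PP R D m
            = ∑ T ∈ (A.erase m).powerset.filter (fun T => Indep R T),
              (-1 : ℤ) ^ (A.card - 1) * ((-1 : ℤ) ^ T.card * PP R (A \ T) m) := by
          refine Finset.sum_nbij' (i := fun D => A \ D) (j := fun T => A \ T)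
            ?_ ?_ ?_ ?_ ?_
          · intro D hD
            simp only [hJ, Finset.mem_filter, Finset.mem_powerset] at hD ⊢
            obtain ⟨⟨hDA', hmD⟩, hind⟩ := hD
            refine ⟨fun z hz => ?_, hind⟩
            rw [Finset.mem_sdiff] at hz
            exact Finset.mem_erase.2 ⟨fun h => hz.2 (h ▸ hmD), hz.1⟩
          · intro T hT
            simp only [hJ, Finset.mem_filter, Finset.mem_powerset] at hT ⊢
            obtain ⟨hTsub, hind⟩ := hT
            have hTA : T ⊆ A := fun z hz => Finset.mem_of_mem_erase (hTsub hz)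
            have hmT : m ∉ T := fun h => (Finset.mem_erase.1 (hTsub h)).1 rfl
            refine ⟨⟨Finset.sdiff_subset, Finset.mem_sdiff.2 ⟨hmA, hmT⟩⟩, ?_⟩
            rw [Finset.sdiff_sdiff_eq_self hTA]
            exact hind
          · intro D hD
            simp only [hJ, Finset.mem_filter, Finset.mem_powerset] at hD
            exact Finset.sdiff_sdiff_eq_self hD.1.1
          · intro T hT
            simp only [Finset.mem_filter, Finset.mem_powerset] at hT
            exact Finset.sdiff_sdiff_eq_self (fun z hz => Finset.mem_of_mem_erase (hT.1 hz))
          · intro D hD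
            simp only [hJ, Finset.mem_filter, Finset.mem_powerset] at hD
            obtain ⟨⟨hDA', hmD⟩, hind⟩ := hD
            rw [Finset.sdiff_sdiff_eq_self hDA']
            have h1 : 1 ≤ D.card := Finset.card_pos.2 ⟨m, hmD⟩
            have h2 : D.card + (A \ D).card = A.card := by
              have hc1 := Finset.card_sdiff_of_subset hDA'
              have hc2 := Finset.card_le_card hDA'
              omega
            rw [signhelp A.card D.card (A \ D).card h2 h1]
            ring
        rw [hsum2, ← Finset.mul_sum,
          hkey A m hmA ⟨x₀, hx₀A, y₀, hy₀A, hne₀, hR₀⟩, mul_zero]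

end Main

section Assembly

variable {R : B → B → Prop}

instance : Finite (BondLattice R) := by
  unfold BondLattice
  infer_instance

noncomputable instance : Fintype (BondLattice R) := Fintype.ofFinite _

lemma bond_le_iff (a b : BondLattice R) : a ≤ b ↔ a.1 ≤ b.1 := Iff.rfl

lemma coe_blk (s : Setoid B) (x : B) : (↑(blk s x) : Set B) = {y | s.r x y} := by
  ext y
  simp [blk]

lemma np_lt_of_lt {s t : Setoid B} (hle : s ≤ t) (hne : s ≠ t) : np s < np t := by
  apply Finset.card_lt_card
  rw [Finset.ssubset_iff_of_subset]
  · have : ∃ x y : B, t.r x y ∧ ¬s.r x y := by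
      by_contra h
      push_neg at h
      exact hne (Setoid.ext fun {a b} => ⟨fun h' => le_iff.1 hle a b h', h a b⟩)
    obtain ⟨x, y, hxy, hnxy⟩ := this
    refine ⟨(x, y), ?_, ?_⟩
    · simp only [Finset.mem_filter, Finset.mem_univ, true_and]
      exact ⟨hxy, fun h => hnxy (h ▸ s.refl x)⟩
    · simp only [Finset.mem_filter, Finset.mem_univ, true_and, not_and]
      intro h
      exact absurd h hnxy
  · intro p hp
    simp only [Finset.mem_filter, Finset.mem_univ, true_and] at hp ⊢
    exact ⟨le_iff.1 hle _ _ hp.1, hp.2⟩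

/-- a nontrivial bond-lattice element has a concurrent related pair -/
lemma bond_edge {c : BondLattice R} (hc : c.1 ≠ ⊥) :
    ∃ x y : B, c.1.r x y ∧ x ≠ y ∧ R x y := by
  have : ∃ x y : B, c.1.r x y ∧ x ≠ y := by
    by_contra h
    push_neg at h
    refine hc (Setoid.ext fun {a b} => ?_)
    rw [bot_r]
    exact ⟨fun h' => by_contra (fun hne' => hne' (h a b h')), fun h' => h' ▸ c.1.refl a⟩
  obtain ⟨x, y, hxy, hnexy⟩ := this
  obtain ⟨-, hcon⟩ := c.2 x
  have hx : x ∈ {y | c.1.r x y} := c.1.refl x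
  have hy : y ∈ {y | c.1.r x y} := hxy
  rcases Relation.ReflTransGen.cases_head (hcon x hx y hy) with heq | ⟨v, ⟨-, hv, hunev, hR⟩, -⟩
  · exact absurd heq hnexy
  · exact ⟨x, v, hv, hunev, hR⟩

lemma sum_bond_eq (hsymm : ∀ x y, R x y → R y x) (f : B → ℕ) (c : BondLattice R) :
    ∑ x ∈ (univ : Finset (BondLattice R)).filter (· ≤ c), M P R f x.1
      = ∑ s ∈ (univ : Finset (Setoid B)).filter (· ≤ c.1), M P R f s := by
  classical
  have himg : ∑ s ∈ ((univ : Finset (BondLattice R)).filter (· ≤ c)).image (fun x => x.1),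
      M P R f s = ∑ x ∈ (univ : Finset (BondLattice R)).filter (· ≤ c), M P R f x.1 :=
    Finset.sum_image (fun x hx y hy h => Subtype.ext h)
  rw [← himg]
  apply Finset.sum_subset
  · intro s hs
    obtain ⟨x, hx, rfl⟩ := Finset.mem_image.1 hs
    rw [Finset.mem_filter] at hx ⊢
    exact ⟨Finset.mem_univ _, hx.2⟩
  · intro s hs hns
    by_cases hcls : ∀ x : B, ConnSet R {y | s.r x y}
    · exfalso
      refine hns (Finset.mem_image.2 ⟨⟨s, hcls⟩, ?_, rfl⟩)
      rw [Finset.mem_filter] at hs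
      exact Finset.mem_filter.2 ⟨Finset.mem_univ _, hs.2⟩
    · push_neg at hcls
      obtain ⟨x, hx⟩ := hcls
      refine M_zero_of_bad_class P f
        (fun C cc h => P_eq_zero_of_not_conn hsymm h) (x := x) ?_
      rw [coe_blk]
      exact hx

lemma mu_eq_M (hrefl : ∀ x, R x x) (hsymm : ∀ x y, R x y → R y x)
    (f : B → ℕ) (hf : Function.Injective f)
    (μ : BondLattice R → BondLattice R → ℤ) (hμ : IsMobius μ)
    (b₀ : BondLattice R) (hb₀ : b₀.1 = ⊥) :
    ∀ c : BondLattice R, μ b₀ c = M P R f c.1 := by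
  have hP1 : ∀ x : B, P R {x} x = 1 := P_singleton R
  have hP0 : ∀ (C : Finset B) (cc : B), ¬ ConnSet R (↑C) → P R C cc = 0 :=
    fun C cc h => P_eq_zero_of_not_conn hsymm h
  have hb₀le : ∀ c : BondLattice R, b₀ ≤ c := by
    intro c
    rw [bond_le_iff, hb₀]
    exact bot_le
  have key : ∀ n, ∀ c : BondLattice R, np c.1 ≤ n → μ b₀ c = M P R f c.1 := by
    intro n
    induction n using Nat.strong_induction_on with
    | _ n ih =>
    intro c hc
    by_cases hcb : c = b₀
    · subst hcb
      rw [hμ.1, hb₀, M_bot P f hP1]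
    · have hlt : b₀ < c := lt_of_le_of_ne (hb₀le c) (Ne.symm hcb)
      have hfin := hμ.2.1 b₀ c hlt
      have hset : {x : BondLattice R | b₀ ≤ x ∧ x ≤ c}
          = ↑((univ : Finset (BondLattice R)).filter (· ≤ c)) := by
        ext x
        simp only [Set.mem_setOf_eq, Finset.coe_filter, Finset.mem_univ, true_and,
          Set.mem_setOf_eq]
        exact ⟨fun h => h.2, fun h => ⟨hb₀le x, h⟩⟩
      rw [hset, finsum_mem_coe_finset] at hfin
      -- the analogous sum of M over the interval vanishes
      have hMsum : ∑ x ∈ (univ : Finset (BondLattice R)).filter (· ≤ c), M P R f x.1 = 0 := by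
        rw [sum_bond_eq hsymm f c]
        have := mainSum P f hsymm hf hP1 hP0
          (fun A mm hm he => newkey hsymm f hf A mm hm he) (np c.1) c.1 le_rfl
        rw [this]
        rw [if_neg]
        intro hI
        obtain ⟨x, y, hxy, hnexy, hR⟩ := bond_edge (R := R) (c := c) (fun h => hcb (Subtype.ext (h.trans hb₀.symm)))
        exact hI x y hxy hnexy hR
      have hcmem : c ∈ (univ : Finset (BondLattice R)).filter (· ≤ c) := by
        simp
      -- split off the top element in both sums
      rw [← Finset.sum_erase_add _ _ hcmem] at hfin hMsum
      have herase : ∑ x ∈ ((univ : Finset (BondLattice R)).filter (· ≤ c)).erase c, μ b₀ x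
          = ∑ x ∈ ((univ : Finset (BondLattice R)).filter (· ≤ c)).erase c, M P R f x.1 := by
        refine Finset.sum_congr rfl (fun x hx => ?_)
        rw [Finset.mem_erase, Finset.mem_filter] at hx
        obtain ⟨hxc, -, hxle⟩ := hx
        have hlt' : np x.1 < np c.1 :=
          np_lt_of_lt (bond_le_iff x c |>.1 hxle) (fun h => hxc (Subtype.ext h))
        exact ih (np x.1) (by omega) x le_rfl
      rw [herase] at hfin
      omega
  exact fun c => key (np c.1) c le_rfl

end Assembly

end
end BondProof

/-- For a finite connected set of pieces `B` with `k = |B|`, the Möbius function of the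
bond lattice `L(B)` satisfies `μ(0̂, 1̂) = (−1)^{1−k} · |𝒫^β(B)|` for every piece `β`,
where `𝒫^β(B)` is the set of full pyramids over `B` with maximal piece `β`
(and `(−1)^{1−k} = (−1)^{k−1}`). -/
theorem bond_lattice_mobius_eq_pyramids {B : Type*} [Fintype B]
    (R : B → B → Prop) (hrefl : ∀ x, R x x) (hsymm : ∀ x y, R x y → R y x)
    (hconn : ConnSet R Set.univ)
    (μ : BondLattice R → BondLattice R → ℤ) (hμ : IsMobius μ)
    (b₀ b₁ : BondLattice R) (hb₀ : b₀.1 = ⊥) (hb₁ : b₁.1 = ⊤) (β : B) :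
    μ b₀ b₁ = (-1 : ℤ) ^ (Fintype.card B - 1) *
      Nat.card {le : B → B → Prop // IsFullPyramid R Set.univ le β} := by
  classical
  have hBne : Nonempty B := ⟨β⟩
  set f : B → ℕ := fun x => if x = β then 0 else ((Fintype.equivFin B) x).val + 1 with hfdef
  have hf : Function.Injective f := by
    intro a b h
    simp only [hfdef] at h
    by_cases ha : a = β <;> by_cases hb : b = β
    · exact ha.trans hb.symm
    · rw [if_pos ha, if_neg hb] at h
      exact absurd h.symm (Nat.succ_ne_zero _)
    · rw [if_neg ha, if_pos hb] at h
      exact absurd h (Nat.succ_ne_zero _)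
    · rw [if_neg ha, if_neg hb] at h
      exact (Fintype.equivFin B).injective (Fin.val_injective (Nat.add_right_cancel h))
  have hmuM := BondProof.mu_eq_M hrefl hsymm f hf μ hμ b₀ hb₀ b₁
  rw [hb₁] at hmuM
  rw [hmuM, BondProof.M_top BondProof.P f]
  have hmin : BondProof.minOf f Finset.univ Finset.univ_nonempty = β := by
    refine BondProof.minOf_unique hf Finset.univ_nonempty (Finset.mem_univ β)
      (fun y _ => ?_)
    simp [hfdef]
  rw [hmin]
  congr 1
  rw [BondProof.P]
  congr 1
  rw [Finset.coe_univ]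
end

section
/- Let D be an Eulerian digraph, and let T(D) be the subposet of the partition lattice Π(E(D)) induced by partitions of E(D) into blocks each of which is the edge set of a connected Eulerian subdigraph. Then T(D) is closed under the join operation of Π(E(D)); in particular, T(D) is a join-semilattice. -/
/-- `l` is a nonempty closed directed trail in the digraph with edge type `E` and
endpoint maps `src`, `tgt`: the edges are distinct and consecutive (cyclically). -/
def IsClosedTrail {V E : Type*} (src tgt : E → V) (l : List E) : Prop :=
  l ≠ [] ∧ l.Nodup ∧ List.Chain' (fun e f => tgt e = src f) l ∧
  ∀ h : l ≠ [], tgt (l.getLast h) = src (l.head h)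

/-- `l` is an Eulerian closed trail of the subdigraph with edge set `A`. -/
def IsEulerianOn {V E : Type*} (src tgt : E → V) (A : Set E) (l : List E) : Prop :=
  IsClosedTrail src tgt l ∧ ∀ e, e ∈ l ↔ e ∈ A

/-- The edge set `A` is the edge set of a (connected) Eulerian subdigraph. -/
def IsEulerianSet {V E : Type*} (src tgt : E → V) (A : Set E) : Prop :=
  ∃ l, IsEulerianOn src tgt A l

/-- The number of Eulerian circuits of the subdigraph with edge set `A`: Eulerian closed
trails up to cyclic rotation of the edges. -/
noncomputable def numEC {V E : Type*} (src tgt : E → V) (A : Set E) : ℕ :=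
  Nat.card (Quot fun l₁ l₂ : {l : List E // IsEulerianOn src tgt A l} =>
    ∃ m, (l₂ : List E) = (l₁ : List E).rotate m)

/-- The edge set `A` is the edge set of a directed cycle (an Eulerian closed trail with
no repeated vertices). -/
def IsCycleSet {V E : Type*} (src tgt : E → V) (A : Set E) : Prop :=
  ∃ l, IsEulerianOn src tgt A l ∧ (l.map src).Nodup

/-- The partition (setoid) `s` of the edge set partitions it into blocks each of which is
the edge set of a connected Eulerian subdigraph; these are the elements of `T(D)`. -/
def EulerianPartition {V E : Type*} (src tgt : E → V) (s : Setoid E) : Prop :=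
  ∀ x : E, IsEulerianSet src tgt {y | s.r x y}

section Helpers

variable {V E : Type*} {src tgt : E → V}

lemma IsClosedTrail.rot {l₁ l₂ : List E} (h : IsClosedTrail src tgt (l₁ ++ l₂)) :
    IsClosedTrail src tgt (l₂ ++ l₁) := by
  rcases eq_or_ne l₁ [] with rfl | h1
  · simpa using h
  rcases eq_or_ne l₂ [] with rfl | h2
  · simpa using h
  obtain ⟨hne, hnd, hch, hcl⟩ := h
  simp only [List.Chain'] at hch; rw [List.isChain_append] at hch
  obtain ⟨hc1, hc2, hj⟩ := hch
  have hlast : (l₁ ++ l₂).getLast hne = l₂.getLast h2 := List.getLast_append_of_ne_nil _ h2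
  have hhead : (l₁ ++ l₂).head hne = l₁.head h1 := List.head_append_of_ne_nil h1
  refine ⟨by simp [h2], List.nodup_append_comm.mp hnd, ?_, ?_⟩
  · simp only [List.Chain']; rw [List.isChain_append]
    refine ⟨hc2, hc1, ?_⟩
    intro x hx y hy
    rw [List.getLast?_eq_getLast_of_ne_nil h2, Option.mem_some_iff] at hx
    rw [List.head?_eq_head h1, Option.mem_some_iff] at hy
    subst hx; subst hy
    have := hcl hne
    rw [hlast, hhead] at this
    exact this
  · intro h'
    have hlast' : (l₂ ++ l₁).getLast h' = l₁.getLast h1 := List.getLast_append_of_ne_nil _ h1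
    have hhead' : (l₂ ++ l₁).head h' = l₂.head h2 := List.head_append_of_ne_nil h2
    rw [hlast', hhead']
    exact hj _ (by rw [List.getLast?_eq_getLast_of_ne_nil h1]; rfl)
      _ (by rw [List.head?_eq_head h2]; rfl)

lemma IsClosedTrail.append {l m : List E} (hl : IsClosedTrail src tgt l)
    (hm : IsClosedTrail src tgt m) (hdisj : ∀ e ∈ l, e ∉ m)
    (hj : tgt (l.getLast hl.1) = src (m.head hm.1)) :
    IsClosedTrail src tgt (l ++ m) := by
  obtain ⟨hl0, hl1, hl2, hl3⟩ := hl
  obtain ⟨hm0, hm1, hm2, hm3⟩ := hm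
  refine ⟨by simp [hl0], List.Nodup.append hl1 hm1 hdisj, ?_, ?_⟩
  · simp only [List.Chain']; rw [List.isChain_append]
    refine ⟨hl2, hm2, ?_⟩
    intro x hx y hy
    rw [List.getLast?_eq_getLast_of_ne_nil hl0, Option.mem_some_iff] at hx
    rw [List.head?_eq_head hm0, Option.mem_some_iff] at hy
    subst hx; subst hy; exact hj
  · intro h'
    rw [List.getLast_append_of_ne_nil _ hm0, List.head_append_of_ne_nil hl0, hm3 hm0, ← hj, hl3 hl0]

lemma IsClosedTrail.to_front {l : List E} (h : IsClosedTrail src tgt l) {e : E} (he : e ∈ l) :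
    ∃ l', IsClosedTrail src tgt (e :: l') ∧ ∀ f, (f ∈ e :: l' ↔ f ∈ l) := by
  obtain ⟨l₁, l₂, rfl⟩ := List.append_of_mem he
  refine ⟨l₂ ++ l₁, ?_, ?_⟩
  · have := IsClosedTrail.rot (l₁ := l₁) (l₂ := e :: l₂) h
    simpa using this
  · intro f; simp; tauto

lemma IsClosedTrail.to_back {l : List E} (h : IsClosedTrail src tgt l) {g : E} (hg : g ∈ l) :
    ∃ l', IsClosedTrail src tgt (l' ++ [g]) ∧ ∀ f, (f ∈ l' ++ [g] ↔ f ∈ l) := by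
  obtain ⟨l₁, l₂, rfl⟩ := List.append_of_mem hg
  refine ⟨l₂ ++ l₁, ?_, ?_⟩
  · have := IsClosedTrail.rot (l₁ := l₁ ++ [g]) (l₂ := l₂) (by simpa using h)
    simpa using this
  · intro f; simp; tauto

lemma IsClosedTrail.merge {l m : List E} (hl : IsClosedTrail src tgt l)
    (hm : IsClosedTrail src tgt m) (hdisj : ∀ e ∈ l, e ∉ m) {g h : E}
    (hg : g ∈ l) (hh : h ∈ m) (hgh : tgt g = src h) :
    ∃ n, IsClosedTrail src tgt n ∧ ∀ f, (f ∈ n ↔ f ∈ l ∨ f ∈ m) := by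
  obtain ⟨l', hl', hlmem⟩ := hl.to_back hg
  obtain ⟨m', hm', hmmem⟩ := hm.to_front hh
  have hdisj' : ∀ e ∈ l' ++ [g], e ∉ h :: m' := by
    intro e hel hem
    exact hdisj e ((hlmem e).mp hel) ((hmmem e).mp hem)
  have hj : tgt ((l' ++ [g]).getLast hl'.1) = src ((h :: m').head hm'.1) := by
    rw [List.getLast_append]
    exact hgh
  refine ⟨_, hl'.append hm' hdisj' hj, ?_⟩
  intro f
  rw [List.mem_append, hlmem, hmmem]

lemma chain_cross {S : Set E} : ∀ (l : List E) (a : E),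
    List.Chain' (fun e f => tgt e = src f) (a :: l) → a ∈ S →
    ∀ b ∈ l, b ∉ S →
    ∃ g ∈ a :: l, ∃ h ∈ a :: l, g ∈ S ∧ h ∉ S ∧ tgt g = src h
  | [], _, _, _, b, hb, _ => absurd hb (List.not_mem_nil)
  | c :: l, a, hch, haS, b, hb, hbS => by
    by_cases hcS : c ∈ S
    · have hbl : b ∈ l := by
        rcases List.mem_cons.mp hb with rfl | h
        · exact absurd hcS hbS
        · exact h
      obtain ⟨g, hg, h, hh, hgS, hhS, hgh⟩ :=
        chain_cross l c (List.isChain_cons.mp hch).2 hcS b hbl hbS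
      exact ⟨g, List.mem_cons_of_mem _ hg, h, List.mem_cons_of_mem _ hh, hgS, hhS, hgh⟩
    · exact ⟨a, List.mem_cons_self, c, List.mem_cons_of_mem _ (List.mem_cons_self),
        haS, hcS, (List.isChain_cons_cons.mp hch).1⟩

lemma eulerian_key {V E : Type*} [Fintype E] {src tgt : E → V} {s t : Setoid E}
    (hs : EulerianPartition src tgt s) (ht : EulerianPartition src tgt t) (x : E) :
    ∀ n : ℕ, ∀ l : List E,
      IsClosedTrail src tgt l → x ∈ l → (∀ e ∈ l, (s ⊔ t).r x e) →
      (∀ e ∈ l, ∀ f, s.r e f → f ∈ l) →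
      Fintype.card E - l.length ≤ n →
      ∃ l', IsClosedTrail src tgt l' ∧ x ∈ l' ∧ (∀ e ∈ l', (s ⊔ t).r x e) ∧
        (∀ e ∈ l', ∀ f, s.r e f → f ∈ l') ∧ (∀ e ∈ l', ∀ f, t.r e f → f ∈ l') := by
  classical
  have hsle : ∀ {a b : E}, s.r a b → (s ⊔ t).r a b := fun h =>
    Setoid.le_def.mp (le_sup_left (b := t)) h
  have htle : ∀ {a b : E}, t.r a b → (s ⊔ t).r a b := fun h =>
    Setoid.le_def.mp (le_sup_right (a := s)) h
  intro n
  induction n with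
  | zero =>
    intro l hlct hxl hrel hssat hcard
    by_cases htsat : ∀ e ∈ l, ∀ f, t.r e f → f ∈ l
    · exact ⟨l, hlct, hxl, hrel, hssat, htsat⟩
    · exfalso
      push_neg at htsat
      obtain ⟨e, hel, f, hef, hfl⟩ := htsat
      have h1 : l.toFinset ⊂ Finset.univ := by
        refine Finset.ssubset_univ_iff.mpr ?_
        intro h
        exact hfl (by simpa using (h ▸ Finset.mem_univ f : f ∈ l.toFinset))
      have h2 : l.length < Fintype.card E := by
        have := Finset.card_lt_card h1
        rwa [List.toFinset_card_of_nodup hlct.2.1, Finset.card_univ] at this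
      omega
  | succ n ih =>
    intro l hlct hxl hrel hssat hcard
    by_cases htsat : ∀ e ∈ l, ∀ f, t.r e f → f ∈ l
    · exact ⟨l, hlct, hxl, hrel, hssat, htsat⟩
    push_neg at htsat
    obtain ⟨e, hel, f, hef, hfl⟩ := htsat
    -- the t-block of e
    obtain ⟨m, hmct, hmmem⟩ := ht e
    have hem : e ∈ m := (hmmem e).mpr (t.iseqv.refl e)
    obtain ⟨m', hm'ct, hm'mem⟩ := hmct.to_front hem
    have hfm' : f ∈ m' := by
      have hf : f ∈ e :: m' := (hm'mem f).mpr ((hmmem f).mpr hef)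
      rcases List.mem_cons.mp hf with rfl | h
      · exact absurd hel hfl
      · exact h
    obtain ⟨g, hgm, h, hhm, hgl, hhl, hgh⟩ :=
      chain_cross (S := {y : E | y ∈ l}) m' e hm'ct.2.2.1 hel f hfm' hfl
    have hteh : t.r e h := (hmmem h).mp ((hm'mem h).mp hhm)
    -- the s-block of h
    obtain ⟨mB, hBct, hBmem⟩ := hs h
    have hhB : h ∈ mB := (hBmem h).mpr (s.iseqv.refl h)
    have hdisj : ∀ a ∈ l, a ∉ mB := by
      intro a hal haB
      exact hhl (hssat a hal h (s.iseqv.symm ((hBmem a).mp haB)))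
    obtain ⟨l₂, hl₂ct, hl₂mem⟩ := hlct.merge hBct hdisj hgl hhB hgh
    have hxh : (s ⊔ t).r x h := (s ⊔ t).iseqv.trans (hrel e hel) (htle hteh)
    have hsub : ∀ a ∈ l, a ∈ l₂ := fun a ha => (hl₂mem a).mpr (Or.inl ha)
    have hlen : l.length < l₂.length := by
      have hss : l.toFinset ⊂ l₂.toFinset := by
        constructor
        · intro a ha
          simp only [List.mem_toFinset] at *
          exact hsub a ha
        · intro hsup'
          exact hhl (by simpa using hsup' (by simpa using (hl₂mem h).mpr (Or.inr hhB)))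
      have := Finset.card_lt_card hss
      rwa [List.toFinset_card_of_nodup hlct.2.1, List.toFinset_card_of_nodup hl₂ct.2.1] at this
    refine ih l₂ hl₂ct (hsub x hxl) ?_ ?_ ?_
    · intro a ha
      rcases (hl₂mem a).mp ha with ha' | ha'
      · exact hrel a ha'
      · exact (s ⊔ t).iseqv.trans hxh (hsle ((hBmem a).mp ha'))
    · intro a ha f' hf'
      rcases (hl₂mem a).mp ha with ha' | ha'
      · exact hsub _ (hssat a ha' f' hf')
      · refine (hl₂mem f').mpr (Or.inr ?_)
        exact (hBmem f').mpr (s.iseqv.trans ((hBmem a).mp ha') hf')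
    · have hle : l₂.length ≤ Fintype.card E := by
        rw [← List.toFinset_card_of_nodup hl₂ct.2.1, ← Finset.card_univ]
        exact Finset.card_le_card (Finset.subset_univ _)
      omega

end Helpers

/-- For an Eulerian digraph `D`, the subposet `T(D)` of the partition lattice of `E(D)`
induced by partitions into connected Eulerian blocks is closed under the join of the
partition lattice (hence is a join-semilattice). -/
theorem eulerianPartition_sup_closed {V E : Type*} [Fintype V] [Fintype E]
    (src tgt : E → V) (hD : IsEulerianSet src tgt Set.univ)
    (s t : Setoid E) (hs : EulerianPartition src tgt s)
    (ht : EulerianPartition src tgt t) :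
    EulerianPartition src tgt (s ⊔ t) := by
  intro x
  obtain ⟨l₀, h0ct, h0mem⟩ := hs x
  have hsle : ∀ {a b : E}, s.r a b → (s ⊔ t).r a b := fun h =>
    Setoid.le_def.mp (le_sup_left (b := t)) h
  obtain ⟨l, hlct, hxl, hrel, hssat, htsat⟩ :=
    eulerian_key hs ht x (Fintype.card E) l₀ h0ct ((h0mem x).mpr (s.iseqv.refl x))
      (fun e he => hsle ((h0mem e).mp he))
      (fun e he f hf => (h0mem f).mpr (s.iseqv.trans ((h0mem e).mp he) hf))
      (Nat.sub_le _ _)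
  refine ⟨l, hlct, fun e => ⟨fun he => hrel e he, fun hre => ?_⟩⟩
  have hre' : Relation.EqvGen (fun a b => s.r a b ∨ t.r a b) x e := by
    have h := Setoid.sup_eq_eqvGen s t ▸ (hre : (s ⊔ t).r x e)
    exact h
  have key : ∀ a b, Relation.EqvGen (fun a b => s.r a b ∨ t.r a b) a b → (a ∈ l ↔ b ∈ l) := by
    intro a b hab
    induction hab with
    | rel a b h =>
      rcases h with h | h
      · exact ⟨fun ha => hssat a ha b h, fun hb => hssat b hb a (s.iseqv.symm h)⟩
      · exact ⟨fun ha => htsat a ha b h, fun hb => htsat b hb a (t.iseqv.symm h)⟩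
    | refl a => exact Iff.rfl
    | symm a b _ ih => exact ih.symm
    | trans a b c _ _ ih1 ih2 => exact ih1.trans ih2
  exact (key x e hre').mp hxl
end
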